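/- arXiv:2510.19408 — 12 statements merged into one kernel-verified Lean document; each statement's English description precedes it below -/
import Mathlib

section
/- Let x* ∈ S ∩ Ω and define g(x) := T(x) and h(x) := E(x*)·B(x). Then the following three statements are equivalent: (1) E(x*)·∂B(0) ⊆ ∂T(0); (2) x* is a global minimizer of E on Ω, i.e., E(y) ≥ E(x*) for all y ∈ Ω; (3) 0 is a local minimizer of g − h, i.e., there exists ε > 0 such that T(x) − E(x*)B(x) ≥ 0 for all x with ‖x‖ ≤ ε. -/
open scoped RealInnerProductSpace

noncomputable section

/-- Subdifferential of a finite-valued function `f` at `x`: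
`∂f(x) = {v : f(y) ≥ f(x) + ⟨v, y − x⟩ for all y}`. -/
def subdiff {n : ℕ} (f : EuclideanSpace ℝ (Fin n) → ℝ) (x : EuclideanSpace ℝ (Fin n)) :
    Set (EuclideanSpace ℝ (Fin n)) :=
  {v | ∀ y, f x + ⟪v, y - x⟫ ≤ f y}

/-- Supporting hyperplane: a finite convex positively homogeneous function has, at each
point `y`, a linear minorant that is exact at `y`. -/
lemma exists_support {n : ℕ} (B : EuclideanSpace ℝ (Fin n) → ℝ)
    (hBconv : ConvexOn ℝ Set.univ B)
    (hBhom : ∀ α : ℝ, 0 ≤ α → ∀ x, B (α • x) = α * B x)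
    (y : EuclideanSpace ℝ (Fin n)) :
    ∃ v : EuclideanSpace ℝ (Fin n), ⟪v, y⟫ = B y ∧ ∀ x, ⟪v, x⟫ ≤ B x := by
  have hBcont : Continuous B := by
    rw [← continuousOn_univ]
    exact hBconv.continuousOn isOpen_univ
  -- the open strict epigraph
  set s : Set (EuclideanSpace ℝ (Fin n) × ℝ) := {p | B p.1 < p.2} with hs
  have hsopen : IsOpen s := isOpen_lt (hBcont.comp continuous_fst) continuous_snd
  have hsconv : Convex ℝ s := by
    rintro ⟨p1, p2⟩ hp ⟨q1, q2⟩ hq a b ha hb hab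
    simp only [hs, Set.mem_setOf_eq] at hp hq ⊢
    have hcv := hBconv.2 (Set.mem_univ p1) (Set.mem_univ q1) ha hb hab
    simp only [smul_eq_mul] at hcv
    calc B (a • p1 + b • q1) ≤ a * B p1 + b * B q1 := hcv
      _ < a * p2 + b * q2 := by
          rcases ha.lt_or_eq with ha' | ha'
          · rcases hb.lt_or_eq with hb' | hb'
            · have := mul_lt_mul_of_pos_left hp ha'
              have := mul_lt_mul_of_pos_left hq hb'
              linarith
            · have : a = 1 := by linarith
              subst this; rw [← hb'] at *; simp only [zero_mul] at *; linarith
          · have : b = 1 := by rw [← ha'] at hab; linarith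
            subst this; rw [← ha'] at *; simp only [zero_mul] at *; linarith
  have hnot : (y, B y) ∉ s := by simp [hs]
  obtain ⟨f, hf⟩ := geometric_hahn_banach_open_point hsconv hsopen hnot
  -- decompose f
  set a : ℝ := f (0, 1) with haa
  set g : EuclideanSpace ℝ (Fin n) →L[ℝ] ℝ :=
    f.comp (ContinuousLinearMap.inl ℝ (EuclideanSpace ℝ (Fin n)) ℝ) with hg
  set w : EuclideanSpace ℝ (Fin n) :=
    (InnerProductSpace.toDual ℝ (EuclideanSpace ℝ (Fin n))).symm g with hw
  have hwg : ∀ x : EuclideanSpace ℝ (Fin n), ⟪w, x⟫ = f (x, 0) := by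
    intro x
    rw [hw, InnerProductSpace.toDual_symm_apply]
    rfl
  have hdecomp : ∀ (x : EuclideanSpace ℝ (Fin n)) (t : ℝ), f (x, t) = ⟪w, x⟫ + a * t := by
    intro x t
    have hxt : (x, t) = (x, (0 : ℝ)) + t • ((0 : EuclideanSpace ℝ (Fin n)), (1 : ℝ)) := by
      simp [Prod.ext_iff]
    rw [hxt, map_add, map_smul, hwg, haa, smul_eq_mul]
    ring
  have key : ∀ (x : EuclideanSpace ℝ (Fin n)) (t : ℝ), B x < t →
      ⟪w, x⟫ + a * t < ⟪w, y⟫ + a * B y := by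
    intro x t ht
    have := hf (x, t) ht
    rwa [hdecomp, hdecomp] at this
  have ha : a < 0 := by
    have := key y (B y + 1) (by linarith)
    nlinarith
  have key2 : ∀ x : EuclideanSpace ℝ (Fin n),
      ⟪w, x⟫ + a * B x ≤ ⟪w, y⟫ + a * B y := by
    intro x
    by_contra h
    push_neg at h
    have hane : (-2 : ℝ) * a ≠ 0 := ne_of_gt (by linarith)
    have hδpos : 0 < ((⟪w, x⟫ + a * B x) - (⟪w, y⟫ + a * B y)) / (-2 * a) :=
      div_pos (by linarith) (by linarith)
    have h2 := key x (B x + ((⟪w, x⟫ + a * B x) - (⟪w, y⟫ + a * B y)) / (-2 * a))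
      (by linarith)
    have hmul : ((⟪w, x⟫ + a * B x) - (⟪w, y⟫ + a * B y)) / (-2 * a) * (-2 * a)
        = (⟪w, x⟫ + a * B x) - (⟪w, y⟫ + a * B y) := div_mul_cancel₀ _ hane
    nlinarith [h2, hmul]
  have hB0 : B 0 = 0 := by
    have := hBhom 0 le_rfl 0; simpa using this
  have hB2 : B ((2 : ℝ) • y) = 2 * B y := hBhom 2 (by norm_num) y
  have h0 := key2 0
  have h2 := key2 ((2 : ℝ) • y)
  rw [inner_zero_right, hB0] at h0
  rw [real_inner_smul_right, hB2] at h2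
  have hR0 : ⟪w, y⟫ + a * B y = 0 := by linarith
  have hane : a ≠ 0 := ha.ne
  refine ⟨(-1/a) • w, ?_, ?_⟩
  · rw [real_inner_smul_left]
    have hwy : ⟪w, y⟫ = -(a * B y) := by linarith
    rw [hwy]
    field_simp
  · intro x
    have hk := key2 x
    rw [real_inner_smul_left, div_mul_eq_mul_div, div_le_iff_of_neg ha]
    nlinarith [hk, hR0]

/-- Equivalence of (1) `E(x*)·∂B(0) ⊆ ∂T(0)`, (2) `x*` is a global minimizer of
`E = T/B` on `Ω = {B ≠ 0}`, and (3) `0` is a local minimizer of `g − h` where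
`g = T` and `h = E(x*)·B`. -/
theorem stmt0 {n : ℕ} (T B : EuclideanSpace ℝ (Fin n) → ℝ)
    (hTconv : ConvexOn ℝ Set.univ T) (hBconv : ConvexOn ℝ Set.univ B)
    (hThom : ∀ α : ℝ, 0 ≤ α → ∀ x, T (α • x) = α * T x) (hTnn : ∀ x, 0 ≤ T x)
    (hBhom : ∀ α : ℝ, 0 ≤ α → ∀ x, B (α • x) = α * B x) (hBnn : ∀ x, 0 ≤ B x)
    (hZero : ∀ x, B x = 0 → T x = 0 → x = 0) (hΩ : ∃ x, B x ≠ 0)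
    (xs : EuclideanSpace ℝ (Fin n)) (hxsS : ‖xs‖ = 1) (hxsΩ : B xs ≠ 0) :
    ((∀ v ∈ subdiff B 0, (T xs / B xs) • v ∈ subdiff T 0) ↔
        (∀ y, B y ≠ 0 → T xs / B xs ≤ T y / B y)) ∧
    ((∀ y, B y ≠ 0 → T xs / B xs ≤ T y / B y) ↔
        (∃ ε > 0, ∀ x : EuclideanSpace ℝ (Fin n), ‖x‖ ≤ ε →
          0 ≤ T x - (T xs / B xs) * B x)) := by
  set c : ℝ := T xs / B xs with hc
  have hBxs : 0 < B xs := lt_of_le_of_ne (hBnn xs) (Ne.symm hxsΩ)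
  have hcnn : 0 ≤ c := div_nonneg (hTnn xs) (hBnn xs)
  have hB0 : B 0 = 0 := by have := hBhom 0 le_rfl 0; simpa using this
  have hT0 : T 0 = 0 := by have := hThom 0 le_rfl 0; simpa using this
  -- (2) is equivalent to the global inequality ∀ y, c * B y ≤ T y
  have hglob : (∀ y, B y ≠ 0 → c ≤ T y / B y) ↔ (∀ y, c * B y ≤ T y) := by
    constructor
    · intro h y
      by_cases hy : B y = 0
      · rw [hy, mul_zero]; exact hTnn y
      · have hBy : 0 < B y := lt_of_le_of_ne (hBnn y) (Ne.symm hy)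
        have := h y hy
        rw [le_div_iff₀ hBy] at this; linarith [this]
    · intro h y hy
      have hBy : 0 < B y := lt_of_le_of_ne (hBnn y) (Ne.symm hy)
      rw [le_div_iff₀ hBy]; linarith [h y]
  constructor
  · constructor
    · -- (1) → (2)
      intro h1
      rw [hglob]
      intro y
      obtain ⟨v, hvy, hv⟩ := exists_support B hBconv hBhom y
      have hvB : v ∈ subdiff B 0 := by
        intro z
        simpa [hB0] using hv z
      have := h1 v hvB y
      change T 0 + ⟪c • v, y - 0⟫ ≤ T y at this
      rw [hT0, sub_zero, real_inner_smul_left, hvy] at this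
      linarith
    · -- (2) → (1)
      intro h2 v hv
      rw [hglob] at h2
      intro z
      have hvz := hv z
      rw [hB0] at hvz
      simp only [sub_zero] at hvz ⊢
      rw [hT0, real_inner_smul_left]
      calc (0 : ℝ) + c * ⟪v, z⟫ ≤ c * B z := by
            have := mul_le_mul_of_nonneg_left hvz hcnn
            linarith [this]
        _ ≤ T z := h2 z
  · rw [hglob]
    constructor
    · -- global → local
      intro h
      exact ⟨1, one_pos, fun x _ => by linarith [h x]⟩
    · -- local → global
      rintro ⟨ε, hε, h⟩ y
      by_cases hy : y = 0
      · subst hy; rw [hB0, hT0, mul_zero]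
      · have hny : 0 < ‖y‖ := norm_pos_iff.mpr hy
        set t : ℝ := ε / ‖y‖ with ht
        have htpos : 0 < t := div_pos hε hny
        have hnorm : ‖t • y‖ ≤ ε := by
          rw [norm_smul, Real.norm_eq_abs, abs_of_pos htpos, ht]
          rw [div_mul_cancel₀ _ (ne_of_gt hny)]
        have := h (t • y) hnorm
        rw [hThom t htpos.le, hBhom t htpos.le] at this
        have : t * (T y - c * B y) ≥ 0 := by linarith [this]
        nlinarith [this, htpos]
end
end

section
/- Let x* ∈ S ∩ Ω and let λ > 0. Then x* is a critical point of the fractional program min_{x∈Ω} E(x), i.e., E(x*)·∂B(x*) ∩ ∂T(x*) ≠ ∅, if and only if there exists v* ∈ ∂B(x*) such that x* = prox_{λT}(x* + λE(x*)v*). -/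
open scoped RealInnerProductSpace

noncomputable section

/-- `p` is a minimizer of `y ↦ f y + (1/(2λ))‖y − x‖²`.  For `f` convex and `λ > 0` this
minimizer is unique, so this says exactly `p = prox_{λf}(x)`. -/
def IsProx {n : ℕ} (f : EuclideanSpace ℝ (Fin n) → ℝ) (lam : ℝ)
    (x p : EuclideanSpace ℝ (Fin n)) : Prop :=
  ∀ y, f p + (1 / (2 * lam)) * ‖p - x‖ ^ 2 ≤ f y + (1 / (2 * lam)) * ‖y - x‖ ^ 2

lemma prox_iff {n : ℕ} (f : EuclideanSpace ℝ (Fin n) → ℝ)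
    (hf : ConvexOn ℝ Set.univ f) (lam : ℝ) (hlam : 0 < lam)
    (p g : EuclideanSpace ℝ (Fin n)) :
    g ∈ subdiff f p ↔ IsProx f lam (p + lam • g) p := by
  have hexp : ∀ u : EuclideanSpace ℝ (Fin n),
      ‖u - lam • g‖ ^ 2 = ‖u‖ ^ 2 - 2 * lam * ⟪u, g⟫ + lam ^ 2 * ‖g‖ ^ 2 := by
    intro u
    rw [norm_sub_sq_real, real_inner_smul_right, norm_smul, Real.norm_eq_abs,
      abs_of_pos hlam]
    ring
  constructor
  · intro h y
    have h1 := h y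
    have e1 : p - (p + lam • g) = (0 : EuclideanSpace ℝ (Fin n)) - lam • g := by abel
    have e2 : y - (p + lam • g) = (y - p) - lam • g := by abel
    rw [e1, e2, hexp, hexp]
    rw [real_inner_comm] at h1
    have hinner : ⟪(0 : EuclideanSpace ℝ (Fin n)), g⟫ = 0 := inner_zero_left g
    rw [hinner, norm_zero]
    set i := ⟪y - p, g⟫ with hi
    set N := ‖y - p‖ ^ 2 with hN
    set G := ‖g‖ ^ 2 with hG
    have hNnn : (0:ℝ) ≤ N := by positivity
    have hl2 : (2 * lam) ≠ 0 := by positivity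
    rw [div_mul_eq_mul_div, div_mul_eq_mul_div]
    rw [← sub_nonneg]
    have : f y + 1 * (N - 2 * lam * i + lam ^ 2 * G) / (2 * lam) -
        (f p + 1 * (0 ^ 2 - 2 * lam * 0 + lam ^ 2 * G) / (2 * lam)) =
        (f y - (f p + i)) + N / (2 * lam) := by field_simp; ring
    rw [this]
    have : 0 ≤ N / (2 * lam) := by positivity
    linarith
  · intro h y
    have key : ∀ t : ℝ, 0 < t → t ≤ 1 →
        f p + ⟪g, y - p⟫ ≤ f y + t * ‖y - p‖ ^ 2 / (2 * lam) := by
      intro t ht ht1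
      have hy' := h ((1 - t) • p + t • y)
      have hconv := hf.2 (Set.mem_univ p) (Set.mem_univ y)
          (by linarith : (0:ℝ) ≤ 1 - t) ht.le (by ring)
      have e1 : p - (p + lam • g) = (0 : EuclideanSpace ℝ (Fin n)) - lam • g := by abel
      have e2 : ((1 - t) • p + t • y) - (p + lam • g) = (t • (y - p)) - lam • g := by
        rw [smul_sub]; module
      rw [e1, e2, hexp, hexp] at hy'
      have hinner : ⟪(0 : EuclideanSpace ℝ (Fin n)), g⟫ = 0 := inner_zero_left g
      have hinner2 : ⟪t • (y - p), g⟫ = t * ⟪y - p, g⟫ := real_inner_smul_left _ _ _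
      have hns : ‖t • (y - p)‖ ^ 2 = t ^ 2 * ‖y - p‖ ^ 2 := by
        rw [norm_smul, Real.norm_eq_abs, abs_of_pos ht]; ring
      rw [hinner, hinner2, hns, norm_zero] at hy'
      rw [real_inner_comm]
      simp only [smul_eq_mul] at hconv
      set i := ⟪y - p, g⟫ with hi
      set N := ‖y - p‖ ^ 2 with hN
      set G := ‖g‖ ^ 2 with hG
      set A := f p with hA
      set Bv := f y with hB
      set C := f ((1 - t) • p + t • y) with hC
      -- hy' : A + 1/(2λ)*(0^2 - 2λ*0 + λ²G) ≤ C + 1/(2λ)*(t²N - 2λ(t i) + λ²G)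
      -- hconv : C ≤ (1-t)A + t Bv
      -- goal : A + i ≤ Bv + t*N/(2λ)
      have hl2 : (0:ℝ) < 2 * lam := by linarith
      have h2 : t * (A + i) ≤ t * (Bv + t * N / (2 * lam)) := by
        have e3 : (1:ℝ)/(2*lam) * (t^2*N - 2*lam*(t*i) + lam^2*G) -
            (1/(2*lam)) * (0^2 - 2*lam*0 + lam^2*G) = t * (t * N / (2*lam)) - t * i := by
          field_simp; ring
        nlinarith [hy', hconv, e3]
      exact le_of_mul_le_mul_left h2 ht
    refine le_of_forall_pos_le_add ?_
    intro ε hε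
    set t : ℝ := min 1 (ε * (2 * lam) / (‖y - p‖ ^ 2 + 1)) with htdef
    have ht0 : 0 < t := lt_min one_pos (by positivity)
    have ht1 : t ≤ 1 := min_le_left _ _
    have hk := key t ht0 ht1
    have hb : t * ‖y - p‖ ^ 2 / (2 * lam) ≤ ε := by
      have ht2 : t ≤ ε * (2 * lam) / (‖y - p‖ ^ 2 + 1) := min_le_right _ _
      have hpos : (0:ℝ) < ‖y - p‖ ^ 2 + 1 := by positivity
      rw [div_le_iff₀ (by linarith : (0:ℝ) < 2 * lam)]
      calc t * ‖y - p‖ ^ 2 ≤ (ε * (2 * lam) / (‖y - p‖ ^ 2 + 1)) * ‖y - p‖ ^ 2 := by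
            apply mul_le_mul_of_nonneg_right ht2 (by positivity)
        _ ≤ ε * (2 * lam) := by
            rw [div_mul_eq_mul_div, div_le_iff₀ hpos]
            nlinarith [sq_nonneg (‖y - p‖)]
    linarith

/-- `x* ∈ S ∩ Ω` is a critical point of `min_{x∈Ω} E(x)` (that is,
`E(x*)·∂B(x*) ∩ ∂T(x*) ≠ ∅`) iff there exists `v* ∈ ∂B(x*)` with
`x* = prox_{λT}(x* + λE(x*)v*)`. -/
theorem stmt1 {n : ℕ} (T B : EuclideanSpace ℝ (Fin n) → ℝ)
    (hTconv : ConvexOn ℝ Set.univ T) (hBconv : ConvexOn ℝ Set.univ B)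
    (hThom : ∀ α : ℝ, 0 ≤ α → ∀ x, T (α • x) = α * T x) (hTnn : ∀ x, 0 ≤ T x)
    (hBhom : ∀ α : ℝ, 0 ≤ α → ∀ x, B (α • x) = α * B x) (hBnn : ∀ x, 0 ≤ B x)
    (hZero : ∀ x, B x = 0 → T x = 0 → x = 0) (hΩ : ∃ x, B x ≠ 0)
    (xs : EuclideanSpace ℝ (Fin n)) (hxsS : ‖xs‖ = 1) (hxsΩ : B xs ≠ 0)
    (lam : ℝ) (hlam : 0 < lam) :
    (∃ v ∈ subdiff B xs, (T xs / B xs) • v ∈ subdiff T xs) ↔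
      (∃ v ∈ subdiff B xs, IsProx T lam (xs + lam • (T xs / B xs) • v) xs) :=
  exists_congr fun v => and_congr_right fun _ =>
    prox_iff T hTconv lam hlam xs ((T xs / B xs) • v)
end
end

section
/- Suppose the sequences (x^k, v^k, l^k, w^k, t^k, y^k) are generated by PS-DCA from x⁰ ∈ S ∩ Ω with acceptance parameter ε' > 0, where the step sizes satisfy 0 < λ_low ≤ λ_k ≤ λ_high < ∞ for all k and ρ_k ≥ ρ_low > 0 for all k. Then every accumulation point x* of the sequence {x^k} belongs to S ∩ Ω and is a critical point of min_{x∈Ω} E(x), i.e., E(x*)·∂B(x*) ∩ ∂T(x*) ≠ ∅. -/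
open scoped RealInnerProductSpace

noncomputable section

lemma bound_on_ball {n : ℕ} {f : EuclideanSpace ℝ (Fin n) → ℝ} (hf : Continuous f) (R : ℝ) :
    ∃ M, ∀ z, ‖z‖ ≤ R → f z ≤ M := by
  obtain ⟨M, hM⟩ := ((isCompact_closedBall (0 : EuclideanSpace ℝ (Fin n)) R).image hf).bddAbove
  exact ⟨M, fun z hz => hM ⟨z, mem_closedBall_zero_iff.mpr hz, rfl⟩⟩

lemma prox_subdiff {n : ℕ} {f : EuclideanSpace ℝ (Fin n) → ℝ}
    (hf : ConvexOn ℝ Set.univ f) {lam : ℝ} (hlam : 0 < lam)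
    {z p : EuclideanSpace ℝ (Fin n)} (hp : IsProx f lam z p) :
    lam⁻¹ • (z - p) ∈ subdiff f p := by
  intro y
  have key : ∀ d : ℝ, 0 < d → d ≤ 1 →
      f p ≤ f y + lam⁻¹ * ⟪p - z, y - p⟫ + (1 / (2 * lam)) * d * ‖y - p‖ ^ 2 := by
    intro d hd hd1
    have h1 := hp (p + d • (y - p))
    have heq : p + d • (y - p) = (1 - d) • p + d • y := by
      rw [sub_smul, one_smul, smul_sub]; abel
    have hconv := hf.2 (Set.mem_univ p) (Set.mem_univ y) (by linarith : (0:ℝ) ≤ 1 - d) hd.le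
      (by ring)
    rw [← heq, smul_eq_mul, smul_eq_mul] at hconv
    have hnorm : ‖p + d • (y - p) - z‖ ^ 2
        = ‖p - z‖ ^ 2 + 2 * (d * ⟪p - z, y - p⟫) + d ^ 2 * ‖y - p‖ ^ 2 := by
      have h2 : p + d • (y - p) - z = (p - z) + d • (y - p) := by abel
      rw [h2, norm_add_sq_real, real_inner_smul_right, norm_smul, Real.norm_eq_abs,
        abs_of_pos hd, mul_pow]
    rw [hnorm] at h1
    have hlam' : (0:ℝ) < 1 / (2 * lam) := by positivity
    have h2c : lam⁻¹ = 2 * (1 / (2 * lam)) := by field_simp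
    have hmul : d * (f p) ≤
        d * (f y + lam⁻¹ * ⟪p - z, y - p⟫ + (1 / (2 * lam)) * d * ‖y - p‖ ^ 2) := by
      rw [h2c]
      nlinarith [h1, hconv]
    exact le_of_mul_le_mul_left hmul hd
  have hlim : Filter.Tendsto
      (fun k : ℕ => f y + lam⁻¹ * ⟪p - z, y - p⟫ + (1 / (2 * lam)) * (1 / (k + 1)) * ‖y - p‖ ^ 2)
      Filter.atTop (nhds (f y + lam⁻¹ * ⟪p - z, y - p⟫ + (1 / (2 * lam)) * 0 * ‖y - p‖ ^ 2)) :=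
    tendsto_const_nhds.add
      ((tendsto_const_nhds.mul tendsto_one_div_add_atTop_nhds_zero_nat).mul tendsto_const_nhds)
  have hle : f p ≤ f y + lam⁻¹ * ⟪p - z, y - p⟫ + (1 / (2 * lam)) * 0 * ‖y - p‖ ^ 2 :=
    ge_of_tendsto' hlim fun k => key (1 / (k + 1)) (by positivity)
      (by rw [div_le_one (by positivity)]; linarith [Nat.cast_nonneg (α := ℝ) k])
  have hinner : ⟪lam⁻¹ • (z - p), y - p⟫ = -(lam⁻¹ * ⟪p - z, y - p⟫) := by
    rw [real_inner_smul_left, show z - p = -(p - z) by abel, inner_neg_left]; ring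
  rw [hinner]
  linarith [hle]

set_option maxHeartbeats 1000000 in
/-- Every accumulation point of the sequence `{xᵏ}` generated by PS-DCA lies in `S ∩ Ω`
and is a critical point of `min_{x∈Ω} E(x)`, i.e. `E(x*)·∂B(x*) ∩ ∂T(x*) ≠ ∅`. -/
theorem stmt2 {n : ℕ} (T B : EuclideanSpace ℝ (Fin n) → ℝ)
    (hTconv : ConvexOn ℝ Set.univ T) (hBconv : ConvexOn ℝ Set.univ B)
    (hThom : ∀ α : ℝ, 0 ≤ α → ∀ x, T (α • x) = α * T x) (hTnn : ∀ x, 0 ≤ T x)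
    (hBhom : ∀ α : ℝ, 0 ≤ α → ∀ x, B (α • x) = α * B x) (hBnn : ∀ x, 0 ≤ B x)
    (hZero : ∀ x, B x = 0 → T x = 0 → x = 0) (hΩ : ∃ x, B x ≠ 0)
    (lam rho : ℕ → ℝ) (lamLow lamHigh rhoLow : ℝ)
    (hlamLow : 0 < lamLow) (hlam : ∀ k, lamLow ≤ lam k ∧ lam k ≤ lamHigh)
    (hrhoLow : 0 < rhoLow) (hrho : ∀ k, rhoLow ≤ rho k)
    (eps' : ℝ) (heps' : 0 < eps')
    (x v l w t y : ℕ → EuclideanSpace ℝ (Fin n))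
    (hx0S : ‖x 0‖ = 1) (hx0Ω : B (x 0) ≠ 0)
    (hv : ∀ k, v k ∈ subdiff B (x k))
    (hl : ∀ k, IsProx T (lam k) (x k + lam k • (T (x k) / B (x k)) • v k) (l k))
    (hw : ∀ k, w k ∈ subdiff B 0)
    (ht : ∀ k, IsProx T (1 / rho k) ((T (l k) / B (l k) / rho k) • w k) (t k))
    (hy : ∀ k, y k =
      if T (t k) - (T (l k) / B (l k)) * B (t k) < -eps' then t k else l k)
    (hxk : ∀ k, x (k + 1) = ‖y k‖⁻¹ • y k)
    (xs : EuclideanSpace ℝ (Fin n))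
    (hacc : ∃ φ : ℕ → ℕ, StrictMono φ ∧
      Filter.Tendsto (x ∘ φ) Filter.atTop (nhds xs)) :
    ‖xs‖ = 1 ∧ B xs ≠ 0 ∧
      ∃ vs ∈ subdiff B xs, (T xs / B xs) • vs ∈ subdiff T xs := by
  obtain ⟨φ, hφ, hxφ⟩ := hacc
  have hTcont : Continuous T := continuousOn_univ.mp (hTconv.continuousOn isOpen_univ)
  have hBcont : Continuous B := continuousOn_univ.mp (hBconv.continuousOn isOpen_univ)
  have hB0 : B 0 = 0 := by
    have h := hBhom 0 le_rfl 0; rwa [zero_smul, zero_mul] at h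
  have hT0 : T 0 = 0 := by
    have h := hThom 0 le_rfl 0; rwa [zero_smul, zero_mul] at h
  have hlampos : ∀ k, 0 < lam k := fun k => lt_of_lt_of_le hlamLow (hlam k).1
  have hlamHigh : 0 < lamHigh := lt_of_lt_of_le (hlampos 0) (hlam 0).2
  set e : ℕ → ℝ := fun k => T (x k) / B (x k) with he
  -- the one-step analysis
  have step : ∀ k, ‖x k‖ = 1 → 0 < B (x k) →
      0 < B (l k) ∧
      T (l k) + (1 / (2 * lam k)) * ‖l k - x k‖ ^ 2 ≤ e k * B (l k) ∧
      ‖x (k + 1)‖ = 1 ∧ 0 < B (x (k + 1)) ∧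
      e (k + 1) ≤ T (l k) / B (l k) := by
    intro k hS hB
    have hEk : 0 ≤ e k := div_nonneg (hTnn _) hB.le
    have hlamk := hlampos k
    have hz : x k + lam k • (T (x k) / B (x k)) • v k = x k + (lam k * e k) • v k := by
      rw [smul_smul]
    have h1 := hl k (x k)
    rw [hz] at h1
    have hn1 : ‖x k - (x k + (lam k * e k) • v k)‖ ^ 2 = (lam k * e k) ^ 2 * ‖v k‖ ^ 2 := by
      rw [show x k - (x k + (lam k * e k) • v k) = -((lam k * e k) • v k) by abel, norm_neg,
        norm_smul, Real.norm_eq_abs, mul_pow, sq_abs]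
    have hn2 : ‖l k - (x k + (lam k * e k) • v k)‖ ^ 2
        = ‖l k - x k‖ ^ 2 - 2 * ((lam k * e k) * ⟪v k, l k - x k⟫)
          + (lam k * e k) ^ 2 * ‖v k‖ ^ 2 := by
      rw [show l k - (x k + (lam k * e k) • v k) = (l k - x k) - (lam k * e k) • v k by abel,
        norm_sub_sq_real, real_inner_smul_right, real_inner_comm, norm_smul, Real.norm_eq_abs,
        mul_pow, sq_abs]
    rw [hn1, hn2] at h1
    have hsub := hv k (l k)
    have hTxk : e k * B (x k) = T (x k) := div_mul_cancel₀ _ (ne_of_gt hB)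
    have hmul : e k * ⟪v k, l k - x k⟫ ≤ e k * (B (l k) - B (x k)) :=
      mul_le_mul_of_nonneg_left (by linarith [hsub]) hEk
    have hc2a : 2 * (1 / (2 * lam k)) * (lam k * e k) * ⟪v k, l k - x k⟫
        = e k * ⟪v k, l k - x k⟫ := by
      have : 2 * (1 / (2 * lam k)) * (lam k * e k) = e k := by field_simp
      rw [this]
    have key : T (l k) + (1 / (2 * lam k)) * ‖l k - x k‖ ^ 2 ≤ e k * B (l k) := by
      linarith [h1, hmul, hc2a, hTxk]
    have hc : (0:ℝ) < 1 / (2 * lam k) := one_div_pos.mpr (by linarith)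
    have hBl : 0 < B (l k) := by
      rcases (hBnn (l k)).lt_or_eq with h | h
      · exact h
      · exfalso
        have hk0 : (1 / (2 * lam k)) * ‖l k - x k‖ ^ 2 ≤ (1 / (2 * lam k)) * 0 := by
          rw [mul_zero]
          have := key
          rw [← h, mul_zero] at this
          linarith [hTnn (l k)]
        have hQ0 : ‖l k - x k‖ ^ 2 ≤ 0 := le_of_mul_le_mul_left hk0 hc
        have hQ0' : ‖l k - x k‖ ^ 2 = 0 := le_antisymm hQ0 (sq_nonneg _)
        have hlx : l k = x k := by
          have h5 : ‖l k - x k‖ = 0 := sq_eq_zero_iff.mp hQ0'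
          rwa [norm_sub_eq_zero_iff] at h5
        rw [hlx] at h
        linarith
    have hElk : 0 ≤ T (l k) / B (l k) := div_nonneg (hTnn _) hBl.le
    have hbranch : 0 < B (y k) ∧ T (y k) / B (y k) ≤ T (l k) / B (l k) := by
      by_cases hcnd : T (t k) - T (l k) / B (l k) * B (t k) < -eps'
      · have hyk : y k = t k := by rw [hy k, if_pos hcnd]
        have hBt : 0 < B (t k) := by
          rcases (hBnn (t k)).lt_or_eq with h | h
          · exact h
          · exfalso; rw [← h, mul_zero] at hcnd; linarith [hTnn (t k)]
        refine ⟨by rw [hyk]; exact hBt, ?_⟩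
        rw [hyk, div_le_iff₀ hBt]
        nlinarith [hTnn (t k)]
      · have hyk : y k = l k := by rw [hy k, if_neg hcnd]
        rw [hyk]; exact ⟨hBl, le_refl _⟩
    obtain ⟨hBy, hEy⟩ := hbranch
    have hyne : y k ≠ 0 := by intro h0; rw [h0, hB0] at hBy; exact lt_irrefl 0 hBy
    have hny : 0 < ‖y k‖ := norm_pos_iff.mpr hyne
    have hninv : (0:ℝ) ≤ ‖y k‖⁻¹ := inv_nonneg.mpr hny.le
    have hxS : ‖x (k + 1)‖ = 1 := by
      rw [hxk k, norm_smul, norm_inv, norm_norm, inv_mul_cancel₀ hny.ne']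
    have hBx1 : B (x (k + 1)) = ‖y k‖⁻¹ * B (y k) := by rw [hxk k, hBhom _ hninv]
    have hTx1 : T (x (k + 1)) = ‖y k‖⁻¹ * T (y k) := by rw [hxk k, hThom _ hninv]
    have hBpos1 : 0 < B (x (k + 1)) := by
      rw [hBx1]; exact mul_pos (inv_pos.mpr hny) hBy
    have hE1 : e (k + 1) = T (y k) / B (y k) := by
      show T (x (k + 1)) / B (x (k + 1)) = _
      rw [hTx1, hBx1, mul_div_mul_left _ _ (inv_ne_zero hny.ne')]
    exact ⟨hBl, key, hxS, hBpos1, by rw [hE1]; exact hEy⟩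
  -- invariants
  have inv : ∀ k, ‖x k‖ = 1 ∧ 0 < B (x k) := by
    intro k
    induction k with
    | zero => exact ⟨hx0S, (hBnn _).lt_of_ne (Ne.symm hx0Ω)⟩
    | succ k ih =>
      obtain ⟨_, _, h3, h4, _⟩ := step k ih.1 ih.2
      exact ⟨h3, h4⟩
  have fact : ∀ k, 0 < B (l k) ∧
      T (l k) + (1 / (2 * lam k)) * ‖l k - x k‖ ^ 2 ≤ e k * B (l k) ∧
      e (k + 1) ≤ T (l k) / B (l k) := by
    intro k
    obtain ⟨h1, h2, _, _, h5⟩ := step k (inv k).1 (inv k).2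
    exact ⟨h1, h2, h5⟩
  have hen : ∀ k, 0 ≤ e k := fun k => div_nonneg (hTnn _) (inv k).2.le
  have hmono : ∀ k, e (k + 1) ≤ e k := by
    intro k
    obtain ⟨hBl, hkey, hsucc⟩ := fact k
    have h0 : (0:ℝ) ≤ (1 / (2 * lam k)) * ‖l k - x k‖ ^ 2 :=
      mul_nonneg (le_of_lt (one_div_pos.mpr (by linarith [hlampos k]))) (sq_nonneg _)
    have h1 : T (l k) / B (l k) ≤ e k := by
      rw [div_le_iff₀ hBl]; linarith
    linarith
  have hant : Antitone e := antitone_nat_of_succ_le hmono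
  have hbdd : BddBelow (Set.range e) := ⟨0, by rintro r ⟨k, rfl⟩; exact hen k⟩
  have hElim : Filter.Tendsto e Filter.atTop (nhds (⨅ k, e k)) := tendsto_atTop_ciInf hant hbdd
  set Estar := ⨅ k, e k with hEs
  have hdiff : Filter.Tendsto (fun k => e k - e (k + 1)) Filter.atTop (nhds 0) := by
    have h2 : Filter.Tendsto (fun k => e (k + 1)) Filter.atTop (nhds Estar) :=
      hElim.comp (Filter.tendsto_add_atTop_nat 1)
    simpa using hElim.sub h2
  -- bounds
  obtain ⟨MB2, hMB2⟩ := bound_on_ball hBcont 2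
  have hMB2nn : (0:ℝ) ≤ MB2 := by
    have := hMB2 0 (by simp); rwa [hB0] at this
  have hMv : ∀ k, ‖v k‖ ≤ MB2 := by
    intro k
    by_cases hv0 : v k = 0
    · rw [hv0, norm_zero]; exact hMB2nn
    · have hvn : 0 < ‖v k‖ := norm_pos_iff.mpr hv0
      have h1 := hv k (x k + ‖v k‖⁻¹ • v k)
      have h2 : ⟪v k, x k + ‖v k‖⁻¹ • v k - x k⟫ = ‖v k‖ := by
        rw [add_sub_cancel_left, real_inner_smul_right, real_inner_self_eq_norm_sq, pow_two,
          inv_mul_cancel_left₀ hvn.ne']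
      have hun : ‖(‖v k‖⁻¹ • v k)‖ = 1 := by
        rw [norm_smul, norm_inv, norm_norm, inv_mul_cancel₀ hvn.ne']
      have h3 : ‖x k + ‖v k‖⁻¹ • v k‖ ≤ 2 := by
        calc ‖x k + ‖v k‖⁻¹ • v k‖ ≤ ‖x k‖ + ‖(‖v k‖⁻¹ • v k)‖ := norm_add_le _ _
          _ = 2 := by rw [(inv k).1, hun]; norm_num
      have h4 := hMB2 _ h3
      rw [h2] at h1
      linarith [hBnn (x k)]
  set Rz : ℝ := 1 + lamHigh * e 0 * MB2 with hRzdef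
  have hRznn : 0 ≤ Rz :=
    add_nonneg zero_le_one (mul_nonneg (mul_nonneg hlamHigh.le (hen 0)) hMB2nn)
  have hzbound : ∀ k, ‖x k + lam k • (T (x k) / B (x k)) • v k‖ ≤ Rz := by
    intro k
    have h1 : ‖lam k • (T (x k) / B (x k)) • v k‖ = lam k * e k * ‖v k‖ := by
      rw [norm_smul, norm_smul, Real.norm_eq_abs, Real.norm_eq_abs, abs_of_pos (hlampos k),
        abs_of_nonneg (hen k), mul_assoc]
    have h2 : lam k * e k * ‖v k‖ ≤ lamHigh * e 0 * MB2 :=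
      mul_le_mul (mul_le_mul (hlam k).2 (hant (Nat.zero_le k)) (hen k) hlamHigh.le)
        (hMv k) (norm_nonneg _) (mul_nonneg hlamHigh.le (hen 0))
    calc ‖x k + lam k • (T (x k) / B (x k)) • v k‖
        ≤ ‖x k‖ + ‖lam k • (T (x k) / B (x k)) • v k‖ := norm_add_le _ _
      _ ≤ Rz := by rw [(inv k).1, h1]; rw [hRzdef]; linarith
  obtain ⟨MT, hMT⟩ := bound_on_ball hTcont Rz
  have hMTnn : 0 ≤ MT := by
    have := hMT 0 (by rw [norm_zero]; exact hRznn); rwa [hT0] at this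
  set Rl : ℝ := Rz + Real.sqrt (2 * lamHigh * MT) with hRldef
  have hlbound : ∀ k, ‖l k‖ ≤ Rl := by
    intro k
    have h1 : T (l k) + (1 / (2 * lam k)) *
        ‖l k - (x k + lam k • (T (x k) / B (x k)) • v k)‖ ^ 2
        ≤ T (x k + lam k • (T (x k) / B (x k)) • v k) := by
      have := hl k (x k + lam k • (T (x k) / B (x k)) • v k)
      simpa using this
    have hc : (0:ℝ) < 2 * lam k := mul_pos two_pos (hlampos k)
    have h2 : (1 / (2 * lam k)) *
        ‖l k - (x k + lam k • (T (x k) / B (x k)) • v k)‖ ^ 2 ≤ MT := by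
      linarith [hTnn (l k), hMT _ (hzbound k)]
    rw [one_div, inv_mul_eq_div] at h2
    have h3 := (div_le_iff₀ hc).mp h2
    have h4 : ‖l k - (x k + lam k • (T (x k) / B (x k)) • v k)‖ ^ 2 ≤ 2 * lamHigh * MT := by
      nlinarith [mul_nonneg hMTnn (sub_nonneg.mpr (hlam k).2)]
    have h5 : ‖l k - (x k + lam k • (T (x k) / B (x k)) • v k)‖ ≤
        Real.sqrt (2 * lamHigh * MT) := Real.le_sqrt_of_sq_le h4
    have h6 : ‖l k‖ ≤ ‖x k + lam k • (T (x k) / B (x k)) • v k‖ +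
        ‖l k - (x k + lam k • (T (x k) / B (x k)) • v k)‖ := by
      have := norm_add_le (x k + lam k • (T (x k) / B (x k)) • v k)
        (l k - (x k + lam k • (T (x k) / B (x k)) • v k))
      simpa using this
    rw [hRldef]
    linarith [hzbound k]
  obtain ⟨MBl, hMBl⟩ := bound_on_ball hBcont Rl
  have hMBlpos : 0 < MBl := lt_of_lt_of_le (fact 0).1 (hMBl _ (hlbound 0))
  have hQle : ∀ k, ‖l k - x k‖ ^ 2 ≤ 2 * lamHigh * MBl * (e k - e (k + 1)) := by
    intro k
    obtain ⟨hBl, hkey, hsucc⟩ := fact k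
    have h1 : e (k + 1) * B (l k) ≤ T (l k) := (le_div_iff₀ hBl).mp hsucc
    have h2 : (1 / (2 * lam k)) * ‖l k - x k‖ ^ 2 ≤ (e k - e (k + 1)) * B (l k) := by
      linarith
    rw [one_div, inv_mul_eq_div] at h2
    have h3 := (div_le_iff₀ (mul_pos two_pos (hlampos k))).mp h2
    have hd : 0 ≤ e k - e (k + 1) := by linarith [hmono k]
    have h4 : (e k - e (k + 1)) * B (l k) * (2 * lam k)
        ≤ (e k - e (k + 1)) * MBl * (2 * lamHigh) := by
      apply mul_le_mul
      · exact mul_le_mul le_rfl (hMBl _ (hlbound k)) hBl.le hd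
      · linarith [(hlam k).2]
      · linarith [hlampos k]
      · exact mul_nonneg hd hMBlpos.le
    calc ‖l k - x k‖ ^ 2 ≤ (e k - e (k + 1)) * MBl * (2 * lamHigh) := le_trans h3 h4
      _ = 2 * lamHigh * MBl * (e k - e (k + 1)) := by ring
  have hQ0 : Filter.Tendsto (fun k => ‖l k - x k‖ ^ 2) Filter.atTop (nhds 0) := by
    apply squeeze_zero (fun k => sq_nonneg _) hQle
    have := hdiff.const_mul (2 * lamHigh * MBl)
    simpa using this
  have hln : Filter.Tendsto (fun k => ‖l k - x k‖) Filter.atTop (nhds 0) := by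
    have h1 := (Real.continuous_sqrt.tendsto' 0 0 Real.sqrt_zero).comp hQ0
    exact h1.congr fun k => Real.sqrt_sq (norm_nonneg _)
  -- accumulation point facts
  have hxs1 : ‖xs‖ = 1 := by
    have h1 : Filter.Tendsto (fun k => ‖x (φ k)‖) Filter.atTop (nhds ‖xs‖) :=
      (continuous_norm.tendsto xs).comp hxφ
    have h2 : Filter.Tendsto (fun k => ‖x (φ k)‖) Filter.atTop (nhds 1) :=
      Filter.Tendsto.congr (fun k => ((inv (φ k)).1).symm) tendsto_const_nhds
    exact tendsto_nhds_unique h1 h2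
  have heφ : Filter.Tendsto (fun k => e (φ k)) Filter.atTop (nhds Estar) :=
    hElim.comp hφ.tendsto_atTop
  have hBφ : Filter.Tendsto (fun k => B (x (φ k))) Filter.atTop (nhds (B xs)) :=
    (hBcont.tendsto xs).comp hxφ
  have hTφ : Filter.Tendsto (fun k => T (x (φ k))) Filter.atTop (nhds (T xs)) :=
    (hTcont.tendsto xs).comp hxφ
  have hTeq : ∀ m, T (x m) = e m * B (x m) := fun m =>
    (div_mul_cancel₀ _ (inv m).2.ne').symm
  have hTxsEq : T xs = Estar * B xs := by
    refine tendsto_nhds_unique hTφ ?_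
    exact (heφ.mul hBφ).congr fun k => (hTeq (φ k)).symm
  have hBxs : B xs ≠ 0 := by
    intro h0
    have hTxs : T xs = 0 := by rw [hTxsEq, h0, mul_zero]
    have hx0 := hZero xs h0 hTxs
    rw [hx0, norm_zero] at hxs1
    norm_num at hxs1
  have hEstarEq : Estar = T xs / B xs := by
    rw [hTxsEq, mul_div_assoc, div_self hBxs, mul_one]
  -- subsequence where v converges
  obtain ⟨vstar, -, ψ, hψ, hvψ⟩ := tendsto_subseq_of_bounded
    (Metric.isBounded_closedBall (x := (0 : EuclideanSpace ℝ (Fin n))) (r := MB2))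
    (fun k => mem_closedBall_zero_iff.mpr (hMv (φ k)) : ∀ k, v (φ k) ∈ _)
  have hσ : StrictMono (fun k => φ (ψ k)) := hφ.comp hψ
  have hxσ : Filter.Tendsto (fun k => x (φ (ψ k))) Filter.atTop (nhds xs) :=
    hxφ.comp hψ.tendsto_atTop
  have hvσ : Filter.Tendsto (fun k => v (φ (ψ k))) Filter.atTop (nhds vstar) := hvψ
  have hlnσ : Filter.Tendsto (fun k => ‖l (φ (ψ k)) - x (φ (ψ k))‖) Filter.atTop (nhds 0) :=
    hln.comp hσ.tendsto_atTop
  have hlσ : Filter.Tendsto (fun k => l (φ (ψ k))) Filter.atTop (nhds xs) := by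
    have hd : Filter.Tendsto (fun k => l (φ (ψ k)) - x (φ (ψ k))) Filter.atTop
        (nhds 0) := by
      rw [tendsto_zero_iff_norm_tendsto_zero]
      exact hlnσ
    have := hxσ.add hd
    simpa using this
  have heσ : Filter.Tendsto (fun k => e (φ (ψ k))) Filter.atTop (nhds Estar) :=
    hElim.comp hσ.tendsto_atTop
  -- vstar is a subgradient of B at xs
  have hvsub : vstar ∈ subdiff B xs := by
    intro y₀
    have htend : Filter.Tendsto
        (fun k => B (x (φ (ψ k))) + ⟪v (φ (ψ k)), y₀ - x (φ (ψ k))⟫) Filter.atTop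
        (nhds (B xs + ⟪vstar, y₀ - xs⟫)) :=
      ((hBcont.tendsto xs).comp hxσ).add (hvσ.inner (tendsto_const_nhds.sub hxσ))
    exact le_of_tendsto htend (Filter.Eventually.of_forall fun k => hv (φ (ψ k)) y₀)
  refine ⟨hxs1, hBxs, vstar, hvsub, ?_⟩
  -- subgradients of T at l k
  have husub : ∀ k, ((lam k)⁻¹ • (x k - l k) + (T (x k) / B (x k)) • v k) ∈ subdiff T (l k) := by
    intro k
    have h1 := prox_subdiff hTconv (hlampos k) (hl k)
    have h2 : (lam k)⁻¹ • (x k + lam k • (T (x k) / B (x k)) • v k - l k)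
        = (lam k)⁻¹ • (x k - l k) + (T (x k) / B (x k)) • v k := by
      rw [show x k + lam k • (T (x k) / B (x k)) • v k - l k
          = (x k - l k) + lam k • (T (x k) / B (x k)) • v k by abel, smul_add,
        inv_smul_smul₀ (hlampos k).ne']
    rwa [h2] at h1
  have hu1 : Filter.Tendsto (fun k => (lam (φ (ψ k)))⁻¹ • (x (φ (ψ k)) - l (φ (ψ k))))
      Filter.atTop (nhds 0) := by
    rw [tendsto_zero_iff_norm_tendsto_zero]
    apply squeeze_zero (fun k => norm_nonneg _)
      (g := fun k => lamLow⁻¹ * ‖l (φ (ψ k)) - x (φ (ψ k))‖)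
    · intro k
      rw [norm_smul, norm_inv, Real.norm_eq_abs, abs_of_pos (hlampos _), norm_sub_rev]
      exact mul_le_mul_of_nonneg_right (inv_anti₀ hlamLow (hlam _).1) (norm_nonneg _)
    · have := hlnσ.const_mul lamLow⁻¹
      simpa using this
  have hu2 : Filter.Tendsto (fun k => (T (x (φ (ψ k))) / B (x (φ (ψ k)))) • v (φ (ψ k)))
      Filter.atTop (nhds ((T xs / B xs) • vstar)) := by
    rw [← hEstarEq]
    exact heσ.smul hvσ
  have hutend : Filter.Tendsto
      (fun k => (lam (φ (ψ k)))⁻¹ • (x (φ (ψ k)) - l (φ (ψ k)))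
        + (T (x (φ (ψ k))) / B (x (φ (ψ k)))) • v (φ (ψ k)))
      Filter.atTop (nhds ((T xs / B xs) • vstar)) := by
    have := hu1.add hu2
    simpa using this
  intro y₀
  have htend : Filter.Tendsto
      (fun k => T (l (φ (ψ k))) +
        ⟪(lam (φ (ψ k)))⁻¹ • (x (φ (ψ k)) - l (φ (ψ k)))
          + (T (x (φ (ψ k))) / B (x (φ (ψ k)))) • v (φ (ψ k)), y₀ - l (φ (ψ k))⟫)
      Filter.atTop (nhds (T xs + ⟪(T xs / B xs) • vstar, y₀ - xs⟫)) :=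
    ((hTcont.tendsto xs).comp hlσ).add (hutend.inner (tendsto_const_nhds.sub hlσ))
  exact le_of_tendsto htend (Filter.Eventually.of_forall fun k => husub (φ (ψ k)) y₀)
end
end

section
/- Suppose the sequence {x^k} is generated by PS-DCA from x⁰ ∈ S ∩ Ω with acceptance parameter ε' > 0, where 0 < λ_low ≤ λ_k ≤ λ_high < ∞ for all k and ρ_k ≥ ρ_low > 0 for all k. Then either the sequence {x^k} converges, or its set of accumulation points is a continuum contained in S ∩ Ω: it has the cardinality of the continuum and contains no isolated points. -/
open scoped RealInnerProductSpace

noncomputable section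
set_option maxHeartbeats 2000000

open Filter Metric Set in
private lemma aux_freq_band (f : ℕ → ℝ)
    (hstep : Tendsto (fun k => |f (k + 1) - f k|) atTop (nhds 0))
    (r δ : ℝ) (hδ : 0 < δ)
    (h1 : ∃ᶠ k in atTop, f k < r) (h2 : ∃ᶠ k in atTop, r < f k) :
    ∃ᶠ k in atTop, |f k - r| ≤ δ := by
  classical
  rw [frequently_atTop] at h1 h2 ⊢
  intro N
  have hev : ∀ᶠ k in atTop, |f (k + 1) - f k| < δ := by
    have := hstep.eventually (eventually_lt_nhds hδ)
    simpa using this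
  obtain ⟨K0, hK0⟩ := eventually_atTop.mp hev
  obtain ⟨k₁, hk₁N, hk₁⟩ := h1 (max N K0)
  obtain ⟨k₂, hk₂N, hk₂⟩ := h2 (k₁ + 1)
  have hex : ∃ m, k₁ ≤ m ∧ r < f m := ⟨k₂, by omega, hk₂⟩
  set m := Nat.find hex with hm
  obtain ⟨hmk₁, hmr⟩ := Nat.find_spec hex
  rw [← hm] at hmk₁ hmr
  have hmne : m ≠ k₁ := by
    intro h; rw [h] at hmr; linarith
  have hm1 : k₁ + 1 ≤ m := by omega
  have hprev : ¬ (k₁ ≤ m - 1 ∧ r < f (m - 1)) := Nat.find_min hex (by omega)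
  have hprev' : f (m - 1) ≤ r := by
    by_contra hc; push_neg at hc; exact hprev ⟨by omega, hc⟩
  have hms : m - 1 + 1 = m := by omega
  have hstep' : |f (m - 1 + 1) - f (m - 1)| < δ := hK0 _ (by omega)
  rw [hms] at hstep'
  refine ⟨m, by omega, ?_⟩
  rw [abs_le]
  constructor
  · linarith
  · have h3 : f m - f (m - 1) < δ := (le_abs_self _).trans_lt hstep'
    linarith

open Filter Metric Set in
private lemma aux_freq_lt {g : ℕ → ℝ} {φ : ℕ → ℕ} (hφ : StrictMono φ)
    {c : ℝ} (hg : Tendsto (fun j => g (φ j)) atTop (nhds c)) {r : ℝ} (h : c < r) :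
    ∃ᶠ k in atTop, g k < r := by
  rw [frequently_atTop]
  intro N
  obtain ⟨J, hJ⟩ := eventually_atTop.mp (hg.eventually (eventually_lt_nhds h))
  exact ⟨φ (max N J), le_trans (le_max_left N J) hφ.le_apply, hJ _ (le_max_right _ _)⟩

open Filter Metric Set in
private lemma aux_freq_gt {g : ℕ → ℝ} {φ : ℕ → ℕ} (hφ : StrictMono φ)
    {c : ℝ} (hg : Tendsto (fun j => g (φ j)) atTop (nhds c)) {r : ℝ} (h : r < c) :
    ∃ᶠ k in atTop, r < g k := by
  rw [frequently_atTop]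
  intro N
  obtain ⟨J, hJ⟩ := eventually_atTop.mp (hg.eventually (eventually_gt_nhds h))
  exact ⟨φ (max N J), le_trans (le_max_left N J) hφ.le_apply, hJ _ (le_max_right _ _)⟩

open Filter Metric Set in
private lemma aux_cluster_at_dist {n : ℕ} (x : ℕ → EuclideanSpace ℝ (Fin n))
    (hb : ∀ k, ‖x k‖ = 1)
    (hstep : Tendsto (fun k => ‖x (k + 1) - x k‖) atTop (nhds 0))
    (a b : EuclideanSpace ℝ (Fin n))
    (ha : ∃ φ : ℕ → ℕ, StrictMono φ ∧ Tendsto (x ∘ φ) atTop (nhds a))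
    (hbb : ∃ φ : ℕ → ℕ, StrictMono φ ∧ Tendsto (x ∘ φ) atTop (nhds b))
    (r : ℝ) (hr0 : 0 ≤ r) (hrd : r ≤ ‖b - a‖) :
    ∃ p, (∃ φ : ℕ → ℕ, StrictMono φ ∧ Tendsto (x ∘ φ) atTop (nhds p)) ∧ ‖p - a‖ = r := by
  rcases eq_or_lt_of_le hr0 with hr0' | hr0'
  · exact ⟨a, ha, by rw [sub_self, norm_zero, ← hr0']⟩
  rcases eq_or_lt_of_le hrd with hrd' | hrd'
  · exact ⟨b, hbb, hrd'.symm⟩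
  obtain ⟨φa, hφa, hlima⟩ := ha
  obtain ⟨φb, hφb, hlimb⟩ := hbb
  set f : ℕ → ℝ := fun k => ‖x k - a‖ with hf
  have hstepf : Tendsto (fun k => |f (k + 1) - f k|) atTop (nhds 0) := by
    apply squeeze_zero (fun k => abs_nonneg _) (fun k => ?_) hstep
    have h1 : (x (k + 1) - a) - (x k - a) = x (k + 1) - x k := by abel
    calc |f (k + 1) - f k| = |‖x (k + 1) - a‖ - ‖x k - a‖| := rfl
      _ ≤ ‖(x (k + 1) - a) - (x k - a)‖ := abs_norm_sub_norm_le _ _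
      _ = ‖x (k + 1) - x k‖ := by rw [h1]
  have hfa : Tendsto (fun j => f (φa j)) atTop (nhds 0) := by
    have h1 : Tendsto (fun j => ‖(x ∘ φa) j - a‖) atTop (nhds ‖a - a‖) :=
      (hlima.sub_const a).norm
    rw [sub_self, norm_zero] at h1
    exact h1
  have hfb : Tendsto (fun j => f (φb j)) atTop (nhds ‖b - a‖) :=
    (hlimb.sub_const a).norm
  have h1 : ∃ᶠ k in atTop, f k < r := aux_freq_lt hφa hfa hr0'
  have h2 : ∃ᶠ k in atTop, r < f k := aux_freq_gt hφb hfb hrd'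
  have hfreq : ∀ m : ℕ, ∃ᶠ k in atTop, |f k - r| ≤ 1 / (m + 1) := fun m =>
    aux_freq_band f hstepf r _ (by positivity) h1 h2
  obtain ⟨ψ, hψmono, hψ⟩ := extraction_forall_of_frequently hfreq
  obtain ⟨p, hpS, σ, hσ, hplim⟩ :=
    (isCompact_sphere (0 : EuclideanSpace ℝ (Fin n)) 1).tendsto_subseq
      (x := fun j => x (ψ j)) (fun j => by rw [mem_sphere_zero_iff_norm]; exact hb _)
  refine ⟨p, ⟨ψ ∘ σ, hψmono.comp hσ, hplim⟩, ?_⟩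
  have hg1 : Tendsto (fun m => f (ψ (σ m))) atTop (nhds ‖p - a‖) :=
    (hplim.sub_const a).norm
  have hg2 : Tendsto (fun m => f (ψ (σ m))) atTop (nhds r) := by
    have hd : Tendsto (fun m : ℕ => (1 : ℝ) / (m + 1)) atTop (nhds 0) :=
      tendsto_one_div_add_atTop_nhds_zero_nat
    have h4 : Tendsto (fun m => f (ψ (σ m)) - r) atTop (nhds 0) := by
      apply squeeze_zero_norm (fun m => ?_) hd
      calc ‖f (ψ (σ m)) - r‖ = |f (ψ (σ m)) - r| := rfl
        _ ≤ 1 / (σ m + 1) := hψ (σ m)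
        _ ≤ 1 / (m + 1) := by
            apply one_div_le_one_div_of_le (by positivity)
            have h5 : m ≤ σ m := hσ.le_apply
            have h6 : (m : ℝ) ≤ (σ m : ℝ) := by exact_mod_cast h5
            linarith
    have h3 := h4.add_const r
    simpa using h3
  exact tendsto_nhds_unique hg1 hg2

/-- Either the PS-DCA sequence `{xᵏ}` converges, or its set of accumulation points is a
continuum contained in `S ∩ Ω`: it has the cardinality of the continuum and has no
isolated points. -/
theorem stmt3 {n : ℕ} (T B : EuclideanSpace ℝ (Fin n) → ℝ)
    (hTconv : ConvexOn ℝ Set.univ T) (hBconv : ConvexOn ℝ Set.univ B)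
    (hThom : ∀ α : ℝ, 0 ≤ α → ∀ x, T (α • x) = α * T x) (hTnn : ∀ x, 0 ≤ T x)
    (hBhom : ∀ α : ℝ, 0 ≤ α → ∀ x, B (α • x) = α * B x) (hBnn : ∀ x, 0 ≤ B x)
    (hZero : ∀ x, B x = 0 → T x = 0 → x = 0) (hΩ : ∃ x, B x ≠ 0)
    (lam rho : ℕ → ℝ) (lamLow lamHigh rhoLow : ℝ)
    (hlamLow : 0 < lamLow) (hlam : ∀ k, lamLow ≤ lam k ∧ lam k ≤ lamHigh)
    (hrhoLow : 0 < rhoLow) (hrho : ∀ k, rhoLow ≤ rho k)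
    (eps' : ℝ) (heps' : 0 < eps')
    (x v l w t y : ℕ → EuclideanSpace ℝ (Fin n))
    (hx0S : ‖x 0‖ = 1) (hx0Ω : B (x 0) ≠ 0)
    (hv : ∀ k, v k ∈ subdiff B (x k))
    (hl : ∀ k, IsProx T (lam k) (x k + lam k • (T (x k) / B (x k)) • v k) (l k))
    (hw : ∀ k, w k ∈ subdiff B 0)
    (ht : ∀ k, IsProx T (1 / rho k) ((T (l k) / B (l k) / rho k) • w k) (t k))
    (hy : ∀ k, y k =
      if T (t k) - (T (l k) / B (l k)) * B (t k) < -eps' then t k else l k)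
    (hxk : ∀ k, x (k + 1) = ‖y k‖⁻¹ • y k)
    :
    (∃ p, Filter.Tendsto x Filter.atTop (nhds p)) ∨
      (({p | ∃ φ : ℕ → ℕ, StrictMono φ ∧ Filter.Tendsto (x ∘ φ) Filter.atTop (nhds p)} ⊆
          {z : EuclideanSpace ℝ (Fin n) | ‖z‖ = 1 ∧ B z ≠ 0}) ∧
        Cardinal.mk ({p | ∃ φ : ℕ → ℕ, StrictMono φ ∧
            Filter.Tendsto (x ∘ φ) Filter.atTop (nhds p)} : Set (EuclideanSpace ℝ (Fin n)))
          = Cardinal.continuum ∧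
        ∀ p ∈ {p | ∃ φ : ℕ → ℕ, StrictMono φ ∧ Filter.Tendsto (x ∘ φ) Filter.atTop (nhds p)},
          ∀ ε > 0, ∃ q ∈ {p | ∃ φ : ℕ → ℕ, StrictMono φ ∧
            Filter.Tendsto (x ∘ φ) Filter.atTop (nhds p)}, q ≠ p ∧ ‖q - p‖ < ε) := by
  classical
  open Filter Metric Set in
  have hTcont : Continuous T := continuousOn_univ.mp (hTconv.continuousOn isOpen_univ)
  have hBcont : Continuous B := continuousOn_univ.mp (hBconv.continuousOn isOpen_univ)
  have hB0 : B 0 = 0 := by simpa using hBhom 0 le_rfl 0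
  have hT0 : T 0 = 0 := by simpa using hThom 0 le_rfl 0
  -- a linear upper bound for B
  obtain ⟨CB, hCBpos, hCB⟩ : ∃ CB : ℝ, 0 < CB ∧ ∀ z, B z ≤ CB * ‖z‖ := by
    obtain ⟨zB, hzBmem, hzB⟩ :=
      (isCompact_closedBall (0 : EuclideanSpace ℝ (Fin n)) 1).exists_isMaxOn
        ⟨0, Metric.mem_closedBall_self zero_le_one⟩ hBcont.continuousOn
    have hub : ∀ z : EuclideanSpace ℝ (Fin n), B z ≤ B zB * ‖z‖ := by
      intro z
      rcases eq_or_ne z 0 with rfl | hz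
      · simp [hB0]
      · have hnz : 0 < ‖z‖ := norm_pos_iff.mpr hz
        have h1 : ‖z‖⁻¹ • z ∈ Metric.closedBall (0 : EuclideanSpace ℝ (Fin n)) 1 := by
          rw [Metric.mem_closedBall, dist_zero_right, norm_smul, norm_inv, norm_norm,
            inv_mul_cancel₀ hnz.ne']
        have h2 : B (‖z‖⁻¹ • z) ≤ B zB := hzB h1
        have h3 : B z = ‖z‖ * B (‖z‖⁻¹ • z) := by
          have h4 := hBhom ‖z‖ (norm_nonneg z) (‖z‖⁻¹ • z)
          rw [smul_smul, mul_inv_cancel₀ hnz.ne', one_smul] at h4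
          exact h4
        rw [h3, mul_comm]
        exact mul_le_mul_of_nonneg_right h2 (norm_nonneg z)
    refine ⟨B zB, ?_, hub⟩
    obtain ⟨z, hz⟩ := hΩ
    have hz0 : 0 < B z := (hBnn z).lt_of_ne (Ne.symm hz)
    have hzne : z ≠ 0 := by intro h; rw [h, hB0] at hz; exact hz rfl
    have hnz : 0 < ‖z‖ := norm_pos_iff.mpr hzne
    nlinarith [hub z]
  -- the big per-step lemma
  have hstep : ∀ k, ‖x k‖ = 1 → 0 < B (x k) →
      (0 < B (l k) ∧
       T (l k) + (1 / (2 * lam k)) * ‖l k - x k‖ ^ 2 ≤ (T (x k) / B (x k)) * B (l k) ∧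
       T (l k) / B (l k) ≤ T (x k) / B (x k) ∧
       ‖x (k + 1)‖ = 1 ∧ 0 < B (x (k + 1)) ∧
       T (x (k + 1)) / B (x (k + 1)) ≤ T (l k) / B (l k) ∧
       ((T (t k) - (T (l k) / B (l k)) * B (t k) < -eps') →
         0 < B (t k) ∧ B (t k) ≤ 2 * CB ^ 2 * (T (l k) / B (l k)) / rho k ∧
         T (x (k + 1)) / B (x (k + 1)) ≤ T (l k) / B (l k) - eps' / B (t k))) := by
    intro k hS hBx
    have hlamk : 0 < lam k := lt_of_lt_of_le hlamLow (hlam k).1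
    have hrk : 0 < rho k := lt_of_lt_of_le hrhoLow (hrho k)
    have hEknn : 0 ≤ T (x k) / B (x k) := div_nonneg (hTnn _) hBx.le
    -- the l-step estimate
    have hprox := hl k (x k)
    have hXl : l k - (x k + lam k • (T (x k) / B (x k)) • v k)
        = (l k - x k) - (lam k * (T (x k) / B (x k))) • v k := by
      rw [smul_smul]; abel
    have hXx : x k - (x k + lam k • (T (x k) / B (x k)) • v k)
        = -((lam k * (T (x k) / B (x k))) • v k) := by
      rw [smul_smul]; abel
    rw [hXl, hXx, norm_neg, norm_sub_sq_real] at hprox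
    have hinner : ⟪l k - x k, (lam k * (T (x k) / B (x k))) • v k⟫
        = lam k * (T (x k) / B (x k)) * ⟪v k, l k - x k⟫ := by
      rw [real_inner_smul_right, real_inner_comm]
    rw [hinner] at hprox
    have hexp : (1 / (2 * lam k)) * (‖l k - x k‖ ^ 2
        - 2 * (lam k * (T (x k) / B (x k)) * ⟪v k, l k - x k⟫)
        + ‖(lam k * (T (x k) / B (x k))) • v k‖ ^ 2)
        = (1 / (2 * lam k)) * ‖l k - x k‖ ^ 2 - (T (x k) / B (x k)) * ⟪v k, l k - x k⟫
          + (1 / (2 * lam k)) * ‖(lam k * (T (x k) / B (x k))) • v k‖ ^ 2 := by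
      field_simp
    rw [hexp] at hprox
    have hI : ⟪v k, l k - x k⟫ ≤ B (l k) - B (x k) := by
      have h0 := hv k (l k)
      linarith [h0]
    have hTx : T (x k) = (T (x k) / B (x k)) * B (x k) := (div_mul_cancel₀ _ hBx.ne').symm
    have hEI : (T (x k) / B (x k)) * ⟪v k, l k - x k⟫
        ≤ (T (x k) / B (x k)) * (B (l k) - B (x k)) := mul_le_mul_of_nonneg_left hI hEknn
    have key1 : T (l k) + (1 / (2 * lam k)) * ‖l k - x k‖ ^ 2
        ≤ (T (x k) / B (x k)) * B (l k) := by nlinarith [hprox, hEI]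
    have hBlk : 0 < B (l k) := by
      by_contra h
      push_neg at h
      have hBl0 : B (l k) = 0 := le_antisymm h (hBnn _)
      rw [hBl0, mul_zero] at key1
      have hs : 0 < (1 / (2 * lam k)) := by positivity
      have hsq : ‖l k - x k‖ ^ 2 = 0 := by
        nlinarith [hTnn (l k), sq_nonneg ‖l k - x k‖, mul_nonneg hs.le (sq_nonneg ‖l k - x k‖)]
      have hlx : l k = x k := by
        rw [pow_eq_zero_iff (two_ne_zero), norm_sub_eq_zero_iff] at hsq
        exact hsq
      rw [← hlx, hBl0] at hBx
      exact lt_irrefl 0 hBx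
    have hElnn : 0 ≤ T (l k) / B (l k) := div_nonneg (hTnn _) hBlk.le
    have hEl : T (l k) / B (l k) ≤ T (x k) / B (x k) := by
      rw [div_le_iff₀ hBlk]
      have h1 : 0 ≤ (1 / (2 * lam k)) * ‖l k - x k‖ ^ 2 := by positivity
      linarith
    -- common normalization facts
    have hnorm : ∀ z : EuclideanSpace ℝ (Fin n), 0 < B z → y k = z →
        ‖x (k + 1)‖ = 1 ∧ 0 < B (x (k + 1)) ∧
          T (x (k + 1)) / B (x (k + 1)) = T z / B z := by
      intro z hBz hyz
      have hzne : z ≠ 0 := by intro h; rw [h, hB0] at hBz; exact lt_irrefl 0 hBz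
      have hnz : 0 < ‖z‖ := norm_pos_iff.mpr hzne
      have hinv : (0:ℝ) < ‖z‖⁻¹ := by positivity
      have hx1 : x (k + 1) = ‖z‖⁻¹ • z := by rw [hxk k, hyz]
      refine ⟨?_, ?_, ?_⟩
      · rw [hx1, norm_smul, norm_inv, norm_norm, inv_mul_cancel₀ hnz.ne']
      · rw [hx1, hBhom _ hinv.le]
        exact mul_pos hinv hBz
      · rw [hx1, hThom _ hinv.le, hBhom _ hinv.le, mul_div_mul_left _ _ hinv.ne']
    by_cases hacc : T (t k) - (T (l k) / B (l k)) * B (t k) < -eps'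
    · -- accept case : y k = t k
      have hyt : y k = t k := by rw [hy k, if_pos hacc]
      have hBt : 0 < B (t k) := by
        rcases (hBnn (t k)).lt_or_eq with h | h
        · exact h
        · exfalso; rw [← h, mul_zero] at hacc; linarith [hTnn (t k)]
      -- bound on B (t k)
      have hproxT := ht k 0
      have hco : 1 / (2 * (1 / rho k)) = rho k / 2 := by field_simp
      rw [hco, hT0, norm_sub_sq_real, zero_sub, norm_neg] at hproxT
      have hinnerT : ⟪t k, (T (l k) / B (l k) / rho k) • w k⟫
          = T (l k) / B (l k) / rho k * ⟪w k, t k⟫ := by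
        rw [real_inner_smul_right, real_inner_comm]
      rw [hinnerT] at hproxT
      have hwt : ⟪w k, t k⟫ ≤ B (t k) := by
        have h0 := hw k (t k)
        rw [hB0, sub_zero] at h0
        linarith
      have h1 : ‖t k‖ ^ 2 ≤ 2 * (T (l k) / B (l k)) / rho k * B (t k) := by
        have hTt := hTnn (t k)
        have hmul : T (l k) / B (l k) / rho k * ⟪w k, t k⟫
            ≤ T (l k) / B (l k) / rho k * B (t k) :=
          mul_le_mul_of_nonneg_left hwt (by positivity)
        have hexpT : rho k / 2 * (‖t k‖ ^ 2 - 2 * (T (l k) / B (l k) / rho k * ⟪w k, t k⟫)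
            + ‖(T (l k) / B (l k) / rho k) • w k‖ ^ 2)
            = rho k / 2 * ‖t k‖ ^ 2 - rho k * (T (l k) / B (l k) / rho k * ⟪w k, t k⟫)
              + rho k / 2 * ‖(T (l k) / B (l k) / rho k) • w k‖ ^ 2 := by ring
        rw [hexpT] at hproxT
        have h3 : rho k / 2 * ‖t k‖ ^ 2 ≤ rho k * (T (l k) / B (l k) / rho k * B (t k)) := by
          nlinarith [mul_le_mul_of_nonneg_left hmul (le_of_lt hrk)]
        have h4 : rho k * (T (l k) / B (l k) / rho k * B (t k))
            = T (l k) / B (l k) * B (t k) := by field_simp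
        rw [h4] at h3
        have h5 : 2 * (T (l k) / B (l k)) / rho k * B (t k)
            = (2 / rho k) * (T (l k) / B (l k) * B (t k)) := by ring
        rw [h5]
        rw [div_mul_eq_mul_div, le_div_iff₀ hrk]
        nlinarith [h3]
      have hBtn : B (t k) ≤ CB * ‖t k‖ := hCB _
      have htpos : 0 < ‖t k‖ := by
        by_contra hcc
        push_neg at hcc
        have h0 : ‖t k‖ = 0 := le_antisymm hcc (norm_nonneg _)
        rw [h0, mul_zero] at hBtn
        linarith
      have h6 : ‖t k‖ * B (t k) ≤ (CB * (2 * (T (l k) / B (l k)) / rho k)) * B (t k) := by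
        calc ‖t k‖ * B (t k) ≤ ‖t k‖ * (CB * ‖t k‖) :=
              mul_le_mul_of_nonneg_left hBtn (norm_nonneg _)
          _ = CB * ‖t k‖ ^ 2 := by ring
          _ ≤ CB * (2 * (T (l k) / B (l k)) / rho k * B (t k)) :=
              mul_le_mul_of_nonneg_left h1 hCBpos.le
          _ = (CB * (2 * (T (l k) / B (l k)) / rho k)) * B (t k) := by ring
      have h7 : ‖t k‖ ≤ CB * (2 * (T (l k) / B (l k)) / rho k) :=
        le_of_mul_le_mul_right (by linarith [h6]) hBt
      have hBtle : B (t k) ≤ 2 * CB ^ 2 * (T (l k) / B (l k)) / rho k := by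
        calc B (t k) ≤ CB * ‖t k‖ := hBtn
          _ ≤ CB * (CB * (2 * (T (l k) / B (l k)) / rho k)) :=
              mul_le_mul_of_nonneg_left h7 hCBpos.le
          _ = 2 * CB ^ 2 * (T (l k) / B (l k)) / rho k := by ring
      have hEt : T (t k) / B (t k) ≤ T (l k) / B (l k) - eps' / B (t k) := by
        rw [div_le_iff₀ hBt, sub_mul, div_mul_cancel₀ _ hBt.ne']
        linarith
      obtain ⟨hS', hB', hEeq⟩ := hnorm (t k) hBt hyt
      refine ⟨hBlk, key1, hEl, hS', hB', ?_, fun _ => ⟨hBt, hBtle, by rw [hEeq]; exact hEt⟩⟩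
      rw [hEeq]
      have h8 : 0 < eps' / B (t k) := by positivity
      linarith
    · -- reject case : y k = l k
      have hyl : y k = l k := by rw [hy k, if_neg hacc]
      obtain ⟨hS', hB', hEeq⟩ := hnorm (l k) hBlk hyl
      exact ⟨hBlk, key1, hEl, hS', hB', le_of_eq hEeq, fun h => absurd h hacc⟩
  -- invariants along the iteration
  have hP : ∀ k, ‖x k‖ = 1 ∧ 0 < B (x k) := by
    intro k
    induction k with
    | zero => exact ⟨hx0S, (hBnn _).lt_of_ne (Ne.symm hx0Ω)⟩
    | succ k ih =>
      obtain ⟨_, _, _, h4, h5, _, _⟩ := hstep k ih.1 ih.2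
      exact ⟨h4, h5⟩
  have hBlk : ∀ k, 0 < B (l k) := fun k => (hstep k (hP k).1 (hP k).2).1
  have key1 : ∀ k, T (l k) + (1 / (2 * lam k)) * ‖l k - x k‖ ^ 2
      ≤ (T (x k) / B (x k)) * B (l k) := fun k => (hstep k (hP k).1 (hP k).2).2.1
  have hEl : ∀ k, T (l k) / B (l k) ≤ T (x k) / B (x k) :=
    fun k => (hstep k (hP k).1 (hP k).2).2.2.1
  have hEx1 : ∀ k, T (x (k + 1)) / B (x (k + 1)) ≤ T (l k) / B (l k) :=
    fun k => (hstep k (hP k).1 (hP k).2).2.2.2.2.2.1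
  have haccK : ∀ k, (T (t k) - (T (l k) / B (l k)) * B (t k) < -eps') →
      0 < B (t k) ∧ B (t k) ≤ 2 * CB ^ 2 * (T (l k) / B (l k)) / rho k ∧
      T (x (k + 1)) / B (x (k + 1)) ≤ T (l k) / B (l k) - eps' / B (t k) :=
    fun k => (hstep k (hP k).1 (hP k).2).2.2.2.2.2.2
  have hmono : ∀ k, T (x (k + 1)) / B (x (k + 1)) ≤ T (x k) / B (x k) :=
    fun k => (hEx1 k).trans (hEl k)
  have hanti : Antitone (fun k => T (x k) / B (x k)) := antitone_nat_of_succ_le hmono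
  have henn : ∀ k, 0 ≤ T (x k) / B (x k) := fun k => div_nonneg (hTnn _) (hP k).2.le
  have hElnn : ∀ k, 0 ≤ T (l k) / B (l k) := fun k => div_nonneg (hTnn _) (hBlk k).le
  have hEl0 : ∀ k, T (l k) / B (l k) ≤ T (x 0) / B (x 0) :=
    fun k => (hEl k).trans (hanti (Nat.zero_le k))
  have he0nn : 0 ≤ T (x 0) / B (x 0) := henn 0
  -- only finitely many accepted t-steps
  have hfin : ∃ N, ∀ k, N ≤ k → ¬(T (t k) - (T (l k) / B (l k)) * B (t k) < -eps') := by
    by_contra hc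
    push_neg at hc
    obtain ⟨φ, hφ, hAcc⟩ := Filter.extraction_of_frequently_atTop
      (Filter.frequently_atTop.mpr fun N => by
        obtain ⟨k, hk1, hk2⟩ := hc N; exact ⟨k, hk1, hk2⟩)
    have hMbub : ∀ j, 0 < B (t (φ j)) ∧
        B (t (φ j)) ≤ 2 * CB ^ 2 * (T (x 0) / B (x 0)) / rhoLow ∧
        T (x (φ j + 1)) / B (x (φ j + 1))
          ≤ T (l (φ j)) / B (l (φ j)) - eps' / B (t (φ j)) := by
      intro j
      obtain ⟨h1, h2, h3⟩ := haccK (φ j) (hAcc j)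
      refine ⟨h1, le_trans h2 ?_, h3⟩
      apply div_le_div₀ (by nlinarith [he0nn, sq_nonneg CB])
      · nlinarith [hEl0 (φ j), sq_nonneg CB]
      · exact hrhoLow
      · exact hrho _
    have hMbpos : 0 < 2 * CB ^ 2 * (T (x 0) / B (x 0)) / rhoLow :=
      lt_of_lt_of_le (hMbub 0).1 (hMbub 0).2.1
    set δ0 := eps' / (2 * CB ^ 2 * (T (x 0) / B (x 0)) / rhoLow) with hδ0def
    have hδ0 : 0 < δ0 := div_pos heps' hMbpos
    have hdec : ∀ j, T (x (φ j + 1)) / B (x (φ j + 1))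
        ≤ T (x (φ j)) / B (x (φ j)) - δ0 := by
      intro j
      obtain ⟨h1, h2, h3⟩ := hMbub j
      have h4 : δ0 ≤ eps' / B (t (φ j)) := by
        rw [hδ0def]
        exact div_le_div_of_nonneg_left heps'.le h1 h2
      have h5 := hEl (φ j)
      linarith
    have hsum : ∀ j, T (x (φ j)) / B (x (φ j))
        ≤ T (x (φ 0)) / B (x (φ 0)) - j * δ0 := by
      intro j
      induction j with
      | zero => simp
      | succ j ih =>
        have h5 : φ j + 1 ≤ φ (j + 1) := hφ (Nat.lt_succ_self j)
        have h6 := hanti h5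
        have h7 := hdec j
        push_cast
        simp only at h6 ih
        linarith
    obtain ⟨j, hj⟩ := exists_nat_gt ((T (x (φ 0)) / B (x (φ 0))) / δ0)
    have h8 := hsum j
    have h9 : (T (x (φ 0)) / B (x (φ 0))) < j * δ0 := by
      rw [div_lt_iff₀ hδ0] at hj; linarith
    linarith [henn (φ j)]
  -- uniform bound on ‖l k - x k‖ and B (l k)
  have hlamHighpos : 0 < lamHigh := lt_of_lt_of_le hlamLow ((hlam 0).1.trans (hlam 0).2)
  set D : ℝ := 1 + 2 * (2 * lamHigh * (T (x 0) / B (x 0)) * CB) with hDdef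
  have hann : 0 ≤ 2 * lamHigh * (T (x 0) / B (x 0)) * CB := by positivity
  have hD1 : (1:ℝ) ≤ D := by rw [hDdef]; linarith
  have hlnorm : ∀ k, ‖l k‖ ≤ 1 + ‖l k - x k‖ := by
    intro k
    have h0 : l k = x k + (l k - x k) := by abel
    calc ‖l k‖ = ‖x k + (l k - x k)‖ := by rw [← h0]
      _ ≤ ‖x k‖ + ‖l k - x k‖ := norm_add_le _ _
      _ = 1 + ‖l k - x k‖ := by rw [(hP k).1]
  have hD : ∀ k, ‖l k - x k‖ ≤ D := by
    intro k
    have hlamk : 0 < lam k := lt_of_lt_of_le hlamLow (hlam k).1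
    have hs := key1 k
    have hsnn : 0 ≤ ‖l k - x k‖ := norm_nonneg _
    have hBub : B (l k) ≤ CB * (1 + ‖l k - x k‖) := by
      calc B (l k) ≤ CB * ‖l k‖ := hCB _
        _ ≤ CB * (1 + ‖l k - x k‖) := mul_le_mul_of_nonneg_left (hlnorm k) hCBpos.le
    have h2 : (1 / (2 * lam k)) * ‖l k - x k‖ ^ 2
        ≤ (T (x 0) / B (x 0)) * (CB * (1 + ‖l k - x k‖)) := by
      have hab : (T (x k) / B (x k)) * B (l k)
          ≤ (T (x 0) / B (x 0)) * (CB * (1 + ‖l k - x k‖)) := by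
        calc (T (x k) / B (x k)) * B (l k) ≤ (T (x 0) / B (x 0)) * B (l k) :=
              mul_le_mul_of_nonneg_right (hanti (Nat.zero_le k)) (hBlk k).le
          _ ≤ (T (x 0) / B (x 0)) * (CB * (1 + ‖l k - x k‖)) :=
              mul_le_mul_of_nonneg_left hBub he0nn
      linarith [hTnn (l k)]
    have hcanc : (2 * lam k) * ((1 / (2 * lam k)) * ‖l k - x k‖ ^ 2) = ‖l k - x k‖ ^ 2 := by
      field_simp
    have hmul := mul_le_mul_of_nonneg_left h2 (by positivity : (0:ℝ) ≤ 2 * lam k)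
    rw [hcanc] at hmul
    have h3 : ‖l k - x k‖ ^ 2
        ≤ 2 * lamHigh * (T (x 0) / B (x 0)) * CB * (1 + ‖l k - x k‖) := by
      have hnn2 : 0 ≤ (T (x 0) / B (x 0)) * (CB * (1 + ‖l k - x k‖)) := by positivity
      have hlk2 : lam k ≤ lamHigh := (hlam k).2
      nlinarith [hmul]
    rcases le_or_gt (‖l k - x k‖) 1 with h | h
    · linarith
    · have h5 : ‖l k - x k‖ * ‖l k - x k‖
          ≤ (2 * (2 * lamHigh * (T (x 0) / B (x 0)) * CB)) * ‖l k - x k‖ := by nlinarith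
      have h6 : ‖l k - x k‖ ≤ 2 * (2 * lamHigh * (T (x 0) / B (x 0)) * CB) :=
        le_of_mul_le_mul_right h5 (lt_trans one_pos h)
      rw [hDdef]
      linarith
  -- summability of the squared increments of the l-sequence
  set c0 : ℝ := 1 / (2 * lamHigh * (CB * (1 + D))) with hc0def
  have hc0 : 0 < c0 := by
    rw [hc0def]
    have h1D : (0:ℝ) < 1 + D := by linarith
    exact one_div_pos.mpr (mul_pos (mul_pos two_pos hlamHighpos) (mul_pos hCBpos h1D))
  have hsummand : ∀ k, c0 * ‖l k - x k‖ ^ 2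
      ≤ T (x k) / B (x k) - T (x (k + 1)) / B (x (k + 1)) := by
    intro k
    have hlamk : 0 < lam k := lt_of_lt_of_le hlamLow (hlam k).1
    have h1 : (1 / (2 * lam k)) * ‖l k - x k‖ ^ 2
        ≤ (T (x k) / B (x k) - T (l k) / B (l k)) * B (l k) := by
      have hTl : T (l k) = (T (l k) / B (l k)) * B (l k) :=
        (div_mul_cancel₀ _ (hBlk k).ne').symm
      have h0 := key1 k
      nlinarith [h0]
    have hBlub : B (l k) ≤ CB * (1 + D) := by
      calc B (l k) ≤ CB * ‖l k‖ := hCB _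
        _ ≤ CB * (1 + ‖l k - x k‖) := mul_le_mul_of_nonneg_left (hlnorm k) hCBpos.le
        _ ≤ CB * (1 + D) := mul_le_mul_of_nonneg_left (by linarith [hD k]) hCBpos.le
    have hpos1 : 0 < 2 * lam k * B (l k) := mul_pos (mul_pos two_pos hlamk) (hBlk k)
    have h2 : c0 ≤ 1 / (2 * lam k * B (l k)) := by
      rw [hc0def]
      apply one_div_le_one_div_of_le hpos1
      have := (hlam k).2
      nlinarith [hBlub, (hBlk k).le]
    have h3 : (1 / (2 * lam k)) * ‖l k - x k‖ ^ 2 / B (l k)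
        ≤ T (x k) / B (x k) - T (l k) / B (l k) := by
      rw [div_le_iff₀ (hBlk k)]
      linarith [h1]
    have h4 : (1 / (2 * lam k)) * ‖l k - x k‖ ^ 2 / B (l k)
        = (1 / (2 * lam k * B (l k))) * ‖l k - x k‖ ^ 2 := by
      field_simp
    rw [h4] at h3
    have h5 : c0 * ‖l k - x k‖ ^ 2 ≤ (1 / (2 * lam k * B (l k))) * ‖l k - x k‖ ^ 2 :=
      mul_le_mul_of_nonneg_right h2 (sq_nonneg _)
    linarith [hEx1 k]
  have hsummable : Summable (fun k => c0 * ‖l k - x k‖ ^ 2) := by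
    apply summable_of_sum_range_le (c := T (x 0) / B (x 0))
      (fun k => by positivity)
    intro m
    have htel : ∑ i ∈ Finset.range m,
        (T (x i) / B (x i) - T (x (i + 1)) / B (x (i + 1)))
        = T (x 0) / B (x 0) - T (x m) / B (x m) :=
      Finset.sum_range_sub' (fun i => T (x i) / B (x i)) m
    calc ∑ i ∈ Finset.range m, c0 * ‖l i - x i‖ ^ 2
        ≤ ∑ i ∈ Finset.range m, (T (x i) / B (x i) - T (x (i + 1)) / B (x (i + 1))) :=
          Finset.sum_le_sum fun i _ => hsummand i
      _ = T (x 0) / B (x 0) - T (x m) / B (x m) := htel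
      _ ≤ T (x 0) / B (x 0) := by linarith [henn m]
  have hlx0 : Filter.Tendsto (fun k => ‖l k - x k‖) Filter.atTop (nhds 0) := by
    have h1 : Summable (fun k => ‖l k - x k‖ ^ 2) := by
      have := (summable_mul_left_iff hc0.ne').mp hsummable
      exact this
    have h2 := h1.tendsto_atTop_zero
    have h4 : Filter.Tendsto (fun k => Real.sqrt (‖l k - x k‖ ^ 2)) Filter.atTop (nhds 0) := by
      have h5 := (Real.continuous_sqrt.tendsto 0).comp h2
      rw [Real.sqrt_zero] at h5
      exact h5
    exact h4.congr fun k => Real.sqrt_sq (norm_nonneg _)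
  -- the steps of the main sequence tend to zero
  obtain ⟨N, hN⟩ := hfin
  have hystep : ∀ k, N ≤ k → ‖x (k + 1) - x k‖ ≤ 2 * ‖l k - x k‖ := by
    intro k hk
    have hyl : y k = l k := by rw [hy k, if_neg (hN k hk)]
    have hlne : l k ≠ 0 := by
      intro h
      have h0 := hBlk k
      rw [h, hB0] at h0
      exact lt_irrefl 0 h0
    have hnl : 0 < ‖l k‖ := norm_pos_iff.mpr hlne
    have hx1 : x (k + 1) = ‖l k‖⁻¹ • l k := by rw [hxk k, hyl]
    have h5 : x (k + 1) - x k = (x (k + 1) - l k) + (l k - x k) := by abel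
    have h6 : ‖x (k + 1) - l k‖ = |1 - ‖l k‖| := by
      rw [hx1]
      have h0 : ‖l k‖⁻¹ • l k - l k = (‖l k‖⁻¹ - 1) • l k := by rw [sub_smul, one_smul]
      rw [h0, norm_smul, Real.norm_eq_abs, ← abs_of_nonneg (norm_nonneg (l k)), ← abs_mul]
      congr 1
      field_simp
      rw [abs_of_nonneg (norm_nonneg _)]; ring
    have h7 : |1 - ‖l k‖| ≤ ‖l k - x k‖ := by
      have h0 := abs_norm_sub_norm_le (x k) (l k)
      rw [(hP k).1, norm_sub_rev] at h0
      exact h0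
    calc ‖x (k + 1) - x k‖ = ‖(x (k + 1) - l k) + (l k - x k)‖ := by rw [← h5]
      _ ≤ ‖x (k + 1) - l k‖ + ‖l k - x k‖ := norm_add_le _ _
      _ ≤ 2 * ‖l k - x k‖ := by rw [h6]; linarith [h7]
  have hsteps : Filter.Tendsto (fun k => ‖x (k + 1) - x k‖) Filter.atTop (nhds 0) := by
    apply squeeze_zero' (Filter.Eventually.of_forall fun k => norm_nonneg _)
      (Filter.eventually_atTop.mpr ⟨N, fun k hk => hystep k hk⟩)
    have := hlx0.const_mul 2
    simpa using this
  -- accumulation points are in S ∩ Ω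
  have hAsub : ∀ p : EuclideanSpace ℝ (Fin n),
      (∃ φ : ℕ → ℕ, StrictMono φ ∧ Filter.Tendsto (x ∘ φ) Filter.atTop (nhds p)) →
      ‖p‖ = 1 ∧ B p ≠ 0 := by
    rintro p ⟨φ, hφ, hlim⟩
    have hnp : ‖p‖ = 1 := by
      have h1 : Filter.Tendsto (fun j => ‖(x ∘ φ) j‖) Filter.atTop (nhds ‖p‖) := hlim.norm
      have h2 : (fun j => ‖(x ∘ φ) j‖) = fun _ => (1:ℝ) := funext fun j => (hP (φ j)).1
      rw [h2] at h1
      exact tendsto_nhds_unique h1 tendsto_const_nhds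
    refine ⟨hnp, fun hBp => ?_⟩
    have hTp : Filter.Tendsto (fun j => T ((x ∘ φ) j)) Filter.atTop (nhds (T p)) :=
      (hTcont.tendsto p).comp hlim
    have hBpl : Filter.Tendsto (fun j => (T (x 0) / B (x 0)) * B ((x ∘ φ) j))
        Filter.atTop (nhds ((T (x 0) / B (x 0)) * B p)) :=
      ((hBcont.tendsto p).comp hlim).const_mul _
    have hineq : ∀ j, T ((x ∘ φ) j) ≤ (T (x 0) / B (x 0)) * B ((x ∘ φ) j) := by
      intro j
      have h3 : T (x (φ j)) = (T (x (φ j)) / B (x (φ j))) * B (x (φ j)) :=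
        (div_mul_cancel₀ _ (hP (φ j)).2.ne').symm
      calc T ((x ∘ φ) j) = (T (x (φ j)) / B (x (φ j))) * B (x (φ j)) := h3
        _ ≤ (T (x 0) / B (x 0)) * B (x (φ j)) :=
            mul_le_mul_of_nonneg_right (hanti (Nat.zero_le _)) (hBnn _)
        _ = (T (x 0) / B (x 0)) * B ((x ∘ φ) j) := rfl
    have h4 : T p ≤ (T (x 0) / B (x 0)) * B p :=
      le_of_tendsto_of_tendsto' hTp hBpl hineq
    rw [hBp, mul_zero] at h4
    have hTp0 : T p = 0 := le_antisymm h4 (hTnn p)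
    have hp0 : p = 0 := hZero p hBp hTp0
    rw [hp0, norm_zero] at hnp
    exact zero_ne_one hnp
  -- endgame
  set A : Set (EuclideanSpace ℝ (Fin n)) :=
    {p | ∃ φ : ℕ → ℕ, StrictMono φ ∧ Filter.Tendsto (x ∘ φ) Filter.atTop (nhds p)}
    with hAdef
  have hxsph : ∀ k, x k ∈ Metric.sphere (0 : EuclideanSpace ℝ (Fin n)) 1 := by
    intro k
    rw [mem_sphere_zero_iff_norm]
    exact (hP k).1
  by_cases hsingle : ∀ p ∈ A, ∀ q ∈ A, p = q
  · left
    obtain ⟨p, hpS, φ, hφ, hplim⟩ :=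
      (isCompact_sphere (0 : EuclideanSpace ℝ (Fin n)) 1).tendsto_subseq hxsph
    have hpA : p ∈ A := ⟨φ, hφ, hplim⟩
    refine ⟨p, ?_⟩
    by_contra hnc
    rw [Metric.tendsto_atTop] at hnc
    push_neg at hnc
    obtain ⟨ε, hε, hfreq⟩ := hnc
    obtain ⟨ψ, hψ, hpsid⟩ := Filter.extraction_of_frequently_atTop
      (Filter.frequently_atTop.mpr fun N => by
        obtain ⟨k, hk1, hk2⟩ := hfreq N; exact ⟨k, hk1, hk2⟩)
    obtain ⟨q, hqS, σ, hσ, hqlim⟩ :=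
      (isCompact_sphere (0 : EuclideanSpace ℝ (Fin n)) 1).tendsto_subseq
        (x := fun j => x (ψ j)) (fun j => hxsph _)
    have hqA : q ∈ A := ⟨ψ ∘ σ, hψ.comp hσ, hqlim⟩
    have hpq : p = q := hsingle p hpA q hqA
    have hd : Filter.Tendsto (fun j => dist (x (ψ (σ j))) p) Filter.atTop
        (nhds (dist q p)) := hqlim.dist tendsto_const_nhds
    have h9 : ε ≤ dist q p :=
      ge_of_tendsto hd (Filter.Eventually.of_forall fun j => hpsid (σ j))
    rw [← hpq, dist_self] at h9
    linarith
  · right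
    push_neg at hsingle
    obtain ⟨a, haA, b, hbA, hab⟩ := hsingle
    have hdab : 0 < ‖b - a‖ := by
      rw [norm_pos_iff, sub_ne_zero]
      exact fun h => hab h.symm
    have hcluster : ∀ r : ℝ, 0 ≤ r → r ≤ ‖b - a‖ → ∃ p, p ∈ A ∧ ‖p - a‖ = r := by
      intro r h1 h2
      obtain ⟨p, hp1, hp2⟩ := aux_cluster_at_dist x (fun k => (hP k).1) hsteps a b haA hbA r h1 h2
      exact ⟨p, hp1, hp2⟩
    refine ⟨fun p hp => hAsub p hp, ?_, ?_⟩
    · -- cardinality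
      apply le_antisymm
      · have h1 : Cardinal.mk A ≤ Cardinal.mk (EuclideanSpace ℝ (Fin n)) :=
          Cardinal.mk_set_le A
        have h2 : Cardinal.mk (EuclideanSpace ℝ (Fin n)) = Cardinal.mk (Fin n → ℝ) :=
          Cardinal.mk_congr (WithLp.equiv 2 _)
        have h3 : Cardinal.mk (Fin n → ℝ) ≤ Cardinal.continuum := by
          rw [Cardinal.mk_arrow]
          simp only [Cardinal.mk_real, Cardinal.lift_continuum, Cardinal.mk_fin,
            Cardinal.lift_natCast]
          calc Cardinal.continuum ^ (n : Cardinal)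
              ≤ Cardinal.continuum ^ Cardinal.aleph0 :=
                Cardinal.power_le_power_left Cardinal.continuum_ne_zero
                  (Cardinal.nat_lt_aleph0 n).le
            _ = Cardinal.continuum := Cardinal.continuum_power_aleph0
        rw [h2] at h1
        exact h1.trans h3
      · have hch : ∀ r : Set.Icc (0:ℝ) ‖b - a‖, ∃ p, p ∈ A ∧ ‖p - a‖ = (r : ℝ) :=
          fun r => hcluster r r.2.1 r.2.2
        choose F hF1 hF2 using hch
        have hinj : Function.Injective (fun r => (⟨F r, hF1 r⟩ : A)) := by
          intro r1 r2 h12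
          have h13 : F r1 = F r2 := congrArg Subtype.val h12
          have h14 : (r1 : ℝ) = (r2 : ℝ) := by rw [← hF2 r1, ← hF2 r2, h13]
          exact Subtype.ext h14
        calc Cardinal.continuum = Cardinal.mk (Set.Icc (0:ℝ) ‖b - a‖) :=
              (Cardinal.mk_Icc_real hdab).symm
          _ ≤ Cardinal.mk A := Cardinal.mk_le_of_injective hinj
    · -- no isolated points
      intro p hp ε hε
      obtain ⟨b', hb'A, hb'p⟩ : ∃ b', b' ∈ A ∧ b' ≠ p := by
        by_cases hpa : p = a
        · exact ⟨b, hbA, fun h => hab ((h.trans hpa).symm)⟩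
        · exact ⟨a, haA, fun h => hpa h.symm⟩
      rcases lt_or_ge ‖b' - p‖ ε with h | h
      · exact ⟨b', hb'A, hb'p, h⟩
      · have hr2 : (0:ℝ) ≤ ε / 2 := by linarith
        have hr3 : ε / 2 ≤ ‖b' - p‖ := by linarith
        obtain ⟨q, hq1, hq2⟩ := aux_cluster_at_dist x (fun k => (hP k).1) hsteps p b'
          hp hb'A (ε / 2) hr2 hr3
        refine ⟨q, hq1, ?_, by rw [hq2]; linarith⟩
        intro hqp
        rw [hqp, sub_self, norm_zero] at hq2
        linarith
end
end

section
/- Let W = [w_ij] ∈ ℝ^{n×n} have nonnegative entries, let T(x) := Σ_{i,j=1}^n w_ij·max(x_i − x_j, 0) be the graph directed variation, let Q be an n×n diagonal matrix with positive diagonal entries, and let V ∈ ℝ^{n×m} have orthonormal columns (VᵀV = I_m). For x ∈ ℝᵐ \ {0} set B(x) := ‖Q^{1/2}Vx‖ (which is positive) and E(x) := T(Vx)/B(x); call x* on the unit sphere S of ℝᵐ a critical point if (T(Vx*)/‖Q^{1/2}Vx*‖²)·VᵀQVx* ∈ ∂(x ↦ T(Vx))(x*). If the set N := {x ∈ S :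 T(Vx) = 0} is finite, then the set of critical points in S is finite. -/
noncomputable section

open Filter Topology Matrix

private lemma recov {n m : ℕ} (V : Matrix (Fin n) (Fin m) ℝ)
    (hV : V.transpose * V = 1) (x : Fin m → ℝ) :
    V.transpose.mulVec (V.mulVec x) = x := by
  rw [Matrix.mulVec_mulVec, hV, Matrix.one_mulVec]

private lemma pair_lemma {n m : ℕ} (q : Fin n → ℝ) (V : Matrix (Fin n) (Fin m) ℝ)
    (x z : Fin m → ℝ) :
    (∑ s, ((V.transpose * Matrix.diagonal q * V).mulVec x) s * z s)
      = ∑ i, q i * (V.mulVec x i) * (V.mulVec z i) := by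
  have h1 : (V.transpose * Matrix.diagonal q * V).mulVec x
      = Matrix.vecMul ((Matrix.diagonal q).mulVec (V.mulVec x)) V := by
    rw [← Matrix.mulVec_transpose, Matrix.mulVec_mulVec, Matrix.mulVec_mulVec,
      Matrix.mul_assoc]
  have h2 : (∑ s, ((V.transpose * Matrix.diagonal q * V).mulVec x) s * z s)
      = ((V.transpose * Matrix.diagonal q * V).mulVec x) ⬝ᵥ z := rfl
  rw [h2, h1, ← Matrix.dotProduct_mulVec]
  simp only [dotProduct, Matrix.mulVec_diagonal]
  try exact Finset.sum_congr rfl fun i _ => by ring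

private lemma Bpos {n m : ℕ} (q : Fin n → ℝ) (hq : ∀ i, 0 < q i)
    (V : Matrix (Fin n) (Fin m) ℝ) (hV : V.transpose * V = 1)
    (x : Fin m → ℝ) (hx : ∑ s, (x s) ^ 2 = 1) :
    0 < ∑ i, q i * (V.mulVec x i) ^ 2 := by
  have hx0 : V.mulVec x ≠ 0 := by
    intro h
    have hx' : x = 0 := by rw [← recov V hV x, h, Matrix.mulVec_zero]
    rw [hx'] at hx; simp at hx
  obtain ⟨i, hi⟩ := Function.ne_iff.1 hx0
  refine Finset.sum_pos' (fun i _ => mul_nonneg (hq i).le (sq_nonneg _))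
    ⟨i, Finset.mem_univ i, mul_pos (hq i) (pow_two_pos_of_ne_zero hi)⟩

/-- Key step: if `x` is a critical point with the same sign pattern as `y`, and
`T(Vx) ≠ 0`, then `(T(Vx)/B(x)) ⟨Mx, y⟩ = T(Vy)`. -/
private lemma crit_eq {n m : ℕ} (W : Matrix (Fin n) (Fin n) ℝ) (hW : ∀ i j, 0 ≤ W i j)
    (q : Fin n → ℝ) (hq : ∀ i, 0 < q i)
    (V : Matrix (Fin n) (Fin m) ℝ) (hV : V.transpose * V = 1)
    (T : (Fin n → ℝ) → ℝ)
    (hT : ∀ u : Fin n → ℝ, T u = ∑ i, ∑ j, W i j * max (u i - u j) 0)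
    (x y : Fin m → ℝ) (hx1 : ∑ s, (x s) ^ 2 = 1)
    (hx2 : ∀ z : Fin m → ℝ, T (V.mulVec x) +
      (∑ s, ((T (V.mulVec x) / (∑ i, q i * (V.mulVec x i) ^ 2)) •
        ((V.transpose * Matrix.diagonal q * V).mulVec x)) s * (z s - x s)) ≤ T (V.mulVec z))
    (hsign : ∀ i j, SignType.sign (V.mulVec x i - V.mulVec x j)
      = SignType.sign (V.mulVec y i - V.mulVec y j)) :
    (T (V.mulVec x) / (∑ i, q i * (V.mulVec x i) ^ 2)) *
      (∑ i, q i * (V.mulVec x i) * (V.mulVec y i)) = T (V.mulVec y) := by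
  set tx : ℝ := T (V.mulVec x) with htx
  set ty : ℝ := T (V.mulVec y) with hty
  set Bx : ℝ := ∑ i, q i * (V.mulVec x i) ^ 2 with hBx
  set G : ℝ := ∑ i, q i * (V.mulVec x i) * (V.mulVec y i) with hG
  have hBxpos : 0 < Bx := Bpos q hq V hV x hx1
  -- generic pairing computation
  have hd : ∀ zz : Fin m → ℝ,
      (∑ s, ((tx / Bx) • ((V.transpose * Matrix.diagonal q * V).mulVec x)) s * zz s)
        = (tx / Bx) * (∑ i, q i * (V.mulVec x i) * (V.mulVec zz i)) := by
    intro zz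
    rw [← pair_lemma q V x zz, Finset.mul_sum]
    exact Finset.sum_congr rfl fun s _ => by simp [mul_assoc]
  have huu : (∑ i, q i * (V.mulVec x i) * (V.mulVec x i)) = Bx := by
    rw [hBx]; exact Finset.sum_congr rfl fun i _ => by ring
  have hvxx : (∑ s, ((tx / Bx) • ((V.transpose * Matrix.diagonal q * V).mulVec x)) s * x s)
      = tx := by
    rw [hd x, huu, div_mul_cancel₀ _ hBxpos.ne']
  have hsub : ∀ zz : Fin m → ℝ,
      (∑ s, ((tx / Bx) • ((V.transpose * Matrix.diagonal q * V).mulVec x)) s * (zz s - x s))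
        = (tx / Bx) * (∑ i, q i * (V.mulVec x i) * (V.mulVec zz i)) - tx := by
    intro zz
    simp only [mul_sub, Finset.sum_sub_distrib, hvxx, hd zz]
  -- Step A: (tx/Bx) * G ≤ ty
  have hA : (tx / Bx) * G ≤ ty := by
    have h := hx2 y
    rw [hsub y] at h
    rw [hG]; linarith
  -- Step B: choose small ε
  have hev : ∀ᶠ ε : ℝ in 𝓝[>] (0:ℝ), ∀ ij : Fin n × Fin n,
      max ((1+ε) * (V.mulVec x ij.1 - V.mulVec x ij.2)
          - ε * (V.mulVec y ij.1 - V.mulVec y ij.2)) 0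
        = (1+ε) * max (V.mulVec x ij.1 - V.mulVec x ij.2) 0
          - ε * max (V.mulVec y ij.1 - V.mulVec y ij.2) 0 := by
    rw [Filter.eventually_all]
    rintro ⟨i, j⟩
    have hs := hsign i j
    set a : ℝ := V.mulVec x i - V.mulVec x j with ha'
    set b : ℝ := V.mulVec y i - V.mulVec y j with hb'
    have hcont : Filter.Tendsto (fun ε : ℝ => (1+ε) * a - ε * b)
        (𝓝[>] (0:ℝ)) (𝓝 a) := by
      have hc : Continuous (fun ε : ℝ => (1+ε) * a - ε * b) :=
        ((continuous_const.add continuous_id).mul continuous_const).sub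
          (continuous_id.mul continuous_const)
      have h0 : Filter.Tendsto (fun ε : ℝ => (1+ε) * a - ε * b) (𝓝[>] (0:ℝ))
          (𝓝 ((1+(0:ℝ)) * a - 0 * b)) :=
        (hc.tendsto 0).mono_left nhdsWithin_le_nhds
      simpa using h0
    rcases lt_trichotomy a 0 with ha | ha | ha
    · have hb : b < 0 := sign_eq_neg_one_iff.1 (by rw [← hs]; exact sign_neg ha)
      filter_upwards [hcont.eventually_lt_const ha] with ε hε
      rw [max_eq_right hε.le, max_eq_right ha.le, max_eq_right hb.le]; ring
    · have hb : b = 0 := sign_eq_zero_iff.1 (by rw [← hs, ha]; simp)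
      filter_upwards with ε
      rw [ha, hb]; simp
    · have hb : 0 < b := sign_eq_one_iff.1 (by rw [← hs]; exact sign_pos ha)
      filter_upwards [hcont.eventually_const_lt ha] with ε hε
      rw [max_eq_left hε.le, max_eq_left ha.le, max_eq_left hb.le]
  obtain ⟨ε, hmax, hε0⟩ := (hev.and self_mem_nhdsWithin).exists
  replace hε0 : (0:ℝ) < ε := hε0
  set z : Fin m → ℝ := (1+ε) • x - ε • y with hz
  have hVz : ∀ i, V.mulVec z i = (1+ε) * V.mulVec x i - ε * V.mulVec y i := by
    intro i
    rw [hz]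
    simp [Matrix.mulVec_sub, Matrix.mulVec_smul]
  have hFz : T (V.mulVec z) = (1+ε) * tx - ε * ty := by
    rw [htx, hty, hT (V.mulVec z), hT (V.mulVec x), hT (V.mulVec y),
      Finset.mul_sum, Finset.mul_sum, ← Finset.sum_sub_distrib]
    refine Finset.sum_congr rfl fun i _ => ?_
    rw [Finset.mul_sum, Finset.mul_sum, ← Finset.sum_sub_distrib]
    refine Finset.sum_congr rfl fun j _ => ?_
    have h1 : V.mulVec z i - V.mulVec z j
        = (1+ε) * (V.mulVec x i - V.mulVec x j) - ε * (V.mulVec y i - V.mulVec y j) := by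
      rw [hVz i, hVz j]; ring
    rw [h1, hmax ⟨i, j⟩]; ring
  have h5 : (∑ i, q i * (V.mulVec x i) * (V.mulVec z i)) = (1+ε) * Bx - ε * G := by
    rw [hBx, hG, Finset.mul_sum, Finset.mul_sum, ← Finset.sum_sub_distrib]
    refine Finset.sum_congr rfl fun i _ => ?_
    rw [hVz i]; ring
  have hB := hx2 z
  rw [hsub z, hFz, h5] at hB
  have hexp : (tx / Bx) * ((1+ε) * Bx - ε * G) = (1+ε) * tx - ε * ((tx / Bx) * G) := by
    field_simp
  rw [hexp] at hB
  have hBineq : ty ≤ (tx / Bx) * G := by nlinarith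
  linarith

/-- If the set `N = {x ∈ S : T(Vx) = 0}` is finite, then the generalized graph Fourier
mode problem `min T(Vx)/‖Q^{1/2}Vx‖` has only finitely many critical points on the unit
sphere `S` of `ℝᵐ`, where `T` is the graph directed variation of a nonnegatively
weighted graph, `Q` is diagonal with positive diagonal, and `V` has orthonormal
columns.  A point `x*` on `S` is critical when
`(T(Vx*)/‖Q^{1/2}Vx*‖²)·VᵀQVx* ∈ ∂(x ↦ T(Vx))(x*)`. -/
theorem stmt4 {n m : ℕ} (W : Matrix (Fin n) (Fin n) ℝ) (hW : ∀ i j, 0 ≤ W i j)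
    (q : Fin n → ℝ) (hq : ∀ i, 0 < q i)
    (V : Matrix (Fin n) (Fin m) ℝ) (hV : V.transpose * V = 1)
    (T : (Fin n → ℝ) → ℝ)
    (hT : ∀ u : Fin n → ℝ, T u = ∑ i, ∑ j, W i j * max (u i - u j) 0)
    (hN : {x : Fin m → ℝ | (∑ s, (x s) ^ 2) = 1 ∧ T (V.mulVec x) = 0}.Finite) :
    {x : Fin m → ℝ | (∑ s, (x s) ^ 2) = 1 ∧
      (T (V.mulVec x) / (∑ i, q i * (V.mulVec x i) ^ 2)) •
          ((V.transpose * Matrix.diagonal q * V).mulVec x) ∈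
        {v : Fin m → ℝ | ∀ z : Fin m → ℝ,
          T (V.mulVec x) + (∑ s, v s * (z s - x s)) ≤ T (V.mulVec z)}}.Finite := by
  classical
  have Fnonneg : ∀ x : Fin m → ℝ, 0 ≤ T (V.mulVec x) := by
    intro x; rw [hT]
    exact Finset.sum_nonneg fun i _ => Finset.sum_nonneg fun j _ =>
      mul_nonneg (hW i j) (le_max_right _ _)
  set f : (Fin m → ℝ) → ((Fin n × Fin n) → SignType) :=
    fun x ij => SignType.sign (V.mulVec x ij.1 - V.mulVec x ij.2) with hf
  set S2 : Set (Fin m → ℝ) := {x | (∑ s, (x s) ^ 2) = 1 ∧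
      (∀ z : Fin m → ℝ, T (V.mulVec x) +
        (∑ s, ((T (V.mulVec x) / (∑ i, q i * (V.mulVec x i) ^ 2)) •
          ((V.transpose * Matrix.diagonal q * V).mulVec x)) s * (z s - x s)) ≤ T (V.mulVec z))
      ∧ T (V.mulVec x) ≠ 0} with hS2
  have hinj : Set.InjOn f S2 := by
    rintro x ⟨hx1, hx2, hx3⟩ y ⟨hy1, hy2, hy3⟩ hfxy
    have hsign : ∀ i j, SignType.sign (V.mulVec x i - V.mulVec x j)
        = SignType.sign (V.mulVec y i - V.mulVec y j) := by
      intro i j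
      exact congrFun hfxy (i, j)
    have hsign' : ∀ i j, SignType.sign (V.mulVec y i - V.mulVec y j)
        = SignType.sign (V.mulVec x i - V.mulVec x j) := fun i j => (hsign i j).symm
    set tx : ℝ := T (V.mulVec x) with htxd
    set ty : ℝ := T (V.mulVec y) with htyd
    set Bx : ℝ := ∑ i, q i * (V.mulVec x i) ^ 2 with hBxd
    set By : ℝ := ∑ i, q i * (V.mulVec y i) ^ 2 with hByd
    set G : ℝ := ∑ i, q i * (V.mulVec x i) * (V.mulVec y i) with hGd
    have e1 : (tx / Bx) * G = ty :=
      crit_eq W hW q hq V hV T hT x y hx1 hx2 hsign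
    have e2 : (ty / By) * (∑ i, q i * (V.mulVec y i) * (V.mulVec x i)) = tx :=
      crit_eq W hW q hq V hV T hT y x hy1 hy2 hsign'
    have hGsymm : (∑ i, q i * (V.mulVec y i) * (V.mulVec x i)) = G := by
      rw [hGd]; exact Finset.sum_congr rfl fun i _ => by ring
    rw [hGsymm] at e2
    have hBxpos : 0 < Bx := Bpos q hq V hV x hx1
    have hBypos : 0 < By := Bpos q hq V hV y hy1
    have htxpos : 0 < tx := lt_of_le_of_ne (Fnonneg x) (Ne.symm hx3)
    have htypos : 0 < ty := lt_of_le_of_ne (Fnonneg y) (Ne.symm hy3)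
    have e1' : tx * G = ty * Bx := by
      field_simp [hBxpos.ne'] at e1; linarith
    have e2' : ty * G = tx * By := by
      field_simp [hBypos.ne'] at e2; linarith
    have hGpos : 0 < G := by nlinarith
    have hGG : G * G = Bx * By := by
      have hne : tx * ty ≠ 0 := by positivity
      apply mul_left_cancel₀ hne
      linear_combination (ty * G) * e1' + (ty * Bx) * e2'
    -- Cauchy–Schwarz equality
    have hsum0 : (∑ i, q i * (By * (V.mulVec x i) - G * (V.mulVec y i)) ^ 2) = 0 := by
      have hexp : (∑ i, q i * (By * (V.mulVec x i) - G * (V.mulVec y i)) ^ 2)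
          = By ^ 2 * Bx - 2 * By * G * G + G ^ 2 * By := by
        have hterm : ∀ i, q i * (By * (V.mulVec x i) - G * (V.mulVec y i)) ^ 2
            = By ^ 2 * (q i * (V.mulVec x i) ^ 2)
              - (2 * By * G) * (q i * (V.mulVec x i) * (V.mulVec y i))
              + G ^ 2 * (q i * (V.mulVec y i) ^ 2) := fun i => by ring
        rw [Finset.sum_congr rfl fun i _ => hterm i, Finset.sum_add_distrib,
          Finset.sum_sub_distrib, ← Finset.mul_sum, ← Finset.mul_sum, ← Finset.mul_sum,
          ← hBxd, ← hGd, ← hByd]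
        try ring
      rw [hexp]
      linear_combination (-By) * hGG
    have hkey : ∀ i, By * (V.mulVec x i) = G * (V.mulVec y i) := by
      intro i
      have h := (Finset.sum_eq_zero_iff_of_nonneg
        (fun i _ => mul_nonneg (hq i).le (sq_nonneg _))).1 hsum0 i (Finset.mem_univ i)
      have h2 : (By * (V.mulVec x i) - G * (V.mulVec y i)) ^ 2 = 0 := by
        rcases mul_eq_zero.1 h with h' | h'
        · exact absurd h' (hq i).ne'
        · exact h'
      have h3 := pow_eq_zero_iff (n := 2) (by norm_num) |>.1 h2
      linarith
    have hxs : ∀ (v : Fin m → ℝ) (s : Fin m), v s = ∑ i, V i s * (V.mulVec v i) := by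
      intro v s
      conv_lhs => rw [← recov V hV v]
      simp [Matrix.mulVec, dotProduct, Matrix.transpose_apply]
    have hxy2 : ∀ s, By * x s = G * y s := by
      intro s
      rw [hxs x s, hxs y s, Finset.mul_sum, Finset.mul_sum]
      exact Finset.sum_congr rfl fun i _ => by
        linear_combination (V i s) * hkey i
    have hlam : ∀ s, x s = (G / By) * y s := by
      intro s
      rw [div_mul_eq_mul_div, eq_div_iff hBypos.ne']
      linarith [hxy2 s]
    have hsq : (G / By) ^ 2 = 1 := by
      have h : (∑ s, (x s) ^ 2) = (G / By) ^ 2 * (∑ s, (y s) ^ 2) := by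
        rw [Finset.mul_sum]
        exact Finset.sum_congr rfl fun s _ => by rw [hlam s]; ring
      rw [hx1, hy1, mul_one] at h
      linarith
    have hGBy : G = By := by
      have h1 : (G / By) * (G / By) = 1 := by rw [← pow_two]; exact hsq
      rcases mul_self_eq_one_iff.1 h1 with h | h
      · field_simp [hBypos.ne'] at h; linarith
      · exfalso
        have : 0 < G / By := div_pos hGpos hBypos
        linarith
    funext s
    have h := hxy2 s
    rw [← hGBy] at h
    exact mul_left_cancel₀ hGpos.ne' h
  have hS2fin : S2.Finite := Set.Finite.of_finite_image (Set.toFinite _) hinj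
  refine Set.Finite.subset (hN.union hS2fin) ?_
  rintro x ⟨hx1, hx2⟩
  by_cases h0 : T (V.mulVec x) = 0
  · exact Or.inl ⟨hx1, h0⟩
  · exact Or.inr ⟨hx1, hx2, h0⟩
end
end

section
/- Assume x* ∈ S ∩ Ω is a local minimizer of E on S ∩ Ω. Then x* is a local minimizer of g − h on ℝⁿ, where g(x) := T(x) and h(x) := E(x*)·B(x): there exists ε' > 0 such that T(x) − E(x*)B(x) ≥ 0 = T(x*) − E(x*)B(x*) for all x ∈ ℝⁿ with ‖x − x*‖ ≤ ε'. -/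
noncomputable section

/-- If `x* ∈ S ∩ Ω` is a local minimizer of `E = T/B` on `S ∩ Ω`, then `x*` is a local
minimizer of `g − h` on `ℝⁿ`, where `g = T` and `h = E(x*)·B`: there is `ε' > 0` with
`T(x) − E(x*)B(x) ≥ 0 = T(x*) − E(x*)B(x*)` whenever `‖x − x*‖ ≤ ε'`. -/
theorem stmt6 {n : ℕ} (T B : EuclideanSpace ℝ (Fin n) → ℝ)
    (hTconv : ConvexOn ℝ Set.univ T) (hBconv : ConvexOn ℝ Set.univ B)
    (hThom : ∀ α : ℝ, 0 ≤ α → ∀ x, T (α • x) = α * T x) (hTnn : ∀ x, 0 ≤ T x)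
    (hBhom : ∀ α : ℝ, 0 ≤ α → ∀ x, B (α • x) = α * B x) (hBnn : ∀ x, 0 ≤ B x)
    (hZero : ∀ x, B x = 0 → T x = 0 → x = 0) (hΩ : ∃ x, B x ≠ 0)
    (xs : EuclideanSpace ℝ (Fin n)) (hxsS : ‖xs‖ = 1) (hxsΩ : B xs ≠ 0)
    (hloc : ∃ ε > 0, ∀ z, ‖z‖ = 1 → B z ≠ 0 → ‖z - xs‖ ≤ ε →
      T xs / B xs ≤ T z / B z) :
    T xs - (T xs / B xs) * B xs = 0 ∧
    ∃ ε' > 0, ∀ z : EuclideanSpace ℝ (Fin n), ‖z - xs‖ ≤ ε' →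
      0 ≤ T z - (T xs / B xs) * B z := by
  have hBpos : 0 < B xs := lt_of_le_of_ne (hBnn xs) (Ne.symm hxsΩ)
  constructor
  · field_simp; ring
  obtain ⟨ε, hε, hmin⟩ := hloc
  have hlamnn : 0 ≤ T xs / B xs := div_nonneg (hTnn xs) hBpos.le
  refine ⟨min (ε/2) (1/2), by positivity, ?_⟩
  intro z hz
  have hz1 : ‖z - xs‖ ≤ ε/2 := le_trans hz (min_le_left _ _)
  have hz2 : ‖z - xs‖ ≤ 1/2 := le_trans hz (min_le_right _ _)
  have habs := abs_norm_sub_norm_le z xs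
  rw [hxsS] at habs
  have hznorm : (1:ℝ)/2 ≤ ‖z‖ := by
    have := (abs_le.mp (habs.trans hz2)).1
    linarith
  have hzpos : (0:ℝ) < ‖z‖ := by linarith
  set w := ‖z‖⁻¹ • z with hw
  have hwnorm : ‖w‖ = 1 := by
    rw [hw, norm_smul, norm_inv, norm_norm, inv_mul_cancel₀ hzpos.ne']
  have hTw : T w = ‖z‖⁻¹ * T z := hThom _ (by positivity) z
  have hBw : B w = ‖z‖⁻¹ * B z := hBhom _ (by positivity) z
  have hTz : T z = ‖z‖ * T w := by
    rw [hTw]; field_simp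
  have hBz : B z = ‖z‖ * B w := by
    rw [hBw]; field_simp
  have hwz : ‖w - z‖ = |1 - ‖z‖| := by
    have : w - z = (‖z‖⁻¹ - 1) • z := by rw [hw, sub_smul, one_smul]
    rw [this, norm_smul, Real.norm_eq_abs]
    rw [show (‖z‖⁻¹ - 1) = ‖z‖⁻¹ * (1 - ‖z‖) by field_simp, abs_mul,
      abs_of_nonneg (by positivity : (0:ℝ) ≤ ‖z‖⁻¹)]
    field_simp
  have hwxs : ‖w - xs‖ ≤ ε := by
    have h1 : ‖w - xs‖ ≤ ‖w - z‖ + ‖z - xs‖ := norm_sub_le_norm_sub_add_norm_sub w z xs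
    have h2 : |1 - ‖z‖| ≤ ‖z - xs‖ := by
      rw [abs_sub_comm]; exact habs
    linarith [hwz ▸ h1]
  by_cases hBw0 : B w = 0
  · have : B z = 0 := by rw [hBz, hBw0, mul_zero]
    rw [this, mul_zero, sub_zero]
    exact hTnn z
  · have hBwpos : 0 < B w := lt_of_le_of_ne (hBnn w) (Ne.symm hBw0)
    have hle := hmin w hwnorm hBw0 hwxs
    have hmul : T xs / B xs * B w ≤ T w := by
      rw [div_le_div_iff₀ hBpos hBwpos] at hle
      rw [div_mul_eq_mul_div, div_le_iff₀ hBpos]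
      linarith
    rw [hTz, hBz]
    nlinarith
end
end

section
/- Let x* ∈ S ∩ Ω and define g(x) := T(x) and h(x) := E(x*)·B(x). If there exists ε > 0 such that ∂h(x) ∩ ∂g(x*) ≠ ∅ for every x ∈ S ∩ Ω with ‖x − x*‖ ≤ ε, then x* is a local minimizer of E on S ∩ Ω, i.e., E(x) ≥ E(x*) for all x ∈ S ∩ Ω with ‖x − x*‖ ≤ ε. -/
open scoped RealInnerProductSpace

noncomputable section

/-- Sufficient condition for a local minimizer: if `∂h(x) ∩ ∂g(x*) ≠ ∅` for every
`x ∈ S ∩ Ω` with `‖x − x*‖ ≤ ε`, where `g = T` and `h = E(x*)·B`, then `x*` is a local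
minimizer of `E` on `S ∩ Ω`, i.e. `E(x) ≥ E(x*)` for all such `x`. -/
theorem stmt7 {n : ℕ} (T B : EuclideanSpace ℝ (Fin n) → ℝ)
    (hTconv : ConvexOn ℝ Set.univ T) (hBconv : ConvexOn ℝ Set.univ B)
    (hThom : ∀ α : ℝ, 0 ≤ α → ∀ x, T (α • x) = α * T x) (hTnn : ∀ x, 0 ≤ T x)
    (hBhom : ∀ α : ℝ, 0 ≤ α → ∀ x, B (α • x) = α * B x) (hBnn : ∀ x, 0 ≤ B x)
    (hZero : ∀ x, B x = 0 → T x = 0 → x = 0) (hΩ : ∃ x, B x ≠ 0)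
    (xs : EuclideanSpace ℝ (Fin n)) (hxsS : ‖xs‖ = 1) (hxsΩ : B xs ≠ 0)
    (ε : ℝ) (hε : 0 < ε)
    (hsub : ∀ z, ‖z‖ = 1 → B z ≠ 0 → ‖z - xs‖ ≤ ε →
      (subdiff (fun u => (T xs / B xs) * B u) z ∩ subdiff T xs).Nonempty) :
    ∀ z, ‖z‖ = 1 → B z ≠ 0 → ‖z - xs‖ ≤ ε → T xs / B xs ≤ T z / B z := by
  intro z hzS hzB hzε
  obtain ⟨v, hvh, hvg⟩ := hsub z hzS hzB hzε
  simp only [subdiff, Set.mem_setOf_eq] at hvh hvg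
  set E := T xs / B xs with hE
  have hBz : 0 < B z := lt_of_le_of_ne (hBnn z) (Ne.symm hzB)
  have hBxs : 0 < B xs := lt_of_le_of_ne (hBnn xs) (Ne.symm hxsΩ)
  -- B 0 = 0, T 0 = 0
  have hB0 : B 0 = 0 := by
    have := hBhom 0 le_rfl 0; simpa using this
  have hT0 : T 0 = 0 := by
    have := hThom 0 le_rfl 0; simpa using this
  -- from ∂h(z): ⟪v, z⟫ = E * B z
  have h1 := hvh 0
  have h2 := hvh ((2:ℝ) • z)
  rw [hB0] at h1
  have hB2z : B ((2:ℝ) • z) = 2 * B z := hBhom 2 (by norm_num) z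
  rw [hB2z] at h2
  have e1 : (0:EuclideanSpace ℝ (Fin n)) - z = -z := by simp
  have e2 : (2:ℝ) • z - z = z := by
    rw [two_smul]; abel
  rw [e1, inner_neg_right] at h1
  rw [e2] at h2
  have hvz : ⟪v, z⟫ = E * B z := by
    nlinarith [h1, h2]
  -- from ∂g(xs): ⟪v, xs⟫ = T xs
  have g1 := hvg 0
  have g2 := hvg ((2:ℝ) • xs)
  rw [hT0] at g1
  have hT2 : T ((2:ℝ) • xs) = 2 * T xs := hThom 2 (by norm_num) xs
  rw [hT2] at g2
  have f1 : (0:EuclideanSpace ℝ (Fin n)) - xs = -xs := by simp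
  have f2 : (2:ℝ) • xs - xs = xs := by rw [two_smul]; abel
  rw [f1, inner_neg_right] at g1
  rw [f2] at g2
  have hvxs : ⟪v, xs⟫ = T xs := by nlinarith [g1, g2]
  -- key: T z ≥ T xs + ⟪v, z - xs⟫ = ⟪v, z⟫ = E * B z
  have key := hvg z
  rw [inner_sub_right, hvz, hvxs] at key
  have hTz : E * B z ≤ T z := by linarith
  rw [hE, div_le_div_iff₀ hBxs hBz]
  have hEB : E * B xs = T xs := by
    rw [hE]; field_simp
  nlinarith [mul_le_mul_of_nonneg_right hTz hBxs.le, hEB, hBz.le]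
end
end

section
/- Let x ∈ S ∩ Ω, λ > 0, v ∈ ∂B(x), set l := prox_{λT}(x + λE(x)v) (so l ∈ Ω and l ≠ 0) and x⁺ := l/‖l‖. Then E(x) = E(x⁺) if and only if x = l, in which case x = l = x⁺. -/
open scoped RealInnerProductSpace

noncomputable section

/-- With `l = prox_{λT}(x + λE(x)v)` for `x ∈ S ∩ Ω`, `v ∈ ∂B(x)` and `x⁺ = l/‖l‖`:
`l ∈ Ω`, `l ≠ 0`, and `E(x) = E(x⁺)` iff `x = l`, in which case `x = l = x⁺`. -/
theorem stmt10 {n : ℕ} (T B : EuclideanSpace ℝ (Fin n) → ℝ)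
    (hTconv : ConvexOn ℝ Set.univ T) (hBconv : ConvexOn ℝ Set.univ B)
    (hThom : ∀ α : ℝ, 0 ≤ α → ∀ x, T (α • x) = α * T x) (hTnn : ∀ x, 0 ≤ T x)
    (hBhom : ∀ α : ℝ, 0 ≤ α → ∀ x, B (α • x) = α * B x) (hBnn : ∀ x, 0 ≤ B x)
    (hZero : ∀ x, B x = 0 → T x = 0 → x = 0) (hΩ : ∃ x, B x ≠ 0)
    (x : EuclideanSpace ℝ (Fin n)) (hxS : ‖x‖ = 1) (hxΩ : B x ≠ 0)
    (lam : ℝ) (hlam : 0 < lam)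
    (v : EuclideanSpace ℝ (Fin n)) (hv : v ∈ subdiff B x)
    (l : EuclideanSpace ℝ (Fin n))
    (hl : IsProx T lam (x + lam • (T x / B x) • v) l) :
    B l ≠ 0 ∧ l ≠ 0 ∧
      (T x / B x = T (‖l‖⁻¹ • l) / B (‖l‖⁻¹ • l) ↔ x = l) ∧
      (x = l → ‖l‖⁻¹ • l = x) := by
  have hBx : 0 < B x := lt_of_le_of_ne (hBnn x) (Ne.symm hxΩ)
  set E : ℝ := T x / B x with hE
  have hEnn : 0 ≤ E := div_nonneg (hTnn x) hBx.le
  have hB0 : B (0 : EuclideanSpace ℝ (Fin n)) = 0 := by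
    have := hBhom 0 le_rfl 0; simpa using this
  have hT0 : T (0 : EuclideanSpace ℝ (Fin n)) = 0 := by
    have := hThom 0 le_rfl 0; simpa using this
  have hTxE : T x = E * B x := by
    rw [hE]; field_simp
  -- ⟪v, x⟫ = B x
  have hvx : ⟪v, x⟫ = B x := by
    have h1 := hv 0
    have h2 := hv ((2 : ℝ) • x)
    rw [zero_sub, inner_neg_right, hB0] at h1
    have h2x : (2 : ℝ) • x - x = x := by
      rw [two_smul]; abel
    rw [h2x, hBhom 2 (by norm_num) x] at h2
    linarith
  have hvy : ∀ y, ⟪v, y⟫ ≤ B y := by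
    intro y
    have := hv y
    rw [inner_sub_right, hvx] at this
    linarith
  -- key inequality
  have hmain : T l + (1 / (2 * lam)) * ‖l - x‖ ^ 2 ≤ E * B l := by
    have h := hl x
    set w : EuclideanSpace ℝ (Fin n) := lam • E • v with hw
    have hxz : x - (x + w) = -w := by abel
    have hlz : l - (x + w) = (l - x) - w := by abel
    rw [hxz, hlz, norm_neg, norm_sub_sq_real] at h
    have hiw : ⟪l - x, w⟫ = lam * (E * ⟪l - x, v⟫) := by
      rw [hw, real_inner_smul_right, real_inner_smul_right]
    rw [hiw] at h
    have hlam' : lam ≠ 0 := ne_of_gt hlam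
    have h' : T l + (1 / (2 * lam)) * ‖l - x‖ ^ 2 ≤ T x + E * ⟪l - x, v⟫ := by
      have hc : 1 / (2 * lam) * (2 * (lam * (E * ⟪l - x, v⟫))) = E * ⟪l - x, v⟫ := by
        field_simp
      linarith [h]
    have hsplit : ⟪l - x, v⟫ = ⟪v, l⟫ - B x := by
      rw [real_inner_comm, inner_sub_right, hvx]
    rw [hsplit, hTxE] at h'
    have hvl : ⟪v, l⟫ ≤ B l := hvy l
    nlinarith [h']
  -- B l ≠ 0
  have hBl : B l ≠ 0 := by
    intro h0
    have hs : (0:ℝ) ≤ ‖l - x‖ ^ 2 := by positivity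
    have hc : 0 < 1 / (2 * lam) := by positivity
    have hsz : ‖l - x‖ ^ 2 = 0 := by
      rw [h0, mul_zero] at hmain
      nlinarith [hTnn l]
    have hn0 : ‖l - x‖ = 0 := by
      have := pow_eq_zero_iff (two_ne_zero) |>.mp hsz
      exact this
    have hlx : l = x := by rwa [norm_eq_zero, sub_eq_zero] at hn0
    exact hxΩ (hlx ▸ h0)
  have hl0 : l ≠ 0 := fun h => hBl (by rw [h, hB0])
  have hBlpos : 0 < B l := lt_of_le_of_ne (hBnn l) (Ne.symm hBl)
  have hnl : (0:ℝ) < ‖l‖ := norm_pos_iff.mpr hl0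
  have hinv : 0 ≤ ‖l‖⁻¹ := by positivity
  have hratio : T (‖l‖⁻¹ • l) / B (‖l‖⁻¹ • l) = T l / B l := by
    rw [hThom _ hinv, hBhom _ hinv, mul_div_mul_left _ _ (by positivity)]
  refine ⟨hBl, hl0, ?_, ?_⟩
  · constructor
    · intro heq
      rw [hratio] at heq
      have hTl : T l = E * B l := by
        field_simp [hBl] at heq
        linarith [heq]
      rw [hTl] at hmain
      have hsz : ‖l - x‖ ^ 2 ≤ 0 := by
        have hc : 0 < 1 / (2 * lam) := by positivity
        nlinarith
      have : ‖l - x‖ = 0 := by nlinarith [sq_nonneg ‖l - x‖, norm_nonneg (l - x)]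
      have : l - x = 0 := norm_eq_zero.mp this
      have : l = x := by rwa [sub_eq_zero] at this
      exact this.symm
    · intro hxl
      rw [hratio, ← hxl]
  · intro hxl
    rw [← hxl, hxS, inv_one, one_smul]
end
end

section
/- Suppose the sequences (x^k, v^k, l^k, w^k, t^k, y^k) are generated by PS-DCA from x⁰ ∈ S ∩ Ω with acceptance parameter ε' > 0, where 0 < λ_low ≤ λ_k ≤ λ_high < ∞ for all k and ρ_k ≥ ρ_low > 0 for all k. Then the sequences {l^k} and {t^k} are bounded, the set {k : y^k = t^k} is finite, and ‖l^k − x^k‖ → 0 and ‖x^k − x^{k+1}‖ → 0 as k → ∞. -/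
open scoped RealInnerProductSpace

noncomputable section

private lemma psdca_subadd {n : ℕ} {f : EuclideanSpace ℝ (Fin n) → ℝ}
    (hc : ConvexOn ℝ Set.univ f)
    (hh : ∀ α : ℝ, 0 ≤ α → ∀ x, f (α • x) = α * f x) (a b : EuclideanSpace ℝ (Fin n)) :
    f (a + b) ≤ f a + f b := by
  have h2 := hc.2 (Set.mem_univ a) (Set.mem_univ b)
    (by norm_num : (0:ℝ) ≤ 1/2) (by norm_num : (0:ℝ) ≤ 1/2) (by norm_num)
  have h3 := hh (1/2) (by norm_num) (a + b)
  rw [smul_add] at h3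
  simp only [smul_eq_mul] at h2
  linarith

private lemma psdca_zero {n : ℕ} {f : EuclideanSpace ℝ (Fin n) → ℝ}
    (hh : ∀ α : ℝ, 0 ≤ α → ∀ x, f (α • x) = α * f x) : f 0 = 0 := by
  have := hh 0 le_rfl 0
  simpa using this

private lemma psdca_bound {n : ℕ} {f : EuclideanSpace ℝ (Fin n) → ℝ}
    (hc : ConvexOn ℝ Set.univ f)
    (hh : ∀ α : ℝ, 0 ≤ α → ∀ x, f (α • x) = α * f x) (hnn : ∀ x, 0 ≤ f x) :
    ∃ K : ℝ, 0 ≤ K ∧ ∀ z, f z ≤ K * ‖z‖ := by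
  have hcont : Continuous f :=
    continuousOn_univ.mp (hc.continuousOn isOpen_univ)
  have hcpt : IsCompact (Metric.closedBall (0 : EuclideanSpace ℝ (Fin n)) 1) :=
    isCompact_closedBall _ _
  obtain ⟨z0, hz0, hmax⟩ := hcpt.exists_isMaxOn ⟨0, by simp⟩ hcont.continuousOn
  refine ⟨f z0, hnn z0, fun z => ?_⟩
  rcases eq_or_ne z 0 with rfl | hz
  · simp [psdca_zero hh]
  · have hr : (0:ℝ) < ‖z‖ := norm_pos_iff.mpr hz
    have hunit : ‖z‖⁻¹ • z ∈ Metric.closedBall (0 : EuclideanSpace ℝ (Fin n)) 1 := by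
      simp [norm_smul, abs_of_nonneg (inv_nonneg.mpr hr.le), inv_mul_cancel₀ hr.ne']
    have h1 := hmax hunit
    have h2 := hh ‖z‖ hr.le (‖z‖⁻¹ • z)
    rw [smul_smul, mul_inv_cancel₀ hr.ne', one_smul] at h2
    rw [h2] at *
    calc ‖z‖ * f (‖z‖⁻¹ • z) ≤ ‖z‖ * f z0 := by
          exact mul_le_mul_of_nonneg_left h1 hr.le
      _ = f z0 * ‖z‖ := mul_comm _ _

private lemma psdca_subgrad_bound {n : ℕ} {f : EuclideanSpace ℝ (Fin n) → ℝ}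
    {x v : EuclideanSpace ℝ (Fin n)} {K : ℝ}
    (hK : 0 ≤ K) (hsub : ∀ a b, f (a + b) ≤ f a + f b) (hle : ∀ z, f z ≤ K * ‖z‖)
    (hv : v ∈ subdiff f x) : ‖v‖ ≤ K := by
  have h1 := hv (x + v)
  have h2 : (x + v) - x = v := by abel
  rw [h2, real_inner_self_eq_norm_sq] at h1
  have h3 := hsub x v
  have h4 := hle v
  nlinarith [norm_nonneg v]

private lemma psdca_prox_bound {n : ℕ} {f : EuclideanSpace ℝ (Fin n) → ℝ} {lam : ℝ}
    {u p : EuclideanSpace ℝ (Fin n)}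
    (hlam : 0 < lam) (hp : IsProx f lam u p) (hnn : 0 ≤ f p) (hf0 : f 0 = 0) :
    ‖p‖ ≤ 2 * ‖u‖ := by
  have h1 := hp 0
  rw [hf0, zero_sub, norm_neg] at h1
  have hc : 0 < 1 / (2 * lam) := by positivity
  have h2 : ‖p - u‖ ^ 2 ≤ ‖u‖ ^ 2 := by nlinarith
  have h3 : ‖p - u‖ ≤ ‖u‖ := by nlinarith [norm_nonneg (p - u), norm_nonneg u]
  calc ‖p‖ = ‖(p - u) + u‖ := by rw [sub_add_cancel]
    _ ≤ ‖p - u‖ + ‖u‖ := norm_add_le _ _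
    _ ≤ 2 * ‖u‖ := by linarith

set_option maxHeartbeats 4000000 in
/-- Compactness of PS-DCA: `{lᵏ}` and `{tᵏ}` are bounded, the DCA branch
`yᵏ = tᵏ` is taken only finitely often, and `‖lᵏ − xᵏ‖ → 0`, `‖xᵏ − xᵏ⁺¹‖ → 0`. -/
theorem stmt11 {n : ℕ} (T B : EuclideanSpace ℝ (Fin n) → ℝ)
    (hTconv : ConvexOn ℝ Set.univ T) (hBconv : ConvexOn ℝ Set.univ B)
    (hThom : ∀ α : ℝ, 0 ≤ α → ∀ x, T (α • x) = α * T x) (hTnn : ∀ x, 0 ≤ T x)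
    (hBhom : ∀ α : ℝ, 0 ≤ α → ∀ x, B (α • x) = α * B x) (hBnn : ∀ x, 0 ≤ B x)
    (hZero : ∀ x, B x = 0 → T x = 0 → x = 0) (hΩ : ∃ x, B x ≠ 0)
    (lam rho : ℕ → ℝ) (lamLow lamHigh rhoLow : ℝ)
    (hlamLow : 0 < lamLow) (hlam : ∀ k, lamLow ≤ lam k ∧ lam k ≤ lamHigh)
    (hrhoLow : 0 < rhoLow) (hrho : ∀ k, rhoLow ≤ rho k)
    (eps' : ℝ) (heps' : 0 < eps')
    (x v l w t y : ℕ → EuclideanSpace ℝ (Fin n))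
    (hx0S : ‖x 0‖ = 1) (hx0Ω : B (x 0) ≠ 0)
    (hv : ∀ k, v k ∈ subdiff B (x k))
    (hl : ∀ k, IsProx T (lam k) (x k + lam k • (T (x k) / B (x k)) • v k) (l k))
    (hw : ∀ k, w k ∈ subdiff B 0)
    (ht : ∀ k, IsProx T (1 / rho k) ((T (l k) / B (l k) / rho k) • w k) (t k))
    (hy : ∀ k, y k =
      if T (t k) - (T (l k) / B (l k)) * B (t k) < -eps' then t k else l k)
    (hxk : ∀ k, x (k + 1) = ‖y k‖⁻¹ • y k)
    :
    (∃ M : ℝ, ∀ k, ‖l k‖ ≤ M) ∧ (∃ M : ℝ, ∀ k, ‖t k‖ ≤ M) ∧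
      {k : ℕ | T (t k) - (T (l k) / B (l k)) * B (t k) < -eps'}.Finite ∧
      Filter.Tendsto (fun k => ‖l k - x k‖) Filter.atTop (nhds 0) ∧
      Filter.Tendsto (fun k => ‖x k - x (k + 1)‖) Filter.atTop (nhds 0) := by
  classical
  have hB0 : B 0 = 0 := psdca_zero hBhom
  have hT0 : T 0 = 0 := psdca_zero hThom
  obtain ⟨KB, hKB0, hKB⟩ := psdca_bound hBconv hBhom hBnn
  have hBsub : ∀ a b, B (a + b) ≤ B a + B b := psdca_subadd hBconv hBhom
  have hvK : ∀ k, ‖v k‖ ≤ KB := fun k => psdca_subgrad_bound hKB0 hBsub hKB (hv k)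
  have hwK : ∀ k, ‖w k‖ ≤ KB := fun k => psdca_subgrad_bound hKB0 hBsub hKB (hw k)
  have hEnn : ∀ z, 0 ≤ T z / B z := fun z => div_nonneg (hTnn z) (hBnn z)
  set E0 : ℝ := T (x 0) / B (x 0) with hE0def
  have hE00 : 0 ≤ E0 := hEnn _
  have hlamHigh : 0 < lamHigh := lt_of_lt_of_le hlamLow (le_trans (hlam 0).1 (hlam 0).2)
  set Ml : ℝ := 2 * (1 + lamHigh * (E0 * KB)) with hMldef
  set Mt : ℝ := 2 * (E0 / rhoLow * KB) with hMtdef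
  have hMl0 : 0 ≤ Ml := by
    have : 0 ≤ lamHigh * (E0 * KB) := by positivity
    simp only [hMldef]; linarith
  have hMt0 : 0 ≤ Mt := by positivity
  set δ : ℝ := eps' / (KB * Mt + 1) with hδdef
  have hKM1 : 0 < KB * Mt + 1 := by positivity
  have hδ : 0 < δ := div_pos heps' hKM1
  clear_value E0 Ml Mt δ
  -- the one-step analysis
  have step : ∀ k, ‖x k‖ = 1 → 0 < B (x k) → T (x k) / B (x k) ≤ E0 →
      0 < B (l k) ∧
      T (l k) + 1 / (2 * lam k) * ‖l k - x k‖ ^ 2 ≤ (T (x k) / B (x k)) * B (l k) ∧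
      T (l k) / B (l k) ≤ T (x k) / B (x k) ∧
      ‖l k‖ ≤ Ml ∧ ‖t k‖ ≤ Mt ∧
      ‖x (k + 1)‖ = 1 ∧ 0 < B (x (k + 1)) ∧
      T (x (k + 1)) / B (x (k + 1)) ≤ T (l k) / B (l k) ∧
      (T (t k) - (T (l k) / B (l k)) * B (t k) < -eps' →
        T (x (k + 1)) / B (x (k + 1)) ≤ T (l k) / B (l k) - δ) := by
    intro k hx1 hBx hExE0
    have hlamk : 0 < lam k := lt_of_lt_of_le hlamLow (hlam k).1
    have hrk : 0 < rho k := lt_of_lt_of_le hrhoLow (hrho k)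
    set Ex : ℝ := T (x k) / B (x k) with hExdef
    have hEx0 : 0 ≤ Ex := hEnn _
    set s : ℝ := lam k * Ex with hsdef
    clear_value Ex s
    -- key inequality
    have h1 := hl k (x k)
    have e0 : x k + lam k • (T (x k) / B (x k)) • v k = x k + s • v k := by
      rw [hsdef, hExdef, smul_smul]
    rw [e0] at h1
    have e1 : x k - (x k + s • v k) = -(s • v k) := by abel
    have e2 : l k - (x k + s • v k) = (l k - x k) - s • v k := by abel
    rw [e1, e2, norm_neg] at h1
    have n1 : ‖s • v k‖ ^ 2 = s ^ 2 * ‖v k‖ ^ 2 := by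
      rw [norm_smul, Real.norm_eq_abs, mul_pow, sq_abs]
    have n2 : ‖(l k - x k) - s • v k‖ ^ 2
        = ‖l k - x k‖ ^ 2 - 2 * (s * ⟪v k, l k - x k⟫) + s ^ 2 * ‖v k‖ ^ 2 := by
      rw [norm_sub_sq_real, real_inner_smul_right, norm_smul, Real.norm_eq_abs, mul_pow,
        sq_abs, real_inner_comm]
    rw [n1, n2] at h1
    have hexp : 1 / (2 * lam k) *
        (‖l k - x k‖ ^ 2 - 2 * (s * ⟪v k, l k - x k⟫) + s ^ 2 * ‖v k‖ ^ 2)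
        = 1 / (2 * lam k) * ‖l k - x k‖ ^ 2 - Ex * ⟪v k, l k - x k⟫ +
          1 / (2 * lam k) * (s ^ 2 * ‖v k‖ ^ 2) := by
      rw [hsdef]; field_simp
    rw [hexp] at h1
    have hsg := hv k (l k)
    have hTx : T (x k) = Ex * B (x k) := by
      rw [hExdef, div_mul_cancel₀ _ hBx.ne']
    have h5 : Ex * ⟪v k, l k - x k⟫ ≤ Ex * (B (l k) - B (x k)) :=
      mul_le_mul_of_nonneg_left (by linarith) hEx0
    have key : T (l k) + 1 / (2 * lam k) * ‖l k - x k‖ ^ 2 ≤ Ex * B (l k) := by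
      nlinarith [h1, h5, hTx]
    -- positivity of B (l k)
    have hc : 0 < 1 / (2 * lam k) := by positivity
    have hBl : 0 < B (l k) := by
      rcases (hBnn (l k)).lt_or_eq with h | h
      · exact h
      · exfalso
        rw [← h, mul_zero] at key
        have hTl0 : T (l k) = 0 := by nlinarith [hTnn (l k), sq_nonneg ‖l k - x k‖]
        have hlx : l k = x k := by
          have h6 : ‖l k - x k‖ ^ 2 ≤ 0 := by nlinarith [hTnn (l k)]
          have h7 : ‖l k - x k‖ = 0 := by nlinarith [norm_nonneg (l k - x k)]
          have := norm_eq_zero.mp h7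
          exact sub_eq_zero.mp this
        rw [hlx] at h
        exact hBx.ne' h.symm
    have hEl : T (l k) / B (l k) ≤ Ex := by
      rw [div_le_iff₀ hBl]
      have h6 : 0 ≤ 1 / (2 * lam k) * ‖l k - x k‖ ^ 2 := by positivity
      linarith [key, h6]
    have hElE0 : T (l k) / B (l k) ≤ E0 := le_trans hEl hExE0
    have hEl0 : 0 ≤ T (l k) / B (l k) := hEnn _
    -- bound on ‖l k‖
    have hlb : ‖l k‖ ≤ Ml := by
      have hb := psdca_prox_bound hlamk (hl k) (hTnn (l k)) hT0
      have hu : ‖x k + lam k • (T (x k) / B (x k)) • v k‖ ≤ 1 + lamHigh * (E0 * KB) := by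
        calc ‖x k + lam k • (T (x k) / B (x k)) • v k‖
            ≤ ‖x k‖ + ‖lam k • (T (x k) / B (x k)) • v k‖ := norm_add_le _ _
          _ = 1 + lam k * (Ex * ‖v k‖) := by
              rw [hx1, norm_smul, norm_smul, Real.norm_eq_abs, Real.norm_eq_abs,
                abs_of_nonneg hlamk.le, abs_of_nonneg (hEnn (x k)), ← hExdef]
          _ ≤ 1 + lamHigh * (E0 * KB) := by
              have hvk0 := norm_nonneg (v k)
              have h8 : Ex * ‖v k‖ ≤ E0 * KB :=
                mul_le_mul hExE0 (hvK k) hvk0 hE00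
              have h9 : lam k * (Ex * ‖v k‖) ≤ lamHigh * (E0 * KB) :=
                mul_le_mul (hlam k).2 h8 (by positivity) hlamHigh.le
              linarith
      calc ‖l k‖ ≤ 2 * ‖x k + lam k • (T (x k) / B (x k)) • v k‖ := hb
        _ ≤ Ml := by rw [hMldef]; linarith
    -- bound on ‖t k‖
    have hirk : 0 < 1 / rho k := by positivity
    have htb : ‖t k‖ ≤ Mt := by
      have hb := psdca_prox_bound hirk (ht k) (hTnn (t k)) hT0
      have hu : ‖(T (l k) / B (l k) / rho k) • w k‖ ≤ E0 / rhoLow * KB := by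
        rw [norm_smul, Real.norm_eq_abs, abs_of_nonneg (by positivity)]
        have h8 : T (l k) / B (l k) / rho k ≤ E0 / rhoLow :=
          div_le_div₀ hE00 hElE0 hrhoLow (hrho k)
        exact mul_le_mul h8 (hwK k) (norm_nonneg _) (by positivity)
      calc ‖t k‖ ≤ 2 * ‖(T (l k) / B (l k) / rho k) • w k‖ := hb
        _ ≤ Mt := by rw [hMtdef]; linarith
    -- branch analysis
    have hy' := hy k
    have hBy : 0 < B (y k) ∧ T (y k) / B (y k) ≤ T (l k) / B (l k) ∧
        (T (t k) - (T (l k) / B (l k)) * B (t k) < -eps' →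
          T (y k) / B (y k) ≤ T (l k) / B (l k) - δ) := by
      by_cases hacc : T (t k) - (T (l k) / B (l k)) * B (t k) < -eps'
      · rw [hy', if_pos hacc]
        have hprod : 0 < (T (l k) / B (l k)) * B (t k) := by
          linarith [hTnn (t k), heps', hacc]
        have hBt : 0 < B (t k) := by
          rcases (hBnn (t k)).lt_or_eq with h | h
          · exact h
          · exfalso; rw [← h, mul_zero] at hprod; exact lt_irrefl _ hprod
        have hBtle : B (t k) ≤ KB * Mt + 1 := by
          have := hKB (t k)
          have h8 : KB * ‖t k‖ ≤ KB * Mt := mul_le_mul_of_nonneg_left htb hKB0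
          linarith
        have hδBt : δ * B (t k) ≤ eps' := by
          have h8 : δ * B (t k) ≤ δ * (KB * Mt + 1) :=
            mul_le_mul_of_nonneg_left hBtle hδ.le
          rw [hδdef, div_mul_cancel₀ _ hKM1.ne'] at h8
          rw [hδdef]
          exact h8
        have hEt : T (t k) / B (t k) ≤ T (l k) / B (l k) - δ := by
          rw [div_le_iff₀ hBt]
          have hring : (T (l k) / B (l k) - δ) * B (t k)
              = (T (l k) / B (l k)) * B (t k) - δ * B (t k) := by ring
          rw [hring]
          linarith [hacc, hδBt, heps']
        exact ⟨hBt, le_trans hEt (by linarith), fun _ => hEt⟩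
      · rw [hy', if_neg hacc]
        exact ⟨hBl, le_refl _, fun h => absurd h hacc⟩
    obtain ⟨hBy0, hEy, hEyacc⟩ := hBy
    have hyne : y k ≠ 0 := by
      intro h; rw [h, hB0] at hBy0; exact lt_irrefl _ hBy0
    have hny : 0 < ‖y k‖ := norm_pos_iff.mpr hyne
    have hnrm1 : ‖x (k + 1)‖ = 1 := by
      rw [hxk k]; exact norm_smul_inv_norm (𝕜 := ℝ) hyne
    have hBx' : B (x (k + 1)) = ‖y k‖⁻¹ * B (y k) := by
      rw [hxk k]; exact hBhom _ (by positivity) _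
    have hTx' : T (x (k + 1)) = ‖y k‖⁻¹ * T (y k) := by
      rw [hxk k]; exact hThom _ (by positivity) _
    have hBxpos : 0 < B (x (k + 1)) := by
      rw [hBx']; positivity
    have hEx' : T (x (k + 1)) / B (x (k + 1)) = T (y k) / B (y k) := by
      rw [hBx', hTx', mul_div_mul_left _ _ (inv_ne_zero hny.ne')]
    exact ⟨hBl, key, hEl, hlb, htb, hnrm1, hBxpos,
      by rw [hEx']; exact hEy, fun h => by rw [hEx']; exact hEyacc h⟩
  -- the invariant
  have hQ : ∀ k, ‖x k‖ = 1 ∧ 0 < B (x k) ∧ T (x k) / B (x k) ≤ E0 := by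
    intro k
    induction k with
    | zero => exact ⟨hx0S, (hBnn (x 0)).lt_of_ne' hx0Ω, le_of_eq hE0def.symm⟩
    | succ m ih =>
      obtain ⟨h1, h2, h3⟩ := ih
      obtain ⟨hBl, key, hEl, hlb, htb, hnrm1, hBxpos, hEmono, hEacc⟩ := step m h1 h2 h3
      exact ⟨hnrm1, hBxpos, le_trans hEmono (le_trans hEl h3)⟩
  have hstep := fun k => step k (hQ k).1 (hQ k).2.1 (hQ k).2.2
  have hBl := fun k => (hstep k).1
  have key := fun k => (hstep k).2.1
  have hEl := fun k => (hstep k).2.2.1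
  have hlb := fun k => (hstep k).2.2.2.1
  have htb := fun k => (hstep k).2.2.2.2.1
  have hEmono := fun k => (hstep k).2.2.2.2.2.2.2.1
  have hEacc := fun k => (hstep k).2.2.2.2.2.2.2.2
  -- monotone convergence of E(x k)
  have hmono : ∀ k, T (x (k + 1)) / B (x (k + 1)) ≤ T (x k) / B (x k) :=
    fun k => le_trans (hEmono k) (hEl k)
  have hanti : Antitone (fun k => T (x k) / B (x k)) := antitone_nat_of_succ_le hmono
  have hbdd : BddBelow (Set.range fun k => T (x k) / B (x k)) :=
    ⟨0, by rintro _ ⟨k, rfl⟩; exact hEnn _⟩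
  have hlim : Filter.Tendsto (fun k => T (x k) / B (x k)) Filter.atTop
      (nhds (⨅ k, T (x k) / B (x k))) := tendsto_atTop_ciInf hanti hbdd
  have hlim' : Filter.Tendsto (fun k => T (x (k + 1)) / B (x (k + 1))) Filter.atTop
      (nhds (⨅ k, T (x k) / B (x k))) := by
    exact hlim.comp (Filter.tendsto_add_atTop_nat 1)
  have hg : Filter.Tendsto
      (fun k => T (x k) / B (x k) - T (x (k + 1)) / B (x (k + 1)))
      Filter.atTop (nhds 0) := by
    have := hlim.sub hlim'
    simpa using this
  -- the squared-distance estimate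
  set Bbar : ℝ := KB * Ml + 1 with hBbardef
  have hBbar : 0 < Bbar := by positivity
  set C : ℝ := 2 * lamHigh * Bbar with hCdef
  have hC0 : 0 ≤ C := by positivity
  clear_value Bbar C
  have hsqb : ∀ k, ‖l k - x k‖ ^ 2
      ≤ C * (T (x k) / B (x k) - T (x (k + 1)) / B (x (k + 1))) := by
    intro k
    have hlamk : 0 < lam k := lt_of_lt_of_le hlamLow (hlam k).1
    have hTl : T (l k) = (T (l k) / B (l k)) * B (l k) :=
      (div_mul_cancel₀ _ (hBl k).ne').symm
    have hBlBbar : B (l k) ≤ Bbar := by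
      have h8 : KB * ‖l k‖ ≤ KB * Ml := mul_le_mul_of_nonneg_left (hlb k) hKB0
      have := hKB (l k)
      rw [hBbardef]; linarith
    have h9 : 1 / (2 * lam k) * ‖l k - x k‖ ^ 2
        ≤ B (l k) * (T (x k) / B (x k) - T (l k) / B (l k)) := by
      nlinarith [key k, hTl]
    have h10 : B (l k) * (T (x k) / B (x k) - T (l k) / B (l k))
        ≤ Bbar * (T (x k) / B (x k) - T (x (k + 1)) / B (x (k + 1))) := by
      have ha : 0 ≤ T (x k) / B (x k) - T (l k) / B (l k) := by linarith [hEl k]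
      have hb : T (x k) / B (x k) - T (l k) / B (l k)
          ≤ T (x k) / B (x k) - T (x (k + 1)) / B (x (k + 1)) := by
        linarith [hEmono k]
      nlinarith [hBl k, hBnn (l k)]
    have h11 : ‖l k - x k‖ ^ 2 ≤ 2 * lam k *
        (Bbar * (T (x k) / B (x k) - T (x (k + 1)) / B (x (k + 1)))) := by
      have h12 : 1 / (2 * lam k) * ‖l k - x k‖ ^ 2
          ≤ Bbar * (T (x k) / B (x k) - T (x (k + 1)) / B (x (k + 1))) :=
        le_trans h9 h10
      have h13 : ‖l k - x k‖ ^ 2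
          = 2 * lam k * (1 / (2 * lam k) * ‖l k - x k‖ ^ 2) := by
        field_simp
      rw [h13]
      exact mul_le_mul_of_nonneg_left h12 (by positivity)
    have h14 : 0 ≤ Bbar * (T (x k) / B (x k) - T (x (k + 1)) / B (x (k + 1))) := by
      have ha : 0 ≤ T (x k) / B (x k) - T (x (k + 1)) / B (x (k + 1)) := by
        linarith [hmono k]
      positivity
    calc ‖l k - x k‖ ^ 2
        ≤ 2 * lam k * (Bbar * (T (x k) / B (x k) - T (x (k + 1)) / B (x (k + 1)))) := h11
      _ ≤ 2 * lamHigh * (Bbar * (T (x k) / B (x k) - T (x (k + 1)) / B (x (k + 1)))) := by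
          apply mul_le_mul_of_nonneg_right _ h14
          linarith [(hlam k).2]
      _ = C * (T (x k) / B (x k) - T (x (k + 1)) / B (x (k + 1))) := by
          rw [hCdef]; ring
  -- ‖l k - x k‖ → 0
  have hsq : Filter.Tendsto (fun k => ‖l k - x k‖ ^ 2) Filter.atTop (nhds 0) := by
    refine squeeze_zero (fun k => by positivity) hsqb ?_
    have := hg.const_mul C
    simpa using this
  have hlx : Filter.Tendsto (fun k => ‖l k - x k‖) Filter.atTop (nhds 0) := by
    have h20 := (Real.continuous_sqrt.tendsto 0).comp hsq
    rw [Real.sqrt_zero] at h20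
    exact h20.congr fun k => by
      simp [Function.comp, Real.sqrt_sq_eq_abs]
  -- finiteness of the accepted set
  set A : Set ℕ := {k : ℕ | T (t k) - (T (l k) / B (l k)) * B (t k) < -eps'} with hAdef
  have hAfin : A.Finite := by
    by_contra hinf
    have hinf' : A.Infinite := hinf
    have hdec : ∀ k, k ∈ A → T (x (k + 1)) / B (x (k + 1)) ≤ T (x k) / B (x k) - δ := by
      intro k hk
      have := hEacc k hk
      linarith [hEl k]
    have cum : ∀ m, T (x m) / B (x m)
        ≤ E0 - δ * ((Finset.range m).filter (· ∈ A)).card := by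
      intro m
      induction m with
      | zero => simp [hE0def]
      | succ p ih =>
        rw [Finset.range_add_one, Finset.filter_insert]
        by_cases hp : p ∈ A
        · rw [if_pos hp, Finset.card_insert_of_notMem (by simp)]
          have := hdec p hp
          push_cast
          linarith
        · rw [if_neg hp]
          linarith [hmono p]
      -- done
    set N : ℕ := ⌊E0 / δ⌋₊ + 1 with hNdef
    obtain ⟨sfin, hsub, hcard⟩ := hinf'.exists_subset_card_eq N
    set m0 : ℕ := sfin.sup id + 1 with hm0def
    have hsfin_sub : sfin ⊆ (Finset.range m0).filter (· ∈ A) := by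
      intro j hj
      rw [Finset.mem_filter, Finset.mem_range]
      refine ⟨?_, hsub hj⟩
      have := Finset.le_sup (f := id) hj
      simp only [id_eq] at this
      omega
    have hcardle : N ≤ ((Finset.range m0).filter (· ∈ A)).card := by
      rw [← hcard]; exact Finset.card_le_card hsfin_sub
    have h15 := cum m0
    have h16 : 0 ≤ T (x m0) / B (x m0) := hEnn _
    have h17 : δ * N ≤ δ * ((Finset.range m0).filter (· ∈ A)).card := by
      apply mul_le_mul_of_nonneg_left _ hδ.le
      exact_mod_cast hcardle
    have h18 : E0 / δ < (N : ℝ) := by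
      rw [hNdef]; push_cast; exact Nat.lt_floor_add_one _
    have h19 : E0 < δ * N := by
      rw [div_lt_iff₀ hδ] at h18
      linarith
    linarith
  refine ⟨⟨Ml, hlb⟩, ⟨Mt, htb⟩, hAfin, hlx, ?_⟩
  -- ‖x k - x (k+1)‖ → 0
  obtain ⟨N0, hN0⟩ := hAfin.bddAbove
  have hev : ∀ᶠ k in Filter.atTop, ‖x k - x (k + 1)‖ ≤ 2 * ‖l k - x k‖ := by
    filter_upwards [Filter.eventually_gt_atTop N0] with k hk
    have hkA : k ∉ A := fun hmem => absurd (hN0 hmem) (not_le.mpr hk)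
    have hyk : y k = l k := by
      rw [hy k,
        if_neg (show ¬(T (t k) - (T (l k) / B (l k)) * B (t k) < -eps') from hkA)]
    have hxk1 : x (k + 1) = ‖l k‖⁻¹ • l k := by rw [hxk k, hyk]
    have hlne : l k ≠ 0 := by
      intro h
      have hBlk := hBl k
      rw [h, hB0] at hBlk
      exact lt_irrefl _ hBlk
    have hr : 0 < ‖l k‖ := norm_pos_iff.mpr hlne
    have t1 : ‖x k - x (k + 1)‖ ≤ ‖x k - l k‖ + ‖l k - x (k + 1)‖ := by
      rw [← sub_add_sub_cancel (x k) (l k) (x (k + 1))]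
      exact norm_add_le _ _
    have t2 : ‖l k - x (k + 1)‖ = |‖l k‖ - 1| := by
      rw [hxk1]
      have : l k - ‖l k‖⁻¹ • l k = (1 - ‖l k‖⁻¹) • l k := by
        rw [sub_smul, one_smul]
      rw [this, norm_smul, Real.norm_eq_abs]
      rw [← abs_of_pos hr, ← abs_mul]
      congr 1
      field_simp
      rw [abs_of_pos hr]; ring
    have t3 : |‖l k‖ - 1| ≤ ‖l k - x k‖ := by
      have := abs_norm_sub_norm_le (l k) (x k)
      rwa [(hQ k).1] at this
    have t4 : ‖x k - l k‖ = ‖l k - x k‖ := norm_sub_rev _ _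
    linarith
  refine squeeze_zero' (Filter.Eventually.of_forall fun k => norm_nonneg _) hev ?_
  have := hlx.const_mul 2
  simpa using this
end
end

section
/- Suppose x* is a local minimizer of E on S ∩ Ω, and {x^k} ⊂ S ∩ Ω is any sequence with x^k → x*. Let λ_k satisfy 0 < λ_low ≤ λ_k ≤ λ_high < ∞, choose v^k ∈ ∂B(x^k), set l^k := prox_{λ_kT}(x^k + λ_k E(x^k)v^k) and z^k := l^k/‖l^k‖. Then l^k → x* and z^k → x* as k → ∞. -/
open scoped RealInnerProductSpace

noncomputable section

/-- auxiliary: from a quadratic inequality `r² ≤ a r + b` we get `r ≤ a + √b`. -/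
lemma quad_bound_aux {r a b : ℝ} (hr : 0 ≤ r) (ha : 0 ≤ a) (hb : 0 ≤ b)
    (h : r ^ 2 ≤ a * r + b) : r ≤ a + Real.sqrt b := by
  nlinarith [Real.sq_sqrt hb, Real.sqrt_nonneg b, mul_nonneg ha (Real.sqrt_nonneg b)]

set_option maxHeartbeats 1000000 in
open Filter Topology in
/-- If `x*` is a local minimizer of `E` on `S ∩ Ω` and `xᵏ → x*` with `xᵏ ∈ S ∩ Ω`,
then the proximal-subgradient points `lᵏ = prox_{λₖT}(xᵏ + λₖE(xᵏ)vᵏ)` with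
`vᵏ ∈ ∂B(xᵏ)` and their normalizations `zᵏ = lᵏ/‖lᵏ‖` also converge to `x*`. -/
theorem stmt12 {n : ℕ} (T B : EuclideanSpace ℝ (Fin n) → ℝ)
    (hTconv : ConvexOn ℝ Set.univ T) (hBconv : ConvexOn ℝ Set.univ B)
    (hThom : ∀ α : ℝ, 0 ≤ α → ∀ x, T (α • x) = α * T x) (hTnn : ∀ x, 0 ≤ T x)
    (hBhom : ∀ α : ℝ, 0 ≤ α → ∀ x, B (α • x) = α * B x) (hBnn : ∀ x, 0 ≤ B x)
    (hZero : ∀ x, B x = 0 → T x = 0 → x = 0) (hΩ : ∃ x, B x ≠ 0)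
    (xs : EuclideanSpace ℝ (Fin n)) (hxsS : ‖xs‖ = 1) (hxsΩ : B xs ≠ 0)
    (hloc : ∃ ε > 0, ∀ z, ‖z‖ = 1 → B z ≠ 0 → ‖z - xs‖ ≤ ε →
      T xs / B xs ≤ T z / B z)
    (x : ℕ → EuclideanSpace ℝ (Fin n))
    (hxS : ∀ k, ‖x k‖ = 1) (hxΩ : ∀ k, B (x k) ≠ 0)
    (hxconv : Filter.Tendsto x Filter.atTop (nhds xs))
    (lam : ℕ → ℝ) (lamLow lamHigh : ℝ) (hlamLow : 0 < lamLow)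
    (hlam : ∀ k, lamLow ≤ lam k ∧ lam k ≤ lamHigh)
    (v : ℕ → EuclideanSpace ℝ (Fin n)) (hv : ∀ k, v k ∈ subdiff B (x k))
    (l : ℕ → EuclideanSpace ℝ (Fin n))
    (hl : ∀ k, IsProx T (lam k) (x k + lam k • (T (x k) / B (x k)) • v k) (l k)) :
    Filter.Tendsto l Filter.atTop (nhds xs) ∧
      Filter.Tendsto (fun k => ‖l k‖⁻¹ • l k) Filter.atTop (nhds xs) := by
  classical
  obtain ⟨ε, hε, hlocal⟩ := hloc
  obtain ⟨Es, hEs⟩ : ∃ E : ℝ, E = T xs / B xs := ⟨_, rfl⟩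
  rw [← hEs] at hlocal
  have hBxs : 0 < B xs := (hBnn xs).lt_of_ne (Ne.symm hxsΩ)
  have hEsnn : 0 ≤ Es := hEs ▸ div_nonneg (hTnn xs) (hBnn xs)
  have hEsB : Es * B xs = T xs := by rw [hEs]; exact div_mul_cancel₀ _ hxsΩ
  have hB0 : B 0 = 0 := by
    have h := hBhom 0 le_rfl 0
    simpa using h
  have hBcont : Continuous B := by
    rw [← continuousOn_univ]
    exact hBconv.continuousOn isOpen_univ
  have hTcont : Continuous T := by
    rw [← continuousOn_univ]
    exact hTconv.continuousOn isOpen_univ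
  -- global linear bound on B
  obtain ⟨M, hM0, hMle⟩ : ∃ M, 0 ≤ M ∧ ∀ z, B z ≤ M * ‖z‖ := by
    obtain ⟨z₀, hz₀, hz₀max⟩ :=
      (isCompact_closedBall (0 : EuclideanSpace ℝ (Fin n)) 1).exists_isMaxOn
        ⟨0, Metric.mem_closedBall_self zero_le_one⟩ hBcont.continuousOn
    refine ⟨max (B z₀) 0, le_max_right _ _, fun z => ?_⟩
    rcases eq_or_ne z 0 with rfl | hz
    · simp [hB0]
    · have hzn : 0 < ‖z‖ := norm_pos_iff.mpr hz
      have hu : ‖z‖⁻¹ • z ∈ Metric.closedBall (0 : EuclideanSpace ℝ (Fin n)) 1 := by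
        simp [Metric.mem_closedBall, dist_zero_right, norm_smul,
          abs_of_nonneg (inv_nonneg.mpr hzn.le), inv_mul_cancel₀ hzn.ne']
      have h1 : B z = ‖z‖ * B (‖z‖⁻¹ • z) := by
        rw [← hBhom ‖z‖ hzn.le, smul_inv_smul₀ hzn.ne']
      rw [h1, mul_comm]
      exact mul_le_mul_of_nonneg_right (le_trans (hz₀max hu) (le_max_left _ _)) hzn.le
  obtain ⟨Lc, hLc⟩ : ∃ L : ℝ, L = 1 + 2 * M := ⟨_, rfl⟩
  have hLc0 : 0 ≤ Lc := by rw [hLc]; linarith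
  have hvb : ∀ k, ‖v k‖ ≤ Lc := by
    intro k
    have h1 : B (x k) + ‖v k‖ ^ 2 ≤ B (x k + v k) := by
      have h := hv k (x k + v k)
      rwa [add_sub_cancel_left, real_inner_self_eq_norm_sq] at h
    have h2 : B (x k + v k) ≤ M * (1 + ‖v k‖) := by
      calc B (x k + v k) ≤ M * ‖x k + v k‖ := hMle _
        _ ≤ M * (‖x k‖ + ‖v k‖) := mul_le_mul_of_nonneg_left (norm_add_le _ _) hM0
        _ = M * (1 + ‖v k‖) := by rw [hxS k]
    have h3 : ‖v k‖ ^ 2 ≤ M * (1 + ‖v k‖) := le_trans (by linarith [hBnn (x k)]) h2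
    rw [hLc]
    nlinarith [norm_nonneg (v k), hM0]
  obtain ⟨ρ, hρdef⟩ : ∃ r : ℝ, r = ε / 2 := ⟨_, rfl⟩
  have hρ : 0 < ρ := by rw [hρdef]; linarith
  -- local eigen-inequality `Es * B y ≤ T y` near `xs`
  have hD : ∀ y, ‖y - xs‖ ≤ ρ → Es * B y ≤ T y := by
    intro y hy
    rcases eq_or_lt_of_le (hBnn y) with hBy | hBy
    · rw [← hBy, mul_zero]; exact hTnn y
    · have hy0 : y ≠ 0 := by
        intro h; rw [h, hB0] at hBy; exact lt_irrefl 0 hBy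
      have hyn : 0 < ‖y‖ := norm_pos_iff.mpr hy0
      have hzS : ‖‖y‖⁻¹ • y‖ = 1 := by
        rw [norm_smul, Real.norm_eq_abs, abs_of_nonneg (inv_nonneg.mpr hyn.le),
          inv_mul_cancel₀ hyn.ne']
      have hyz : ‖y‖ • (‖y‖⁻¹ • y) = y := smul_inv_smul₀ hyn.ne' y
      have hBz : B (‖y‖⁻¹ • y) = ‖y‖⁻¹ * B y := hBhom _ (inv_nonneg.mpr hyn.le) y
      have hBzpos : 0 < B (‖y‖⁻¹ • y) := by
        rw [hBz]; exact mul_pos (inv_pos.mpr hyn) hBy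
      have hz1 : ‖‖y‖⁻¹ • y - y‖ = |1 - ‖y‖| := by
        have hzy : ‖y‖⁻¹ • y - y = (‖y‖⁻¹ - 1) • y := by rw [sub_smul, one_smul]
        calc ‖‖y‖⁻¹ • y - y‖ = |‖y‖⁻¹ - 1| * ‖y‖ := by rw [hzy, norm_smul, Real.norm_eq_abs]
          _ = |(‖y‖⁻¹ - 1) * ‖y‖| := by rw [abs_mul, abs_of_nonneg hyn.le]
          _ = |1 - ‖y‖| := by rw [sub_mul, inv_mul_cancel₀ hyn.ne', one_mul]
      have hz2 : |1 - ‖y‖| ≤ ρ := by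
        have := abs_norm_sub_norm_le xs y
        rw [hxsS] at this
        calc |1 - ‖y‖| ≤ ‖xs - y‖ := this
          _ = ‖y - xs‖ := norm_sub_rev _ _
          _ ≤ ρ := hy
      have hzxs : ‖‖y‖⁻¹ • y - xs‖ ≤ ε := by
        have htri : ‖‖y‖⁻¹ • y - xs‖ ≤ ‖‖y‖⁻¹ • y - y‖ + ‖y - xs‖ := by
          have := dist_triangle (‖y‖⁻¹ • y) y xs
          simpa [dist_eq_norm] using this
        rw [hz1] at htri
        rw [hρdef] at hz2 hy
        linarith
      have hEle : Es ≤ T (‖y‖⁻¹ • y) / B (‖y‖⁻¹ • y) :=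
        hlocal _ hzS hBzpos.ne' hzxs
      have h2 : Es * B (‖y‖⁻¹ • y) ≤ T (‖y‖⁻¹ • y) := (le_div_iff₀ hBzpos).mp hEle
      have h3 : T y = ‖y‖ * T (‖y‖⁻¹ • y) := by rw [← hThom _ hyn.le, hyz]
      have h4 : B y = ‖y‖ * B (‖y‖⁻¹ • y) := by rw [← hBhom _ hyn.le, hyz]
      rw [h3, h4]
      calc Es * (‖y‖ * B (‖y‖⁻¹ • y)) = ‖y‖ * (Es * B (‖y‖⁻¹ • y)) := by ring
        _ ≤ ‖y‖ * T (‖y‖⁻¹ • y) := mul_le_mul_of_nonneg_left h2 hyn.le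
  -- approximate subgradient inequality for T at xs, locally
  have hFloc : ∀ k y, ‖y - xs‖ ≤ ρ →
      T xs + Es * ⟪v k, y - xs⟫
        - Es * (|B (x k) - B xs| + Lc * ‖x k - xs‖) ≤ T y := by
    intro k y hy
    have hsub := hv k y
    have hsplit : ⟪v k, y - x k⟫ = ⟪v k, y - xs⟫ + ⟪v k, xs - x k⟫ := by
      rw [← inner_add_right]
      congr 1
      abel
    have hip : |⟪v k, xs - x k⟫| ≤ Lc * ‖x k - xs‖ := by
      calc |⟪v k, xs - x k⟫| ≤ ‖v k‖ * ‖xs - x k‖ := abs_real_inner_le_norm _ _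
        _ ≤ Lc * ‖x k - xs‖ := by
            rw [norm_sub_rev]
            exact mul_le_mul_of_nonneg_right (hvb k) (norm_nonneg _)
    have h1 : B xs - (|B (x k) - B xs| + Lc * ‖x k - xs‖) + ⟪v k, y - xs⟫ ≤ B y := by
      have ha : -|B (x k) - B xs| ≤ B (x k) - B xs := neg_abs_le _
      have hb : -(Lc * ‖x k - xs‖) ≤ ⟪v k, xs - x k⟫ := neg_le_of_abs_le hip
      rw [hsplit] at hsub
      linarith
    have h2 := hD y hy
    have h3 := mul_le_mul_of_nonneg_left h1 hEsnn
    have h4 : T xs + Es * ⟪v k, y - xs⟫ - Es * (|B (x k) - B xs| + Lc * ‖x k - xs‖)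
        = Es * (B xs - (|B (x k) - B xs| + Lc * ‖x k - xs‖) + ⟪v k, y - xs⟫) := by
      rw [← hEsB]; ring
    rw [h4]
    exact le_trans h3 h2
  -- globalized approximate subgradient inequality at the points l k
  have hF : ∀ k, T xs + Es * ⟪l k - xs, v k⟫
      - Es * (|B (x k) - B xs| + Lc * ‖x k - xs‖) * (1 + ‖l k - xs‖ / ρ) ≤ T (l k) := by
    intro k
    have hη0 : 0 ≤ |B (x k) - B xs| + Lc * ‖x k - xs‖ :=
      add_nonneg (abs_nonneg _) (mul_nonneg hLc0 (norm_nonneg _))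
    have hcomm : ⟪v k, l k - xs⟫ = ⟪l k - xs, v k⟫ := real_inner_comm _ _
    rcases le_or_gt ‖l k - xs‖ ρ with hr | hr
    · have h := hFloc k (l k) hr
      rw [hcomm] at h
      have hr' : 0 ≤ ‖l k - xs‖ / ρ := div_nonneg (norm_nonneg _) hρ.le
      nlinarith [mul_nonneg (mul_nonneg hEsnn hη0) hr']
    · have hrpos : 0 < ‖l k - xs‖ := lt_trans hρ hr
      obtain ⟨s, hs⟩ : ∃ s : ℝ, s = ρ / ‖l k - xs‖ := ⟨_, rfl⟩
      have hs0 : 0 < s := by rw [hs]; exact div_pos hρ hrpos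
      have hs1 : s < 1 := by rw [hs]; exact (div_lt_one hrpos).mpr hr
      have hy'c : xs + s • (l k - xs) = (1 - s) • xs + s • l k := by
        rw [smul_sub, sub_smul, one_smul]
        abel
      have hy'n : ‖xs + s • (l k - xs) - xs‖ = ρ := by
        rw [add_sub_cancel_left, norm_smul, Real.norm_eq_abs, abs_of_pos hs0, hs]
        field_simp
      have hcv := hTconv.2 (Set.mem_univ xs) (Set.mem_univ (l k))
        (by linarith : (0:ℝ) ≤ 1 - s) hs0.le (by ring)
      rw [← hy'c] at hcv
      simp only [smul_eq_mul] at hcv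
      have hlocy := hFloc k (xs + s • (l k - xs)) (le_of_eq hy'n)
      have hipy : ⟪v k, xs + s • (l k - xs) - xs⟫ = s * ⟪l k - xs, v k⟫ := by
        rw [add_sub_cancel_left, real_inner_smul_right, hcomm]
      rw [hipy] at hlocy
      have h5 : s * (T xs + Es * ⟪l k - xs, v k⟫ - T (l k))
          ≤ Es * (|B (x k) - B xs| + Lc * ‖x k - xs‖) := by nlinarith [hcv, hlocy]
      have h6 : T xs + Es * ⟪l k - xs, v k⟫ - T (l k)
          ≤ Es * (|B (x k) - B xs| + Lc * ‖x k - xs‖) * (‖l k - xs‖ / ρ) := by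
        have h6' : T xs + Es * ⟪l k - xs, v k⟫ - T (l k)
            ≤ Es * (|B (x k) - B xs| + Lc * ‖x k - xs‖) / s :=
          (le_div_iff₀ hs0).mpr (by linarith)
        calc T xs + Es * ⟪l k - xs, v k⟫ - T (l k)
            ≤ Es * (|B (x k) - B xs| + Lc * ‖x k - xs‖) / s := h6'
          _ = Es * (|B (x k) - B xs| + Lc * ‖x k - xs‖) * (‖l k - xs‖ / ρ) := by
              rw [hs]
              field_simp
      have h7 : 0 ≤ Es * (|B (x k) - B xs| + Lc * ‖x k - xs‖) := mul_nonneg hEsnn hη0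
      have hgoal : Es * (|B (x k) - B xs| + Lc * ‖x k - xs‖) * (1 + ‖l k - xs‖ / ρ)
          = Es * (|B (x k) - B xs| + Lc * ‖x k - xs‖)
            + Es * (|B (x k) - B xs| + Lc * ‖x k - xs‖) * (‖l k - xs‖ / ρ) := by ring
      linarith [h6, h7, hgoal]
  have hlamHigh : 0 < lamHigh := lt_of_lt_of_le hlamLow (le_trans (hlam 0).1 (hlam 0).2)
  -- the key quantitative bound
  have key : ∀ k, ‖l k - xs‖ ≤
      (2 * lamHigh * (|T (x k) / B (x k) - Es| * Lc
          + Es * (|B (x k) - B xs| + Lc * ‖x k - xs‖) / ρ) + 2 * ‖x k - xs‖)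
        + Real.sqrt (2 * lamHigh * (Es * (|B (x k) - B xs| + Lc * ‖x k - xs‖))) := by
    intro k
    have hlmlow := (hlam k).1
    have hlmhigh := (hlam k).2
    have hlm : 0 < lam k := lt_of_lt_of_le hlamLow hlmlow
    have hη0 : 0 ≤ |B (x k) - B xs| + Lc * ‖x k - xs‖ :=
      add_nonneg (abs_nonneg _) (mul_nonneg hLc0 (norm_nonneg _))
    have he0 : 0 ≤ |T (x k) / B (x k) - Es| := abs_nonneg _
    have hr0 : 0 ≤ ‖l k - xs‖ := norm_nonneg _
    have hd0 : 0 ≤ ‖x k - xs‖ := norm_nonneg _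
    have hprox := hl k xs
    have hsm : lam k • (T (x k) / B (x k)) • v k = (lam k * (T (x k) / B (x k))) • v k :=
      smul_smul _ _ _
    have hexp : ∀ w : EuclideanSpace ℝ (Fin n),
        ‖w - (x k + lam k • (T (x k) / B (x k)) • v k)‖ ^ 2
          = ‖w - x k‖ ^ 2 - 2 * (lam k * (T (x k) / B (x k))) * ⟪w - x k, v k⟫
            + (lam k * (T (x k) / B (x k))) ^ 2 * ‖v k‖ ^ 2 := by
      intro w
      rw [hsm, sub_add_eq_sub_sub, norm_sub_sq_real, real_inner_smul_right, norm_smul,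
        Real.norm_eq_abs, mul_pow, sq_abs]
      ring
    rw [hexp (l k), hexp xs] at hprox
    -- turn the prox inequality into a quadratic inequality
    have key0 : ∀ A Bq : ℝ, T (l k) + 1 / (2 * lam k) * A ≤ T xs + 1 / (2 * lam k) * Bq →
        A - Bq ≤ 2 * lam k * (T xs - T (l k)) := by
      intro A Bq h
      have h2l : (0:ℝ) < 2 * lam k := by linarith
      have h1 : (A - Bq) / (2 * lam k) ≤ T xs - T (l k) := by
        have hrr : (A - Bq) / (2 * lam k) = 1 / (2 * lam k) * A - 1 / (2 * lam k) * Bq := by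
          ring
        rw [hrr]
        linarith
      have h2 := (div_le_iff₀ h2l).mp h1
      linarith
    have hq := key0 _ _ hprox
    have hnorm1 : ‖l k - x k‖ ^ 2
        = ‖l k - xs‖ ^ 2 - 2 * ⟪l k - xs, x k - xs⟫ + ‖x k - xs‖ ^ 2 := by
      have h1 : l k - x k = (l k - xs) - (x k - xs) := by abel
      rw [h1, norm_sub_sq_real]
    have hnorm2 : ‖xs - x k‖ = ‖x k - xs‖ := norm_sub_rev _ _
    rw [hnorm1, hnorm2] at hq
    have hips : lam k * (T (x k) / B (x k)) * ⟪l k - x k, v k⟫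
          - lam k * (T (x k) / B (x k)) * ⟪xs - x k, v k⟫
        = lam k * (T (x k) / B (x k)) * ⟪l k - xs, v k⟫ := by
      rw [← mul_sub, ← inner_sub_left]
      congr 2
      abel
    have hip1 : |⟪l k - xs, v k⟫| ≤ ‖l k - xs‖ * Lc := by
      calc |⟪l k - xs, v k⟫| ≤ ‖l k - xs‖ * ‖v k‖ := abs_real_inner_le_norm _ _
        _ ≤ ‖l k - xs‖ * Lc := mul_le_mul_of_nonneg_left (hvb k) hr0
    have hip2 : ⟪l k - xs, x k - xs⟫ ≤ ‖l k - xs‖ * ‖x k - xs‖ := real_inner_le_norm _ _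
    -- bound the cross term
    have t1 : (T (x k) / B (x k) - Es) * ⟪l k - xs, v k⟫
        ≤ |T (x k) / B (x k) - Es| * (‖l k - xs‖ * Lc) := by
      calc (T (x k) / B (x k) - Es) * ⟪l k - xs, v k⟫
          ≤ |(T (x k) / B (x k) - Es) * ⟪l k - xs, v k⟫| := le_abs_self _
        _ = |T (x k) / B (x k) - Es| * |⟪l k - xs, v k⟫| := abs_mul _ _
        _ ≤ |T (x k) / B (x k) - Es| * (‖l k - xs‖ * Lc) :=
            mul_le_mul_of_nonneg_left hip1 he0
    have t2 : 2 * lam k * ((T (x k) / B (x k) - Es) * ⟪l k - xs, v k⟫)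
        ≤ 2 * lamHigh * (|T (x k) / B (x k) - Es| * (‖l k - xs‖ * Lc)) := by
      calc 2 * lam k * ((T (x k) / B (x k) - Es) * ⟪l k - xs, v k⟫)
          ≤ 2 * lam k * (|T (x k) / B (x k) - Es| * (‖l k - xs‖ * Lc)) :=
            mul_le_mul_of_nonneg_left t1 (by linarith)
        _ ≤ 2 * lamHigh * (|T (x k) / B (x k) - Es| * (‖l k - xs‖ * Lc)) :=
            mul_le_mul_of_nonneg_right (by linarith)
              (mul_nonneg he0 (mul_nonneg hr0 hLc0))
    have hW0 : 0 ≤ 1 + ‖l k - xs‖ / ρ := by positivity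
    have t3 : 2 * lam k * (Es * (|B (x k) - B xs| + Lc * ‖x k - xs‖) * (1 + ‖l k - xs‖ / ρ))
        ≤ 2 * lamHigh * (Es * (|B (x k) - B xs| + Lc * ‖x k - xs‖) * (1 + ‖l k - xs‖ / ρ)) :=
      mul_le_mul_of_nonneg_right (by linarith)
        (mul_nonneg (mul_nonneg hEsnn hη0) hW0)
    have t5 : 2 * lam k * (T xs - T (l k))
        ≤ 2 * lam k * (Es * (|B (x k) - B xs| + Lc * ‖x k - xs‖) * (1 + ‖l k - xs‖ / ρ)
            - Es * ⟪l k - xs, v k⟫) := by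
      have h := hF k
      have ht5' : T xs - T (l k)
          ≤ Es * (|B (x k) - B xs| + Lc * ‖x k - xs‖) * (1 + ‖l k - xs‖ / ρ)
            - Es * ⟪l k - xs, v k⟫ := by linarith
      have h2lk : (0:ℝ) ≤ 2 * lam k := by linarith
      exact mul_le_mul_of_nonneg_left ht5' h2lk
    have hquad : ‖l k - xs‖ ^ 2
        ≤ (2 * lamHigh * (|T (x k) / B (x k) - Es| * Lc
              + Es * (|B (x k) - B xs| + Lc * ‖x k - xs‖) / ρ) + 2 * ‖x k - xs‖)
              * ‖l k - xs‖
          + 2 * lamHigh * (Es * (|B (x k) - B xs| + Lc * ‖x k - xs‖)) := by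
      have expand : (2 * lamHigh * (|T (x k) / B (x k) - Es| * Lc
              + Es * (|B (x k) - B xs| + Lc * ‖x k - xs‖) / ρ) + 2 * ‖x k - xs‖)
              * ‖l k - xs‖
          + 2 * lamHigh * (Es * (|B (x k) - B xs| + Lc * ‖x k - xs‖))
          = 2 * lamHigh * (|T (x k) / B (x k) - Es| * (‖l k - xs‖ * Lc))
            + 2 * lamHigh * (Es * (|B (x k) - B xs| + Lc * ‖x k - xs‖)
                * (1 + ‖l k - xs‖ / ρ))
            + 2 * (‖l k - xs‖ * ‖x k - xs‖) := by
        field_simp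
        ring
      rw [expand]
      linarith [hq, hips, t2, t3, t5, hip2]
    have ha0 : 0 ≤ 2 * lamHigh * (|T (x k) / B (x k) - Es| * Lc
        + Es * (|B (x k) - B xs| + Lc * ‖x k - xs‖) / ρ) + 2 * ‖x k - xs‖ := by
      have : 0 ≤ Es * (|B (x k) - B xs| + Lc * ‖x k - xs‖) / ρ :=
        div_nonneg (mul_nonneg hEsnn hη0) hρ.le
      have h2 : 0 ≤ |T (x k) / B (x k) - Es| * Lc := mul_nonneg he0 hLc0
      nlinarith
    have hb0 : 0 ≤ 2 * lamHigh * (Es * (|B (x k) - B xs| + Lc * ‖x k - xs‖)) := by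
      have := mul_nonneg hEsnn hη0
      nlinarith
    exact quad_bound_aux hr0 ha0 hb0 hquad
  -- limits
  have hδ0 : Filter.Tendsto (fun k => ‖x k - xs‖) Filter.atTop (nhds 0) :=
    tendsto_iff_norm_sub_tendsto_zero.mp hxconv
  have hBt : Filter.Tendsto (fun k => |B (x k) - B xs|) Filter.atTop (nhds 0) := by
    have h1 : Filter.Tendsto (fun k => B (x k)) Filter.atTop (nhds (B xs)) :=
      (hBcont.tendsto xs).comp hxconv
    have h2 := (h1.sub_const (B xs)).abs
    rwa [show |B xs - B xs| = (0:ℝ) by simp] at h2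
  have hηt : Filter.Tendsto (fun k => |B (x k) - B xs| + Lc * ‖x k - xs‖)
      Filter.atTop (nhds 0) := by
    have h := hBt.add (hδ0.const_mul Lc)
    rwa [show (0:ℝ) + Lc * 0 = 0 by ring] at h
  have het : Filter.Tendsto (fun k => |T (x k) / B (x k) - Es|) Filter.atTop (nhds 0) := by
    have h1 : Filter.Tendsto (fun k => T (x k)) Filter.atTop (nhds (T xs)) :=
      (hTcont.tendsto xs).comp hxconv
    have h2 : Filter.Tendsto (fun k => B (x k)) Filter.atTop (nhds (B xs)) :=
      (hBcont.tendsto xs).comp hxconv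
    have h3 := h1.div h2 hxsΩ
    have h4 := (h3.sub_const Es).abs
    have h5 : |T xs / B xs - Es| = 0 := by rw [← hEs, sub_self, abs_zero]
    rwa [h5] at h4
  have hct : Filter.Tendsto (fun k =>
      (2 * lamHigh * (|T (x k) / B (x k) - Es| * Lc
          + Es * (|B (x k) - B xs| + Lc * ‖x k - xs‖) / ρ) + 2 * ‖x k - xs‖)
        + Real.sqrt (2 * lamHigh * (Es * (|B (x k) - B xs| + Lc * ‖x k - xs‖))))
      Filter.atTop (nhds 0) := by
    have h1 := (((het.mul_const Lc).add ((hηt.const_mul Es).div_const ρ)).const_mul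
      (2 * lamHigh)).add (hδ0.const_mul 2)
    have h2 := ((hηt.const_mul Es).const_mul (2 * lamHigh)).sqrt
    have h3 := h1.add h2
    have h4 : (2 * lamHigh * ((0:ℝ) * Lc + Es * 0 / ρ) + 2 * 0)
        + Real.sqrt (2 * lamHigh * (Es * 0)) = 0 := by
      simp
    rw [h4] at h3
    exact h3
  have hl1 : Filter.Tendsto l Filter.atTop (nhds xs) := by
    rw [tendsto_iff_norm_sub_tendsto_zero]
    exact squeeze_zero (fun k => norm_nonneg _) key hct
  refine ⟨hl1, ?_⟩
  have hn : Filter.Tendsto (fun k => ‖l k‖) Filter.atTop (nhds 1) := by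
    have h := hl1.norm
    rwa [hxsS] at h
  have hninv : Filter.Tendsto (fun k => ‖l k‖⁻¹) Filter.atTop (nhds 1) := by
    have h := hn.inv₀ one_ne_zero
    simpa using h
  have h := hninv.smul hl1
  simpa using h
end
end

section
/- Let T, B : ℝᵐ → ℝ be convex, with T positively homogeneous (T(αx) = αT(x) ≥ 0 for all α ≥ 0) and B absolutely homogeneous (B(αx) = |α|B(x) ≥ 0 for all α ∈ ℝ), and assume B(x) > 0 for all x ≠ 0. If x* is a local minimizer of T over the set {x ∈ ℝᵐ : B(x) = 1}, then x* is a local minimizer of the quotient x ↦ T(x)/B(x) over ℝᵐ \ {0}. -/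
noncomputable section

/-- If `x*` is a local minimizer of `T` over `{x : B(x) = 1}`, where `T` is convex and
positively homogeneous and `B` is convex, absolutely homogeneous and positive away from
`0`, then `x*` is a local minimizer of the quotient `x ↦ T(x)/B(x)` over `ℝᵐ \ {0}`. -/
theorem stmt13 {m : ℕ} (T B : EuclideanSpace ℝ (Fin m) → ℝ)
    (hTconv : ConvexOn ℝ Set.univ T) (hBconv : ConvexOn ℝ Set.univ B)
    (hThom : ∀ α : ℝ, 0 ≤ α → ∀ x, T (α • x) = α * T x) (hTnn : ∀ x, 0 ≤ T x)
    (hBhom : ∀ α : ℝ, ∀ x, B (α • x) = |α| * B x) (hBnn : ∀ x, 0 ≤ B x)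
    (hBpos : ∀ x : EuclideanSpace ℝ (Fin m), x ≠ 0 → 0 < B x)
    (xs : EuclideanSpace ℝ (Fin m)) (hxs : B xs = 1)
    (hloc : ∃ δ > 0, ∀ x, B x = 1 → ‖x - xs‖ < δ → T xs ≤ T x) :
    ∃ δ > 0, ∀ x : EuclideanSpace ℝ (Fin m), x ≠ 0 → ‖x - xs‖ < δ →
      T xs / B xs ≤ T x / B x := by
  obtain ⟨δ₀, hδ₀, hmin⟩ := hloc
  have hBcont : Continuous B := by
    rw [← continuousOn_univ]
    exact hBconv.continuousOn isOpen_univ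
  set εB : ℝ := min (1/2) (δ₀ / (4 * (‖xs‖ + 1))) with hεB
  have hεBpos : 0 < εB := by
    apply lt_min (by norm_num)
    positivity
  obtain ⟨δ₁, hδ₁pos, hδ₁⟩ := Metric.continuousAt_iff.mp hBcont.continuousAt (ε := εB) hεBpos
  refine ⟨min δ₁ (δ₀ / 4), lt_min hδ₁pos (by positivity), fun x hx hxd => ?_⟩
  have hBx : 0 < B x := hBpos x hx
  have hdist : dist x xs < δ₁ := lt_of_lt_of_le hxd (min_le_left _ _)
  have hBclose : |B x - 1| < εB := by
    have := hδ₁ hdist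
    rwa [Real.dist_eq, hxs] at this
  have hBhalf : (1:ℝ)/2 < B x := by
    have h1 : |B x - 1| < 1/2 := lt_of_lt_of_le hBclose (min_le_left _ _)
    have := abs_lt.mp h1
    linarith [this.1]
  set y := (B x)⁻¹ • x with hy
  have hBy : B y = 1 := by
    rw [hy, hBhom, abs_of_pos (inv_pos.mpr hBx), inv_mul_cancel₀ (ne_of_gt hBx)]
  have hynear : ‖y - xs‖ < δ₀ := by
    have h1 : y - xs = (B x)⁻¹ • (x - (B x) • xs) := by
      rw [smul_sub, smul_smul, inv_mul_cancel₀ (ne_of_gt hBx), one_smul, hy]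
    have h2 : x - (B x) • xs = (x - xs) + (1 - B x) • xs := by
      rw [sub_smul, one_smul]; abel
    have h3 : ‖y - xs‖ ≤ (B x)⁻¹ * (‖x - xs‖ + |1 - B x| * ‖xs‖) := by
      rw [h1, norm_smul, Real.norm_eq_abs, abs_of_pos (inv_pos.mpr hBx)]
      apply mul_le_mul_of_nonneg_left _ (le_of_lt (inv_pos.mpr hBx))
      rw [h2]
      calc ‖(x - xs) + (1 - B x) • xs‖ ≤ ‖x - xs‖ + ‖(1 - B x) • xs‖ := norm_add_le _ _
        _ = ‖x - xs‖ + |1 - B x| * ‖xs‖ := by rw [norm_smul, Real.norm_eq_abs]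
    have hinv : (B x)⁻¹ < 2 := by
      rw [inv_lt_comm₀ hBx (by norm_num)]
      linarith
    have hxd' : ‖x - xs‖ < δ₀ / 4 := lt_of_lt_of_le hxd (min_le_right _ _)
    have habs : |1 - B x| * ‖xs‖ < δ₀ / 4 := by
      have h4 : |1 - B x| < δ₀ / (4 * (‖xs‖ + 1)) := by
        rw [abs_sub_comm]; exact lt_of_lt_of_le hBclose (min_le_right _ _)
      calc |1 - B x| * ‖xs‖ ≤ |1 - B x| * (‖xs‖ + 1) := by
            gcongr; linarith
        _ < (δ₀ / (4 * (‖xs‖ + 1))) * (‖xs‖ + 1) :=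
            mul_lt_mul_of_pos_right h4 (by positivity)
        _ = δ₀ / 4 := by field_simp
    calc ‖y - xs‖ ≤ (B x)⁻¹ * (‖x - xs‖ + |1 - B x| * ‖xs‖) := h3
      _ < 2 * (δ₀ / 4 + δ₀ / 4) :=
          mul_lt_mul'' hinv (add_lt_add hxd' habs) (by positivity) (by positivity)
      _ = δ₀ := by ring
  have hTy : T y = (B x)⁻¹ * T x := hThom _ (le_of_lt (inv_pos.mpr hBx)) x
  have := hmin y hBy hynear
  rw [hTy] at this
  rw [hxs, div_one, div_eq_inv_mul]
  exact this
end
end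

section
/- Let l ∈ Ω, ρ > 0, w ∈ ∂B(0), and set t := prox_{(1/ρ)T}((E(l)/ρ)w). Then T(t) − E(l)B(t) ≤ −ρ‖t‖²; in particular, if B(t) ≠ 0 then E(t) ≤ E(l) − ρ‖t‖²/B(t). -/
open scoped RealInnerProductSpace

noncomputable section

/-- One-step DCA estimate: for `l ∈ Ω`, `ρ > 0`, `w ∈ ∂B(0)` and
`t = prox_{(1/ρ)T}((E(l)/ρ)w)`, one has `T(t) − E(l)B(t) ≤ −ρ‖t‖²`; in particular, if
`B(t) ≠ 0` then `E(t) ≤ E(l) − ρ‖t‖²/B(t)`. -/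
theorem stmt16 {n : ℕ} (T B : EuclideanSpace ℝ (Fin n) → ℝ)
    (hTconv : ConvexOn ℝ Set.univ T) (hBconv : ConvexOn ℝ Set.univ B)
    (hThom : ∀ α : ℝ, 0 ≤ α → ∀ x, T (α • x) = α * T x) (hTnn : ∀ x, 0 ≤ T x)
    (hBhom : ∀ α : ℝ, 0 ≤ α → ∀ x, B (α • x) = α * B x) (hBnn : ∀ x, 0 ≤ B x)
    (hZero : ∀ x, B x = 0 → T x = 0 → x = 0) (hΩ : ∃ x, B x ≠ 0)
    (l : EuclideanSpace ℝ (Fin n)) (hlΩ : B l ≠ 0)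
    (rho : ℝ) (hrho : 0 < rho)
    (w : EuclideanSpace ℝ (Fin n)) (hw : w ∈ subdiff B 0)
    (t : EuclideanSpace ℝ (Fin n))
    (ht : IsProx T (1 / rho) ((T l / B l / rho) • w) t) :
    T t - (T l / B l) * B t ≤ -(rho * ‖t‖ ^ 2) ∧
      (B t ≠ 0 → T t / B t ≤ T l / B l - rho * ‖t‖ ^ 2 / B t) := by
  set E := T l / B l with hE
  set x := (T l / B l / rho) • w with hx
  have hBl : 0 < B l := lt_of_le_of_ne (hBnn l) (Ne.symm hlΩ)
  have hEnn : 0 ≤ E := div_nonneg (hTnn l) hBl.le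
  have hB0 : B 0 = 0 := by
    have := hBhom 0 le_rfl 0; simpa using this
  have hwt : ⟪w, t⟫ ≤ B t := by
    have := hw t; simpa [subdiff, hB0] using this
  have htx : rho * ⟪t, x⟫ = E * ⟪w, t⟫ := by
    rw [hx, real_inner_smul_right, real_inner_comm, hE]
    field_simp
  -- key inequality
  have key' : T t + rho * ‖t‖ ^ 2 ≤ rho * ⟪t, x⟫ := by
    have hδ : ∀ δ : ℝ, 0 < δ → δ ≤ 1 →
        T t + rho * ‖t‖ ^ 2 - rho * ⟪t, x⟫ ≤ rho / 2 * δ * ‖t‖ ^ 2 := by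
      intro δ hδ0 hδ1
      have h := ht ((1 - δ) • t)
      have hhom := hThom (1 - δ) (by linarith) t
      have hinv : (1 : ℝ) / (2 * (1 / rho)) = rho / 2 := by field_simp
      have hn1 : ‖t - x‖ ^ 2 = ‖t‖ ^ 2 - 2 * ⟪t, x⟫ + ‖x‖ ^ 2 := norm_sub_sq_real t x
      have hn2 : ‖(1 - δ) • t - x‖ ^ 2
          = (1 - δ) ^ 2 * ‖t‖ ^ 2 - 2 * ((1 - δ) * ⟪t, x⟫) + ‖x‖ ^ 2 := by
        rw [norm_sub_sq_real, norm_smul, real_inner_smul_left,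
          Real.norm_eq_abs, abs_of_nonneg (by linarith : (0:ℝ) ≤ 1 - δ)]
        ring
      rw [hinv, hhom, hn1, hn2] at h
      have h2 : δ * (T t + rho * ‖t‖ ^ 2 - rho * ⟪t, x⟫ - rho / 2 * δ * ‖t‖ ^ 2) ≤ δ * 0 := by
        nlinarith [h]
      have := le_of_mul_le_mul_left h2 hδ0
      linarith
    apply le_of_forall_pos_le_add
    intro ε hε
    set D := rho / 2 * ‖t‖ ^ 2 + 1 with hD
    have hDpos : 0 < D := by positivity
    set δ := min 1 (ε / D) with hδdef
    have hδ0 : 0 < δ := lt_min one_pos (div_pos hε hDpos)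
    have hδ1 : δ ≤ 1 := min_le_left _ _
    have hδle : δ ≤ ε / D := min_le_right _ _
    have h1 := hδ δ hδ0 hδ1
    have h3 : rho / 2 * δ * ‖t‖ ^ 2 ≤ D * δ := by nlinarith [hδ0.le]
    have h4 : D * δ ≤ D * (ε / D) := mul_le_mul_of_nonneg_left hδle hDpos.le
    have h5 : D * (ε / D) = ε := mul_div_cancel₀ ε hDpos.ne'
    linarith
  have key : T t + rho * ‖t‖ ^ 2 ≤ E * B t := by
    have := mul_le_mul_of_nonneg_left hwt hEnn
    linarith [htx ▸ key']
  constructor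
  · linarith
  · intro hBt
    have hBtpos : 0 < B t := lt_of_le_of_ne (hBnn t) (Ne.symm hBt)
    calc T t / B t ≤ (E * B t - rho * ‖t‖ ^ 2) / B t := by
          rw [div_le_div_iff₀ hBtpos hBtpos]
          nlinarith [key, hBtpos.le]
      _ = E - rho * ‖t‖ ^ 2 / B t := by field_simp
end
end
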